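/- arXiv:2201.03483 — 6 statements merged into one kernel-verified Lean document; each statement's English description precedes it below -/
import Mathlib

section
/- Let X, Y, Z be Polish spaces and let μ ∈ P(X)^d, ν ∈ P(Y)^d, η ∈ P(Z)^d be d-tuples of Borel probability measures. If K(μ,ν) and K(ν,η) are both nonempty, then K(μ,η) is nonempty. -/
open MeasureTheory ProbabilityTheory ENNReal

noncomputable section

/-- `κ` is a simultaneous transport kernel from `μ` to `ν`. -/
def IsSimTransport {X Y : Type*} [MeasurableSpace X] [MeasurableSpace Y] {d : ℕ}
    (μ : Fin d → Measure X) (ν : Fin d → Measure Y) (κ : Kernel X Y) : Prop :=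
  ∀ j, ∀ B : Set Y, MeasurableSet B → ν j B ≤ ∫⁻ x, κ x B ∂(μ j)

/-- if `K(μ,ν)` and `K(ν,η)` are both nonempty, then so is `K(μ,η)`. -/
theorem simTransport_trans
    {X Y Z : Type*} [MeasurableSpace X] [TopologicalSpace X] [PolishSpace X] [BorelSpace X]
    [MeasurableSpace Y] [TopologicalSpace Y] [PolishSpace Y] [BorelSpace Y]
    [MeasurableSpace Z] [TopologicalSpace Z] [PolishSpace Z] [BorelSpace Z]
    {d : ℕ} (μ : Fin d → Measure X) (ν : Fin d → Measure Y) (η : Fin d → Measure Z)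
    (hμ : ∀ j, IsProbabilityMeasure (μ j)) (hν : ∀ j, IsProbabilityMeasure (ν j))
    (hη : ∀ j, IsProbabilityMeasure (η j))
    (h1 : ∃ κ : Kernel X Y, IsMarkovKernel κ ∧ IsSimTransport μ ν κ)
    (h2 : ∃ κ : Kernel Y Z, IsMarkovKernel κ ∧ IsSimTransport ν η κ) :
    ∃ κ : Kernel X Z, IsMarkovKernel κ ∧ IsSimTransport μ η κ := by
  obtain ⟨κ₁, hκ₁, ht₁⟩ := h1
  obtain ⟨κ₂, hκ₂, ht₂⟩ := h2
  refine ⟨κ₂ ∘ₖ κ₁, inferInstance, fun j B hB => ?_⟩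
  have hmeas : Measurable fun y => κ₂ y B := Kernel.measurable_coe κ₂ hB
  have hle : ν j ≤ (μ j).bind κ₁ := by
    refine Measure.le_iff.2 fun s hs => ?_
    rw [Measure.bind_apply hs κ₁.measurable.aemeasurable]
    exact ht₁ j s hs
  calc η j B ≤ ∫⁻ y, κ₂ y B ∂(ν j) := ht₂ j B hB
    _ ≤ ∫⁻ y, κ₂ y B ∂((μ j).bind κ₁) := lintegral_mono' hle le_rfl
    _ = ∫⁻ x, ∫⁻ y, κ₂ y B ∂(κ₁ x) ∂(μ j) :=
        Measure.lintegral_bind κ₁.measurable.aemeasurable hmeas.aemeasurable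
    _ = ∫⁻ x, (κ₂ ∘ₖ κ₁) x B ∂(μ j) := by
        refine lintegral_congr fun x => ?_
        rw [Kernel.comp_apply' _ _ _ hB]

end
end

section
/- Let T ≥ 3, let σ₁,…,σ_T > 0, and let μ_t = N(0, σ_t²) be the centered Gaussian probability measure on ℝ with variance σ_t². If there exists a Markov kernel κ from ℝ to ℝ such that the pushforward ∫ κ(x,·) μ_t(dx) equals μ_{t+1} for every t = 1,…,T−1, then either (σ_t ≤ σ_{t+1} for all 1 ≤ t ≤ T−1 and σ_{t+1}² ≥ σ_t σ_{t+2} for all 1 ≤ t ≤ T−2) or (σ_t ≥ σ_{t+1} for all 1 ≤ t ≤ T−1 and σ_{t+1}² ≤ σ_t σ_{t+2} for all 1 ≤ t ≤ T−2), i.e. t ↦ σ_t is increasing log-concave or decreasing log-convex. Conversely, when T = 3 this condition implies the existence of such a kernel κ. -/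
open MeasureTheory ProbabilityTheory ENNReal

noncomputable section

namespace GH
open Real
open scoped NNReal


lemma pdf_eval {a : ℝ} (ha : 0 < a) (x : ℝ) :
    gaussianPDFReal 0 (a.toNNReal) x
      = (Real.sqrt (2 * π) * Real.sqrt a)⁻¹ * Real.exp (-(x ^ 2) / (2 * a)) := by
  rw [gaussianPDFReal]
  rw [Real.coe_toNNReal a ha.le, sub_zero, ← Real.sqrt_mul (by positivity : (0:ℝ) ≤ 2 * π)]

lemma continuous_pdf (m : ℝ) (v : ℝ≥0) : Continuous (gaussianPDFReal m v) := by
  unfold gaussianPDFReal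
  fun_prop

lemma pdf_le {a b : ℝ} (ha : 0 < a) (hab : a ≤ b) (x : ℝ) :
    gaussianPDFReal 0 (a ^ 2).toNNReal x
      ≤ (b / a) * gaussianPDFReal 0 (b ^ 2).toNNReal x := by
  have hb : 0 < b := lt_of_lt_of_le ha hab
  rw [pdf_eval (by positivity), pdf_eval (by positivity), Real.sqrt_sq ha.le,
    Real.sqrt_sq hb.le]
  have hs : (0:ℝ) < Real.sqrt (2 * π) := Real.sqrt_pos.mpr (by positivity)
  have hexp : Real.exp (-(x ^ 2) / (2 * a ^ 2)) ≤ Real.exp (-(x ^ 2) / (2 * b ^ 2)) := by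
    apply Real.exp_le_exp.mpr
    rw [div_le_div_iff₀ (by positivity) (by positivity)]
    have h2 : a ^ 2 ≤ b ^ 2 := by nlinarith
    nlinarith [sq_nonneg x, mul_nonneg (sq_nonneg x) (sub_nonneg.mpr h2)]
  have h1 : (b / a) * (Real.sqrt (2 * π) * b)⁻¹ = (Real.sqrt (2 * π) * a)⁻¹ := by
    field_simp
  rw [← mul_assoc, h1]
  gcongr

lemma dpi (κ : Kernel ℝ ℝ) {p q : ℝ → ℝ} (hp : Measurable p) (hq : Measurable q)
    {γ : ℝ} (hγ : 0 ≤ γ) (hle : ∀ x, p x ≤ γ * q x) {s : Set ℝ} (hs : MeasurableSet s) :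
    ((volume.withDensity fun x => ENNReal.ofReal (p x)).bind (fun x => κ x)) s
      ≤ ENNReal.ofReal γ *
        ((volume.withDensity fun x => ENNReal.ofReal (q x)).bind (fun x => κ x)) s := by
  rw [Measure.bind_apply hs κ.measurable.aemeasurable, Measure.bind_apply hs κ.measurable.aemeasurable,
    lintegral_withDensity_eq_lintegral_mul _ hp.ennreal_ofReal (κ.measurable_coe hs),
    lintegral_withDensity_eq_lintegral_mul _ hq.ennreal_ofReal (κ.measurable_coe hs)]
  simp only [Pi.mul_apply]
  rw [← lintegral_const_mul _ (f := fun a => ENNReal.ofReal (q a) * κ a s)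
    ((hq.ennreal_ofReal).mul (κ.measurable_coe hs))]
  refine lintegral_mono fun x => ?_
  calc ENNReal.ofReal (p x) * κ x s ≤ ENNReal.ofReal (γ * q x) * κ x s := by
        gcongr
        exact hle x
    _ = ENNReal.ofReal γ * (ENNReal.ofReal (q x) * κ x s) := by
        rw [ENNReal.ofReal_mul hγ, mul_assoc]

lemma pointwise_of_measure_le {b c γ : ℝ} (hb : 0 < b) (hc : 0 < c) (hγ : 0 < γ)
    (h : ∀ s : Set ℝ, MeasurableSet s →
      gaussianReal 0 (b ^ 2).toNNReal s ≤ ENNReal.ofReal γ * gaussianReal 0 (c ^ 2).toNNReal s)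
    (x : ℝ) :
    gaussianPDFReal 0 (b ^ 2).toNNReal x ≤ γ * gaussianPDFReal 0 (c ^ 2).toNNReal x := by
  by_contra hcon
  push_neg at hcon
  set U : Set ℝ := {y | γ * gaussianPDFReal 0 (c ^ 2).toNNReal y
      < gaussianPDFReal 0 (b ^ 2).toNNReal y} with hU
  have hUopen : IsOpen U :=
    isOpen_lt (continuous_const.mul (continuous_pdf 0 _)) (continuous_pdf 0 _)
  have hUne : U.Nonempty := ⟨x, hcon⟩
  have hb2 : ((b ^ 2).toNNReal : ℝ≥0) ≠ 0 := by
    simp [Real.toNNReal_eq_zero, not_le, pow_pos hb, hb.ne']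
  have hc2 : ((c ^ 2).toNNReal : ℝ≥0) ≠ 0 := by
    simp [Real.toNNReal_eq_zero, not_le, pow_pos hc, hc.ne']
  have hUvol : volume U ≠ 0 := (hUopen.measure_pos volume hUne).ne'
  have hlt : ENNReal.ofReal γ * gaussianReal 0 (c ^ 2).toNNReal U
      < gaussianReal 0 (b ^ 2).toNNReal U := by
    rw [gaussianReal_apply _ hb2 U, gaussianReal_apply _ hc2 U, ← lintegral_const_mul _
      (measurable_gaussianPDF 0 (c ^ 2).toNNReal)]
    refine lintegral_strict_mono ?_ ((measurable_gaussianPDF 0 _).aemeasurable) ?_ ?_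
    · simp [Measure.restrict_eq_zero, hUvol]
    · refine ne_of_lt (lt_of_le_of_lt (lintegral_mono_set (Set.subset_univ U)) ?_)
      have : ∫⁻ y, ENNReal.ofReal γ * gaussianPDF 0 (c ^ 2).toNNReal y
          = ENNReal.ofReal γ * 1 := by
        rw [lintegral_const_mul _ (measurable_gaussianPDF 0 _),
          lintegral_gaussianPDF_eq_one 0 hc2]
      simp only [Measure.restrict_univ]
      rw [this]
      exact lt_of_le_of_lt (le_of_eq (mul_one _)) ENNReal.ofReal_lt_top
    · refine (ae_restrict_mem hUopen.measurableSet).mono fun y hy => ?_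
      have hypos : 0 < gaussianPDFReal 0 (b ^ 2).toNNReal y :=
        gaussianPDFReal_pos _ _ _ hb2
      calc ENNReal.ofReal γ * gaussianPDF 0 (c ^ 2).toNNReal y
          = ENNReal.ofReal (γ * gaussianPDFReal 0 (c ^ 2).toNNReal y) := by
            rw [gaussianPDF, ENNReal.ofReal_mul hγ.le]
        _ < ENNReal.ofReal (gaussianPDFReal 0 (b ^ 2).toNNReal y) :=
            (ENNReal.ofReal_lt_ofReal_iff hypos).mpr hy
  exact absurd (h U hUopen.measurableSet) (not_le.mpr hlt)
lemma key {b c γ : ℝ} (hb : 0 < b) (hc : 0 < c) (hγ : 0 < γ)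
    (h : ∀ s : Set ℝ, MeasurableSet s →
      gaussianReal 0 (b ^ 2).toNNReal s ≤ ENNReal.ofReal γ * gaussianReal 0 (c ^ 2).toNNReal s) :
    b ≤ c ∧ c ≤ γ * b := by
  have hpt := pointwise_of_measure_le hb hc hγ h
  have hs : (0:ℝ) < Real.sqrt (2 * π) := Real.sqrt_pos.mpr (by positivity)
  have hpt' : ∀ x : ℝ, (Real.sqrt (2 * π) * b)⁻¹ * Real.exp (-(x ^ 2) / (2 * b ^ 2))
      ≤ γ * ((Real.sqrt (2 * π) * c)⁻¹ * Real.exp (-(x ^ 2) / (2 * c ^ 2))) := by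
    intro x
    have := hpt x
    rwa [pdf_eval (by positivity), pdf_eval (by positivity), Real.sqrt_sq hb.le,
      Real.sqrt_sq hc.le] at this
  have hcγb : c ≤ γ * b := by
    have h0 := hpt' 0
    simp only [ne_eq, OfNat.ofNat_ne_zero, not_false_eq_true, zero_pow, neg_zero, zero_div,
      Real.exp_zero, mul_one] at h0
    rw [inv_eq_one_div, inv_eq_one_div, ← div_eq_mul_one_div, div_le_div_iff₀ (by positivity)
      (by positivity)] at h0
    nlinarith
  refine ⟨?_, hcγb⟩
  by_contra hcb
  push_neg at hcb
  set d : ℝ := 1 / (2 * c ^ 2) - 1 / (2 * b ^ 2) with hd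
  have hdpos : 0 < d := by
    rw [hd, sub_pos, div_lt_div_iff₀ (by positivity) (by positivity)]
    nlinarith
  set M : ℝ := |Real.log (γ * b / c)| + 1 with hM
  have hMpos : 0 < M := by positivity
  set x : ℝ := Real.sqrt (M / d) with hx
  have hx2 : x ^ 2 = M / d := Real.sq_sqrt (by positivity)
  have hxd : x ^ 2 * d = M := by rw [hx2]; field_simp
  have hkey := hpt' x
  -- rewrite as c * exp(x^2*d) ≤ γ * b
  have hE : Real.exp (-(x ^ 2) / (2 * c ^ 2)) * Real.exp (x ^ 2 * d)
      = Real.exp (-(x ^ 2) / (2 * b ^ 2)) := by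
    rw [← Real.exp_add]
    congr 1
    rw [hd]
    field_simp
    ring
  have hexp_pos : (0:ℝ) < Real.exp (-(x ^ 2) / (2 * c ^ 2)) := Real.exp_pos _
  have hmain : c * Real.exp (x ^ 2 * d) ≤ γ * b := by
    have h2 : c * (Real.exp (-(x ^ 2) / (2 * b ^ 2)))
        ≤ γ * b * Real.exp (-(x ^ 2) / (2 * c ^ 2)) := by
      have hb' : (0:ℝ) < Real.sqrt (2 * π) * b := by positivity
      have hc' : (0:ℝ) < Real.sqrt (2 * π) * c := by positivity
      field_simp at hkey
      have hss : (0:ℝ) < Real.sqrt 2 * Real.sqrt π := by positivity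
      replace hkey : (Real.sqrt 2 * Real.sqrt π) * (c * Real.exp (-(x ^ 2) / (2 * b ^ 2)))
          ≤ (Real.sqrt 2 * Real.sqrt π) * (γ * b * Real.exp (-(x ^ 2) / (2 * c ^ 2))) :=
        mul_le_mul_of_nonneg_left (by rw [neg_div, neg_div]; linarith) hss.le
      have hmul : (Real.sqrt 2 * Real.sqrt π) * (c * Real.exp (-(x ^ 2) / (2 * b ^ 2)))
          ≤ (Real.sqrt 2 * Real.sqrt π) * (γ * b * Real.exp (-(x ^ 2) / (2 * c ^ 2))) := by
        linear_combination hkey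
      exact le_of_mul_le_mul_left hmul hss
    rw [← hE] at h2
    nlinarith [Real.exp_pos (x ^ 2 * d)]
  rw [hxd] at hmain
  have hlog : Real.exp M > γ * b / c := by
    have h1 : Real.log (γ * b / c) < M := by
      have := le_abs_self (Real.log (γ * b / c)); rw [hM]; linarith
    calc γ * b / c = Real.exp (Real.log (γ * b / c)) := (Real.exp_log (by positivity)).symm
      _ < Real.exp M := Real.exp_lt_exp.mpr h1
  have : γ * b < c * Real.exp M := by
    have := (div_lt_iff₀ hc).mp hlog
    nlinarith
  linarith
lemma gauss_eq_withDensity {a : ℝ} (ha : 0 < a) :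
    gaussianReal 0 (a ^ 2).toNNReal
      = volume.withDensity fun x => ENNReal.ofReal (gaussianPDFReal 0 (a ^ 2).toNNReal x) := by
  rw [gaussianReal_of_var_ne_zero]
  · rfl
  · simp [Real.toNNReal_eq_zero, not_le, pow_pos ha, ha.ne']

lemma step (κ : Kernel ℝ ℝ) {a b c : ℝ} (ha : 0 < a) (hb : 0 < b) (hc : 0 < c)
    (h1 : (gaussianReal 0 (a ^ 2).toNNReal).bind (fun x => κ x)
        = gaussianReal 0 (b ^ 2).toNNReal)
    (h2 : (gaussianReal 0 (b ^ 2).toNNReal).bind (fun x => κ x)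
        = gaussianReal 0 (c ^ 2).toNNReal) :
    (a ≤ b → b ≤ c ∧ a * c ≤ b ^ 2) ∧ (b ≤ a → c ≤ b ∧ b ^ 2 ≤ a * c) := by
  constructor
  · intro hab
    have hγ : (0:ℝ) < b / a := by positivity
    have hmeas : ∀ s : Set ℝ, MeasurableSet s →
        gaussianReal 0 (b ^ 2).toNNReal s
          ≤ ENNReal.ofReal (b / a) * gaussianReal 0 (c ^ 2).toNNReal s := by
      intro s hs
      have hd := dpi κ (measurable_gaussianPDFReal 0 (a ^ 2).toNNReal)
        (measurable_gaussianPDFReal 0 (b ^ 2).toNNReal) hγ.le (pdf_le ha hab) hs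
      rwa [← gauss_eq_withDensity ha, ← gauss_eq_withDensity hb, h1, h2] at hd
    obtain ⟨hbc, hcb⟩ := key hb hc hγ hmeas
    refine ⟨hbc, ?_⟩
    have := mul_le_mul_of_nonneg_left hcb ha.le
    have heq : a * (b / a * b) = b ^ 2 := by field_simp
    linarith [heq ▸ this]
  · intro hba
    have hγ : (0:ℝ) < a / b := by positivity
    have hmeas : ∀ s : Set ℝ, MeasurableSet s →
        gaussianReal 0 (c ^ 2).toNNReal s
          ≤ ENNReal.ofReal (a / b) * gaussianReal 0 (b ^ 2).toNNReal s := by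
      intro s hs
      have hd := dpi κ (measurable_gaussianPDFReal 0 (b ^ 2).toNNReal)
        (measurable_gaussianPDFReal 0 (a ^ 2).toNNReal) hγ.le (pdf_le hb hba) hs
      rwa [← gauss_eq_withDensity hb, ← gauss_eq_withDensity ha, h1, h2] at hd
    obtain ⟨hcb, hbc⟩ := key hc hb hγ hmeas
    refine ⟨hcb, ?_⟩
    have := mul_le_mul_of_nonneg_left hbc hb.le
    have heq : b * (a / b * c) = a * c := by field_simp
    nlinarith
lemma measurable_joint (ρ : ℝ) (t : ℝ≥0) :
    Measurable fun p : ℝ × ℝ => gaussianPDF (ρ * p.1) t p.2 := by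
  have heq : ∀ p : ℝ × ℝ, gaussianPDFReal (ρ * p.1) t p.2
      = gaussianPDFReal 0 t (p.2 - ρ * p.1) := by
    intro p
    rw [gaussianPDFReal_sub, zero_add]
  simp only [gaussianPDF]
  refine Measurable.ennreal_ofReal ?_
  simp only [heq]
  exact (measurable_gaussianPDFReal 0 t).comp (measurable_snd.sub (measurable_fst.const_mul ρ))

lemma measurable_gk (ρ : ℝ) (t : ℝ≥0) :
    Measurable fun x : ℝ => gaussianReal (ρ * x) t := by
  rcases eq_or_ne t 0 with ht | ht
  · subst ht
    simp only [gaussianReal_zero_var]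
    exact Measure.measurable_dirac.comp (measurable_id.const_mul ρ)
  · refine Measure.measurable_of_measurable_coe _ fun s hs => ?_
    simp only [gaussianReal_apply _ ht s]
    exact Measurable.lintegral_prod_right
      (f := fun x y => gaussianPDF (ρ * x) t y) (measurable_joint ρ t)

/-- The Gaussian transition kernel `x ↦ N(ρ x, t)`. -/
def gk (ρ : ℝ) (t : ℝ≥0) : Kernel ℝ ℝ := ⟨fun x => gaussianReal (ρ * x) t, measurable_gk ρ t⟩

instance (ρ : ℝ) (t : ℝ≥0) : IsMarkovKernel (gk ρ t) :=
  ⟨fun _ => by rw [gk, Kernel.coe_mk]; infer_instance⟩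

lemma gk_apply (ρ : ℝ) (t : ℝ≥0) (x : ℝ) : gk ρ t x = gaussianReal (ρ * x) t := rfl

lemma pdf_conv_real {a t : ℝ} (ha : 0 < a) (ht : 0 < t) (ρ x y : ℝ) :
    gaussianPDFReal 0 a.toNNReal x * gaussianPDFReal (ρ * x) t.toNNReal y
      = gaussianPDFReal 0 (ρ ^ 2 * a + t).toNNReal y *
        gaussianPDFReal (ρ * a * y / (ρ ^ 2 * a + t))
          (a * t / (ρ ^ 2 * a + t)).toNNReal x := by
  have hw : (0:ℝ) < ρ ^ 2 * a + t := by positivity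
  have hv : (0:ℝ) < a * t / (ρ ^ 2 * a + t) := by positivity
  rw [gaussianPDFReal, gaussianPDFReal, gaussianPDFReal, gaussianPDFReal,
    Real.coe_toNNReal _ ha.le, Real.coe_toNNReal _ ht.le, Real.coe_toNNReal _ hw.le,
    Real.coe_toNNReal _ hv.le, sub_zero, sub_zero]
  have hfac : Real.sqrt (2 * π * a) * Real.sqrt (2 * π * t)
      = Real.sqrt (2 * π * (ρ ^ 2 * a + t)) * Real.sqrt (2 * π * (a * t / (ρ ^ 2 * a + t))) := by
    rw [← Real.sqrt_mul (by positivity), ← Real.sqrt_mul (by positivity)]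
    congr 1
    field_simp
  have hexp : -(x ^ 2) / (2 * a) + -((y - ρ * x) ^ 2) / (2 * t)
      = -(y ^ 2) / (2 * (ρ ^ 2 * a + t)) +
        -((x - ρ * a * y / (ρ ^ 2 * a + t)) ^ 2) / (2 * (a * t / (ρ ^ 2 * a + t))) := by
    field_simp
    ring
  calc (Real.sqrt (2 * π * a))⁻¹ * Real.exp (-x ^ 2 / (2 * a)) *
        ((Real.sqrt (2 * π * t))⁻¹ * Real.exp (-(y - ρ * x) ^ 2 / (2 * t)))
      = (Real.sqrt (2 * π * a) * Real.sqrt (2 * π * t))⁻¹ *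
        Real.exp (-(x ^ 2) / (2 * a) + -((y - ρ * x) ^ 2) / (2 * t)) := by
        rw [Real.exp_add, mul_inv]; ring
    _ = (Real.sqrt (2 * π * (ρ ^ 2 * a + t)) * Real.sqrt (2 * π * (a * t / (ρ ^ 2 * a + t))))⁻¹ *
        Real.exp (-(y ^ 2) / (2 * (ρ ^ 2 * a + t)) +
          -((x - ρ * a * y / (ρ ^ 2 * a + t)) ^ 2) / (2 * (a * t / (ρ ^ 2 * a + t)))) := by
        rw [hfac, hexp]
    _ = _ := by rw [Real.exp_add, mul_inv]; ring
lemma lint_conv {a t : ℝ} (ha : 0 < a) (ht : 0 < t) (ρ y : ℝ) :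
    ∫⁻ x, ENNReal.ofReal (gaussianPDFReal 0 a.toNNReal x) * gaussianPDF (ρ * x) t.toNNReal y
      = gaussianPDF 0 (ρ ^ 2 * a + t).toNNReal y := by
  have hw : (0:ℝ) < ρ ^ 2 * a + t := by positivity
  have hv : (0:ℝ) < a * t / (ρ ^ 2 * a + t) := by positivity
  have hv' : ((a * t / (ρ ^ 2 * a + t)).toNNReal : ℝ≥0) ≠ 0 := by
    simp [Real.toNNReal_eq_zero, not_le, hv]
  calc ∫⁻ x, ENNReal.ofReal (gaussianPDFReal 0 a.toNNReal x) * gaussianPDF (ρ * x) t.toNNReal y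
      = ∫⁻ x, ENNReal.ofReal (gaussianPDFReal 0 a.toNNReal x *
          gaussianPDFReal (ρ * x) t.toNNReal y) := by
        congr 1
        ext x
        rw [gaussianPDF, ← ENNReal.ofReal_mul (gaussianPDFReal_nonneg _ _ _)]
    _ = ∫⁻ x, ENNReal.ofReal (gaussianPDFReal 0 (ρ ^ 2 * a + t).toNNReal y) *
          gaussianPDF (ρ * a * y / (ρ ^ 2 * a + t)) (a * t / (ρ ^ 2 * a + t)).toNNReal x := by
        congr 1
        ext x
        rw [pdf_conv_real ha ht ρ x y, ENNReal.ofReal_mul (gaussianPDFReal_nonneg _ _ _)]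
        rfl
    _ = ENNReal.ofReal (gaussianPDFReal 0 (ρ ^ 2 * a + t).toNNReal y) *
          ∫⁻ x, gaussianPDF (ρ * a * y / (ρ ^ 2 * a + t))
            (a * t / (ρ ^ 2 * a + t)).toNNReal x := by
        rw [lintegral_const_mul _ (measurable_gaussianPDF _ _)]
    _ = gaussianPDF 0 (ρ ^ 2 * a + t).toNNReal y := by
        rw [lintegral_gaussianPDF_eq_one _ hv', mul_one]
        rfl

lemma bind_gauss {a t : ℝ} (ha : 0 < a) (ht : 0 ≤ t) (ρ : ℝ) :
    (gaussianReal 0 a.toNNReal).bind (fun x => gaussianReal (ρ * x) t.toNNReal)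
      = gaussianReal 0 (ρ ^ 2 * a + t).toNNReal := by
  have ha' : (a.toNNReal : ℝ≥0) ≠ 0 := by simp [Real.toNNReal_eq_zero, not_le, ha]
  rcases eq_or_lt_of_le ht with ht0 | htpos
  · subst ht0
    simp only [Real.toNNReal_zero, gaussianReal_zero_var, add_zero]
    rw [Measure.bind_dirac_eq_map _ (f := fun x : ℝ => ρ * x) (by fun_prop)]
    have := gaussianReal_map_const_mul (μ := 0) (v := a.toNNReal) ρ
    simp only [mul_zero] at this
    rw [show (fun x : ℝ => ρ * x) = (ρ * ·) from rfl, this]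
    congr 1
    ext
    simp only [NNReal.coe_mul, NNReal.coe_mk, Real.coe_toNNReal _ ha.le,
      Real.coe_toNNReal _ (by positivity : (0:ℝ) ≤ ρ ^ 2 * a)]
  · have ht' : (t.toNNReal : ℝ≥0) ≠ 0 := by simp [Real.toNNReal_eq_zero, not_le, htpos]
    have hw : (0:ℝ) < ρ ^ 2 * a + t := by positivity
    have hw' : ((ρ ^ 2 * a + t).toNNReal : ℝ≥0) ≠ 0 := by
      simp [Real.toNNReal_eq_zero, not_le, hw]
    ext s hs
    rw [Measure.bind_apply hs (measurable_gk ρ t.toNNReal).aemeasurable, gaussianReal_apply _ hw' s]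
    have hmeasF : Measurable fun x => ∫⁻ y in s, gaussianPDF (ρ * x) t.toNNReal y :=
      Measurable.lintegral_prod_right (f := fun x y => gaussianPDF (ρ * x) t.toNNReal y)
        (measurable_joint ρ t.toNNReal)
    calc ∫⁻ x, gaussianReal (ρ * x) t.toNNReal s ∂(gaussianReal 0 a.toNNReal)
        = ∫⁻ x, (∫⁻ y in s, gaussianPDF (ρ * x) t.toNNReal y)
            ∂(gaussianReal 0 a.toNNReal) := by
          congr 1
          ext x
          rw [gaussianReal_apply _ ht' s]
      _ = ∫⁻ x, ENNReal.ofReal (gaussianPDFReal 0 a.toNNReal x) *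
            ∫⁻ y in s, gaussianPDF (ρ * x) t.toNNReal y := by
          rw [gaussianReal_of_var_ne_zero _ ha',
            lintegral_withDensity_eq_lintegral_mul _ (measurable_gaussianPDF 0 a.toNNReal)
              hmeasF]
          rfl
      _ = ∫⁻ x, ∫⁻ y in s, ENNReal.ofReal (gaussianPDFReal 0 a.toNNReal x) *
            gaussianPDF (ρ * x) t.toNNReal y := by
          congr 1
          ext x
          rw [lintegral_const_mul _ (measurable_gaussianPDF (ρ * x) t.toNNReal)]
      _ = ∫⁻ y in s, ∫⁻ x, ENNReal.ofReal (gaussianPDFReal 0 a.toNNReal x) *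
            gaussianPDF (ρ * x) t.toNNReal y := by
          refine lintegral_lintegral_swap ?_
          exact (((measurable_gaussianPDFReal 0 a.toNNReal).comp
            measurable_fst).ennreal_ofReal.mul (measurable_joint ρ t.toNNReal)).aemeasurable
      _ = ∫⁻ y in s, gaussianPDF 0 (ρ ^ 2 * a + t).toNNReal y := by
          congr 1
          ext y
          rw [lint_conv ha htpos ρ y]
lemma build {a b c : ℝ} (hb : 0 < b) (hne : a ^ 2 ≠ b ^ 2) (ha2 : 0 < a ^ 2)
    (hρ : 0 ≤ (c ^ 2 - b ^ 2) / (b ^ 2 - a ^ 2))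
    (htt : 0 ≤ (b ^ 2 * b ^ 2 - a ^ 2 * c ^ 2) / (b ^ 2 - a ^ 2)) :
    ∃ κ : Kernel ℝ ℝ, IsMarkovKernel κ ∧
      (gaussianReal 0 (a ^ 2).toNNReal).bind (fun x => κ x)
        = gaussianReal 0 (b ^ 2).toNNReal ∧
      (gaussianReal 0 (b ^ 2).toNNReal).bind (fun x => κ x)
        = gaussianReal 0 (c ^ 2).toNNReal := by
  have hden : b ^ 2 - a ^ 2 ≠ 0 := sub_ne_zero.mpr (Ne.symm hne)
  set ρ : ℝ := Real.sqrt ((c ^ 2 - b ^ 2) / (b ^ 2 - a ^ 2)) with hρdef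
  set tt : ℝ := (b ^ 2 * b ^ 2 - a ^ 2 * c ^ 2) / (b ^ 2 - a ^ 2) with httdef
  have hρ2 : ρ ^ 2 = (c ^ 2 - b ^ 2) / (b ^ 2 - a ^ 2) := Real.sq_sqrt hρ
  have hid1 : ρ ^ 2 * a ^ 2 + tt = b ^ 2 := by
    rw [hρ2, httdef]; field_simp; ring
  have hid2 : ρ ^ 2 * b ^ 2 + tt = c ^ 2 := by
    rw [hρ2, httdef]; field_simp; ring
  refine ⟨gk ρ tt.toNNReal, inferInstance, ?_, ?_⟩
  · have hbg := bind_gauss ha2 htt ρ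
    simp only [gk_apply]
    rw [hbg, hid1]
  · have hbg := bind_gauss (pow_pos hb 2) htt ρ
    simp only [gk_apply]
    rw [hbg, hid2]
end GH

/-- The condition that `t ↦ σ t` (on `{1,…,T}`) is increasing log-concave or
decreasing log-convex. -/
def IncLogConcaveOrDecLogConvex (T : ℕ) (σ : ℕ → ℝ) : Prop :=
  ((∀ t, 1 ≤ t → t + 1 ≤ T → σ t ≤ σ (t + 1)) ∧
      (∀ t, 1 ≤ t → t + 2 ≤ T → σ t * σ (t + 2) ≤ σ (t + 1) ^ 2)) ∨
    ((∀ t, 1 ≤ t → t + 1 ≤ T → σ (t + 1) ≤ σ t) ∧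
      (∀ t, 1 ≤ t → t + 2 ≤ T → σ (t + 1) ^ 2 ≤ σ t * σ (t + 2)))

/-- There is a single Markov kernel `κ` pushing each `N(0, σ_t²)` to `N(0, σ_{t+1}²)`,
for `t = 1, …, T-1`. -/
def ExistsHomogeneousGaussianKernel (T : ℕ) (σ : ℕ → ℝ) : Prop :=
  ∃ κ : Kernel ℝ ℝ, IsMarkovKernel κ ∧
    ∀ t, 1 ≤ t → t + 1 ≤ T →
      (gaussianReal 0 (Real.toNNReal (σ t ^ 2))).bind (fun x => κ x)
        = gaussianReal 0 (Real.toNNReal (σ (t + 1) ^ 2))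

/-- for Gaussian marginals `μ_t = N(0,σ_t²)`, existence of a
time-homogeneous Markov kernel transporting `(μ_1,…,μ_{T-1})` to `(μ_2,…,μ_T)`
implies that `t ↦ σ_t` is increasing log-concave or decreasing log-convex; and
for `T = 3` this condition is also sufficient. -/
theorem gaussian_homogeneous_markov_iff
    (T : ℕ) (hT : 3 ≤ T) (σ : ℕ → ℝ) (hσ : ∀ t, 1 ≤ t → t ≤ T → 0 < σ t) :
    (ExistsHomogeneousGaussianKernel T σ → IncLogConcaveOrDecLogConvex T σ) ∧
      (T = 3 → IncLogConcaveOrDecLogConvex T σ → ExistsHomogeneousGaussianKernel T σ) := by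
  constructor
  · rintro ⟨κ, hκ, hpush⟩
    have hstep : ∀ t, 1 ≤ t → t + 2 ≤ T →
        (σ t ≤ σ (t + 1) → σ (t + 1) ≤ σ (t + 2) ∧ σ t * σ (t + 2) ≤ σ (t + 1) ^ 2) ∧
        (σ (t + 1) ≤ σ t → σ (t + 2) ≤ σ (t + 1) ∧ σ (t + 1) ^ 2 ≤ σ t * σ (t + 2)) := by
      intro t ht ht2
      have := GH.step κ (hσ t ht (by omega)) (hσ (t + 1) (by omega) (by omega))
        (hσ (t + 2) (by omega) (by omega)) (hpush t ht (by omega))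
        (hpush (t + 1) (by omega) (by omega))
      exact this
    by_cases hinc : σ 1 ≤ σ 2
    · left
      have mono : ∀ t, 1 ≤ t → (t + 1 ≤ T → σ t ≤ σ (t + 1)) := by
        intro t ht
        induction t, ht using Nat.le_induction with
        | base => intro _; exact hinc
        | succ n hn ih =>
          intro hT'
          exact ((hstep n hn (by omega)).1 (ih (by omega))).1
      exact ⟨fun t ht h => mono t ht h,
        fun t ht h2 => ((hstep t ht h2).1 (mono t ht (by omega))).2⟩
    · right
      push_neg at hinc
      have mono : ∀ t, 1 ≤ t → (t + 1 ≤ T → σ (t + 1) ≤ σ t) := by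
        intro t ht
        induction t, ht using Nat.le_induction with
        | base => intro _; exact hinc.le
        | succ n hn ih =>
          intro hT'
          exact ((hstep n hn (by omega)).2 (ih (by omega))).1
      exact ⟨fun t ht h => mono t ht h,
        fun t ht h2 => ((hstep t ht h2).2 (mono t ht (by omega))).2⟩
  · intro hT3 hcond
    subst hT3
    have h1 := hσ 1 (by norm_num) (by norm_num)
    have h2 := hσ 2 (by norm_num) (by norm_num)
    have h3 := hσ 3 (by norm_num) (by norm_num)
    suffices h : ∃ κ : Kernel ℝ ℝ, IsMarkovKernel κ ∧
        (gaussianReal 0 ((σ 1) ^ 2).toNNReal).bind (fun x => κ x)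
          = gaussianReal 0 ((σ 2) ^ 2).toNNReal ∧
        (gaussianReal 0 ((σ 2) ^ 2).toNNReal).bind (fun x => κ x)
          = gaussianReal 0 ((σ 3) ^ 2).toNNReal by
      obtain ⟨κ, hm, ha, hb⟩ := h
      refine ⟨κ, hm, fun t ht ht3 => ?_⟩
      have ht2 : t ≤ 2 := by omega
      interval_cases t
      · exact ha
      · exact hb
    rcases hcond with ⟨hm, hcv⟩ | ⟨hm, hcv⟩
    · have hab : σ 1 ≤ σ 2 := hm 1 le_rfl (by norm_num)
      have hbc : σ 2 ≤ σ 3 := hm 2 (by norm_num) (by norm_num)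
      have hlc : σ 1 * σ 3 ≤ σ 2 ^ 2 := hcv 1 le_rfl (by norm_num)
      rcases eq_or_lt_of_le hab with heq | hlt
      · have hcb : σ 3 ≤ σ 2 := by nlinarith
        have h23 : σ 3 = σ 2 := le_antisymm hcb hbc
        refine ⟨Kernel.const ℝ (gaussianReal 0 ((σ 2) ^ 2).toNNReal), inferInstance, ?_, ?_⟩
        · simp only [Kernel.const_apply]
          rw [Measure.bind_const]
          simp
        · simp only [Kernel.const_apply]
          rw [Measure.bind_const, h23]
          simp
      · refine GH.build h2 (by nlinarith) (by positivity) ?_ ?_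
        · exact div_nonneg (by nlinarith) (by nlinarith)
        · refine div_nonneg ?_ (by nlinarith)
          nlinarith [mul_nonneg (sub_nonneg.mpr hlc)
            (by positivity : (0:ℝ) ≤ σ 2 ^ 2 + σ 1 * σ 3)]
    · have hba : σ 2 ≤ σ 1 := hm 1 le_rfl (by norm_num)
      have hcb : σ 3 ≤ σ 2 := hm 2 (by norm_num) (by norm_num)
      have hlc : σ 2 ^ 2 ≤ σ 1 * σ 3 := hcv 1 le_rfl (by norm_num)
      rcases eq_or_lt_of_le hba with heq | hlt
      · have hbc : σ 2 ≤ σ 3 := by nlinarith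
        have h23 : σ 3 = σ 2 := le_antisymm hcb hbc
        refine ⟨Kernel.const ℝ (gaussianReal 0 ((σ 2) ^ 2).toNNReal), inferInstance, ?_, ?_⟩
        · simp only [Kernel.const_apply]
          rw [Measure.bind_const]
          have h12 : σ 1 = σ 2 := heq.symm
          rw [h12]
          simp
        · simp only [Kernel.const_apply]
          rw [Measure.bind_const, h23]
          simp
      · refine GH.build h2 (by nlinarith) (by positivity) ?_ ?_
        · exact div_nonneg_iff.mpr (Or.inr ⟨by nlinarith, by nlinarith⟩)
        · refine div_nonneg_iff.mpr (Or.inr ⟨?_, by nlinarith⟩)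
          nlinarith [mul_nonneg (sub_nonneg.mpr hlc)
            (by positivity : (0:ℝ) ≤ σ 1 * σ 3 + σ 2 ^ 2)]

end
end

section
/- Let X, Y be Polish spaces, let μ = (μ₁,…,μ_d) and ν = (ν₁,…,ν_d) be d-tuples of finite nonzero Borel measures with μⱼ(X) = νⱼ(Y) for all j, let η be a Borel probability measure on X with η ≪ μ̄, and let c : X×Y → [0,∞] be Borel measurable such that for every x ∈ X there exists y ∈ Y with c(x,y) = 0. Then for every pair i, j ∈ {1,…,d}: inf_{κ ∈ K(μ,ν)} C_η(κ) ≥ inf_{κ ∈ K((μᵢ−μⱼ)₊,(νᵢ−νⱼ)₊)} C_η(κ) + inf_{κ ∈ K((μⱼ−μᵢ)₊,(νⱼ−νᵢ)₊)} C_η(κ). In particular, if (μᵢ−μⱼ)₊(X) < (νᵢ−νⱼ)₊(Y) for some i, j, then both sides equal +∞. -/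
open MeasureTheory ProbabilityTheory ENNReal

noncomputable section

/-- Normalized average probability measure of a tuple of finite measures. -/
def avgMeasure {X : Type*} [MeasurableSpace X] {d : ℕ} (μ : Fin d → Measure X) : Measure X :=
  (∑ j, μ j Set.univ)⁻¹ • ∑ j, μ j

/-- The transport cost `C_η(κ) = ∫∫ c dκ dη` of a kernel. -/
def kernelCost {X Y : Type*} [MeasurableSpace X] [MeasurableSpace Y]
    (c : X → Y → ℝ≥0∞) (η : Measure X) (κ : Kernel X Y) : ℝ≥0∞ :=
  ∫⁻ x, ∫⁻ y, c x y ∂(κ x) ∂η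

/-- Infimum transport cost over simultaneous transport kernels from the tuple `μ`
to the tuple `ν` (`+∞` if no transport exists). -/
def sotInfCost {X Y : Type*} [MeasurableSpace X] [MeasurableSpace Y] {d : ℕ}
    (μ : Fin d → Measure X) (ν : Fin d → Measure Y)
    (c : X → Y → ℝ≥0∞) (η : Measure X) : ℝ≥0∞ :=
  sInf {r | ∃ κ : Kernel X Y, IsMarkovKernel κ ∧
    (∀ j, ∀ B : Set Y, MeasurableSet B → ν j B ≤ ∫⁻ x, κ x B ∂(μ j)) ∧
    r = kernelCost c η κ}

/-- Infimum transport cost over transport kernels from a single measure `α`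
to a single measure `β` (`+∞` if no transport exists). -/
def otInfCost {X Y : Type*} [MeasurableSpace X] [MeasurableSpace Y]
    (α : Measure X) (β : Measure Y) (c : X → Y → ℝ≥0∞) (η : Measure X) : ℝ≥0∞ :=
  sInf {r | ∃ κ : Kernel X Y, IsMarkovKernel κ ∧
    (∀ B : Set Y, MeasurableSet B → β B ≤ ∫⁻ x, κ x B ∂α) ∧
    r = kernelCost c η κ}

namespace SOTAux
open Set Filter Topology


lemma two_halves (ε : ℝ≥0∞) (k : ℕ) : ε / 2 ^ (k + 1) + ε / 2 ^ (k + 1) = ε / 2 ^ k := by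
  rw [ENNReal.div_add_div_same, ← two_mul, pow_succ, mul_comm (2 ^ k) 2,
    ENNReal.mul_div_mul_left _ _ (by norm_num) (by norm_num)]

lemma sum_div_pow_two (ε : ℝ≥0∞) (k : ℕ) :
    (∑ i ∈ Finset.range k, ε / 2 ^ (i + 1)) + ε / 2 ^ k = ε := by
  induction k with
  | zero => simp
  | succ k ih =>
    rw [Finset.sum_range_succ, add_assoc, two_halves, ih]

lemma sum_div_pow_two_le (ε : ℝ≥0∞) (k : ℕ) :
    ∑ i ∈ Finset.range k, ε / 2 ^ (i + 1) ≤ ε := by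
  conv_rhs => rw [← sum_div_pow_two ε k]
  exact le_self_add

variable {X : Type*} [MeasurableSpace X] [TopologicalSpace X] [PolishSpace X] [BorelSpace X]

lemma compact_approx (η : Measure X) [IsFiniteMeasure η]
    (q : (ℕ → ℕ) → X) (hq : Continuous q) {ε : ℝ≥0∞} (hε : 0 < ε) (hεtop : ε ≠ ⊤) :
    ∃ K : Set X, IsCompact K ∧ K ⊆ Set.range q ∧ η (Set.range q) ≤ η K + ε := by
  classical
  have hε2 : (0 : ℝ≥0∞) < ε / 2 := ENNReal.div_pos hε.ne' (by norm_num)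
  -- key recursive choice
  have key : ∀ (N : ℕ → ℕ) (k : ℕ), ∃ M : ℕ,
      η (q '' {s | ∀ i < k, s i ≤ N i}) ≤
        η (q '' {s | (∀ i < k, s i ≤ N i) ∧ s k ≤ M}) + ε / 2 / 2 ^ (k + 1) := by
    intro N k
    set δ := ε / 2 / 2 ^ (k + 1) with hδdef
    have hδ0 : 0 < δ := ENNReal.div_pos hε2.ne' (by simp [pow_eq_top_iff])
    have hUnion : (⋃ M : ℕ, {s : ℕ → ℕ | (∀ i < k, s i ≤ N i) ∧ s k ≤ M}) =
        {s : ℕ → ℕ | ∀ i < k, s i ≤ N i} := by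
      ext s
      simp only [mem_iUnion, mem_setOf_eq]
      exact ⟨fun ⟨M, hM⟩ => hM.1, fun h => ⟨s k, h, le_rfl⟩⟩
    have hmono : Monotone (fun M : ℕ => q '' {s | (∀ i < k, s i ≤ N i) ∧ s k ≤ M}) := by
      intro M M' hMM'
      exact Set.image_mono (fun s hs => ⟨hs.1, hs.2.trans hMM'⟩)
    have hsup : η (q '' {s | ∀ i < k, s i ≤ N i}) =
        ⨆ M : ℕ, η (q '' {s | (∀ i < k, s i ≤ N i) ∧ s k ≤ M}) := by
      rw [← hmono.measure_iUnion, ← Set.image_iUnion, hUnion]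
    by_cases hb : η (q '' {s | ∀ i < k, s i ≤ N i}) ≤ δ
    · exact ⟨0, hb.trans le_add_self⟩
    · push_neg at hb
      have hbne : η (q '' {s | ∀ i < k, s i ≤ N i}) ≠ ⊤ := measure_ne_top η _
      have hlt : η (q '' {s | ∀ i < k, s i ≤ N i}) - δ <
          η (q '' {s | ∀ i < k, s i ≤ N i}) :=
        ENNReal.sub_lt_self hbne (by exact fun h => absurd (h ▸ hb) (by simp)) hδ0.ne'
      obtain ⟨M, hM⟩ := lt_iSup_iff.mp (lt_of_lt_of_le hlt (le_of_eq hsup))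
      refine ⟨M, ?_⟩
      calc η (q '' {s | ∀ i < k, s i ≤ N i})
          = η (q '' {s | ∀ i < k, s i ≤ N i}) - δ + δ := (tsub_add_cancel_of_le hb.le).symm
        _ ≤ η (q '' {s | (∀ i < k, s i ≤ N i) ∧ s k ≤ M}) + δ := add_le_add_left hM.le δ
  choose F hF using key
  -- cumulative recursion
  let Nc : ℕ → ℕ → ℕ := fun k =>
    Nat.rec (fun _ => 0) (fun k prev => Function.update prev k (F prev k)) k
  have hNc : ∀ k, Nc (k + 1) = Function.update (Nc k) k (F (Nc k) k) := fun k => rfl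
  set N : ℕ → ℕ := fun k => Nc (k + 1) k with hNdef
  have hstab : ∀ k i, i < k → Nc k i = N i := by
    intro k
    induction k with
    | zero => intro i hi; omega
    | succ k ih =>
      intro i hi
      rcases Nat.lt_succ_iff_lt_or_eq.mp hi with h | h
      · rw [hNc, Function.update_of_ne (Nat.ne_of_lt h), ih i h]
      · subst h; rfl
  have hNk : ∀ k, N k = F (Nc k) k := by
    intro k
    show Nc (k + 1) k = _
    rw [hNc, Function.update_self]
  set A : ℕ → Set X := fun k => q '' {s | ∀ i < k, s i ≤ N i} with hAdef
  have hstep : ∀ k, η (A k) ≤ η (A (k + 1)) + ε / 2 / 2 ^ (k + 1) := by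
    intro k
    have h1 : {s : ℕ → ℕ | ∀ i < k, s i ≤ Nc k i} = {s | ∀ i < k, s i ≤ N i} := by
      ext s
      exact ⟨fun h i hi => (hstab k i hi) ▸ h i hi, fun h i hi => (hstab k i hi).symm ▸ h i hi⟩
    have h2 : {s : ℕ → ℕ | (∀ i < k, s i ≤ Nc k i) ∧ s k ≤ F (Nc k) k} =
        {s | ∀ i < k + 1, s i ≤ N i} := by
      ext s
      simp only [mem_setOf_eq]
      constructor
      · rintro ⟨h, hk⟩ i hi
        rcases Nat.lt_succ_iff_lt_or_eq.mp hi with h' | h'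
        · exact (hstab k i h') ▸ h i h'
        · subst h'; rw [hNk]; exact hk
      · intro h
        refine ⟨fun i hi => (hstab k i hi).symm ▸ h i (hi.trans (Nat.lt_succ_self k)), ?_⟩
        rw [← hNk]; exact h k (Nat.lt_succ_self k)
    have := hF (Nc k) k
    rw [h1, h2] at this
    exact this
  have hchain : ∀ k, η (A 0) ≤ η (A k) + ε / 2 := by
    have haux : ∀ k, η (A 0) ≤ η (A k) + ∑ i ∈ Finset.range k, ε / 2 / 2 ^ (i + 1) := by
      intro k
      induction k with
      | zero => simp
      | succ k ih =>
        rw [Finset.sum_range_succ]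
        calc η (A 0) ≤ η (A k) + ∑ i ∈ Finset.range k, ε / 2 / 2 ^ (i + 1) := ih
          _ ≤ (η (A (k + 1)) + ε / 2 / 2 ^ (k + 1)) + ∑ i ∈ Finset.range k, ε / 2 / 2 ^ (i + 1) :=
              add_le_add_left (hstep k) _
          _ = η (A (k + 1)) + (∑ i ∈ Finset.range k, ε / 2 / 2 ^ (i + 1) + ε / 2 / 2 ^ (k + 1)) := by
              ring
    intro k
    exact (haux k).trans (add_le_add_right (sum_div_pow_two_le _ _) _)
  set T : Set (ℕ → ℕ) := {s | ∀ i, s i ≤ N i} with hTdef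
  have hT : IsCompact T := by
    have : T = Set.pi univ fun i => Set.Iic (N i) := by
      ext s; simp only [hTdef, mem_setOf_eq, Set.mem_univ_pi, Set.mem_Iic]
    rw [this]
    exact isCompact_univ_pi fun i => (Set.finite_Iic (N i)).isCompact
  refine ⟨q '' T, hT.image hq, image_subset_range _ _, ?_⟩
  have hopen : ∀ U : Set X, IsOpen U → q '' T ⊆ U → ∃ k, A k ⊆ U := by
    intro U hU hKU
    by_contra hcon
    push_neg at hcon
    have hex : ∀ k, ∃ s : ℕ → ℕ, (∀ i < k, s i ≤ N i) ∧ q s ∉ U := by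
      intro k
      obtain ⟨x, hx, hxU⟩ := not_subset.mp (hcon k)
      obtain ⟨s, hs, rfl⟩ := hx
      exact ⟨s, hs, hxU⟩
    choose s hs1 hs2 using hex
    set u : ℕ → (ℕ → ℕ) := fun k i => min (s k i) (N i) with hudef
    have hu : ∀ k, u k ∈ T := fun k i => min_le_right _ _
    obtain ⟨a, haT, φ, hφ, hconv⟩ := hT.tendsto_subseq hu
    have hconv2 : Tendsto (fun k => s (φ k)) atTop (𝓝 a) := by
      rw [tendsto_pi_nhds]
      intro i
      have hci : Tendsto (fun k => u (φ k) i) atTop (𝓝 (a i)) :=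
        ((continuous_apply i).tendsto a).comp hconv
      refine hci.congr' ?_
      filter_upwards [eventually_ge_atTop (i + 1)] with k hk
      have hik : i < φ k := lt_of_lt_of_le (Nat.lt_of_lt_of_le (Nat.lt_succ_self i) hk)
        hφ.le_apply
      exact min_eq_left (hs1 (φ k) i hik)
    have hqa : q a ∈ U := hKU ⟨a, haT, rfl⟩
    have hev : ∀ᶠ k in atTop, q (s (φ k)) ∈ U :=
      ((hq.tendsto a).comp hconv2).eventually (hU.eventually_mem hqa)
    obtain ⟨k, hk⟩ := hev.exists
    exact hs2 (φ k) hk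
  obtain ⟨U, hQU, hUopen, hUle⟩ := Set.exists_isOpen_le_add (q '' T) η (ε := ε / 2) hε2.ne'
  obtain ⟨k, hk⟩ := hopen U hUopen hQU
  have h0 : Set.range q = A 0 := by
    have : {s : ℕ → ℕ | ∀ i < 0, s i ≤ N i} = univ := by
      ext s; simp
    simp [hAdef, this]
  calc η (Set.range q) = η (A 0) := by rw [h0]
    _ ≤ η (A k) + ε / 2 := hchain k
    _ ≤ η U + ε / 2 := add_le_add_left (measure_mono hk) _
    _ ≤ (η (q '' T) + ε / 2) + ε / 2 := add_le_add_left hUle _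
    _ = η (q '' T) + ε := by rw [add_assoc, ENNReal.add_halves]


lemma nullMeasurableSet_range (η : Measure X) [IsFiniteMeasure η]
    (q : (ℕ → ℕ) → X) (hq : Continuous q) : NullMeasurableSet (Set.range q) η := by
  have hKn : ∀ n : ℕ, ∃ K : Set X, IsCompact K ∧ K ⊆ Set.range q ∧
      η (Set.range q) ≤ η K + ((n : ℝ≥0∞) + 1)⁻¹ := by
    intro n
    refine compact_approx η q hq ?_ ?_
    · exact ENNReal.inv_pos.mpr (by simp)
    · exact ENNReal.inv_ne_top.mpr (by simp)
  choose K hKc hKsub hKle using hKn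
  set B := ⋃ n, K n with hBdef
  have hBmeas : MeasurableSet B := MeasurableSet.iUnion fun n => (hKc n).isClosed.measurableSet
  have hBsub : B ⊆ Set.range q := iUnion_subset hKsub
  have hle : η (Set.range q) ≤ η B := by
    refine ENNReal.le_of_forall_pos_le_add fun ε hε _ => ?_
    obtain ⟨n, hn⟩ := ENNReal.exists_inv_nat_lt (a := (ε : ℝ≥0∞)) (by exact_mod_cast hε.ne')
    refine (hKle n).trans (add_le_add ?_ ?_)
    · exact measure_mono (subset_iUnion K n)
    · refine le_trans ?_ hn.le
      exact ENNReal.inv_le_inv.mpr (by simp)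
  have hBeq : η B = η (Set.range q) := le_antisymm (measure_mono hBsub) hle
  have hnull : η (toMeasurable η (Set.range q) \ B) = 0 := by
    have hd : η (toMeasurable η (Set.range q) \ B) = η (toMeasurable η (Set.range q)) - η B :=
      measure_diff (hBsub.trans (subset_toMeasurable η _)) hBmeas.nullMeasurableSet
        (measure_ne_top η B)
    rw [hd, measure_toMeasurable, hBeq, tsub_self]
  have hcover : Set.range q = B ∪ (Set.range q \ B) := (union_diff_cancel hBsub).symm
  rw [hcover]
  exact hBmeas.nullMeasurableSet.union (NullMeasurableSet.of_null
    (measure_mono_null (diff_subset_diff_left (subset_toMeasurable η _)) hnull))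

def Dset (p : (ℕ → ℕ) → X) (l : List ℕ) (m : ℕ) : Set X :=
  {x | ∃ s : ℕ → ℕ, p s = x ∧ (∀ i < l.length, s i = l.getD i 0) ∧ s l.length = m}

lemma nullMeasurableSet_Dset (η : Measure X) [IsFiniteMeasure η]
    {p : (ℕ → ℕ) → X} (hp : Continuous p) (l : List ℕ) (m : ℕ) :
    NullMeasurableSet (Dset p l m) η := by
  classical
  set k := l.length with hk
  set e : (ℕ → ℕ) → (ℕ → ℕ) := fun s i =>
    if i < k then l.getD i 0 else if i = k then m else s (i - (k + 1)) with hedef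
  have he : Continuous e := by
    apply continuous_pi
    intro i
    by_cases h1 : i < k
    · simp only [hedef, if_pos h1]; exact continuous_const
    · by_cases h2 : i = k
      · simp only [hedef, if_neg h1, if_pos h2]; exact continuous_const
      · simp only [hedef, if_neg h1, if_neg h2]; exact continuous_apply _
  have hrange : Dset p l m = Set.range (p ∘ e) := by
    ext x
    constructor
    · rintro ⟨s, rfl, hpre, hsk⟩
      refine ⟨fun i => s (i + (k + 1)), ?_⟩
      simp only [Function.comp_apply]
      congr 1
      funext i
      simp only [hedef]
      split_ifs with h1 h2
      · exact (hpre i h1).symm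
      · subst h2; exact hsk.symm
      · congr 1; omega
    · rintro ⟨t, rfl⟩
      refine ⟨e t, rfl, fun i hi => ?_, ?_⟩
      · simp only [hedef]; exact if_pos hi
      · simp [hedef, hk]
  rw [hrange]
  exact nullMeasurableSet_range η _ (hp.comp he)

lemma nat_sInf_eq_iff (S : Set ℕ) (n : ℕ) :
    sInf S = n ↔ (n ∈ S ∧ ∀ m < n, m ∉ S) ∨ (n = 0 ∧ S = ∅) := by
  constructor
  · intro h
    rcases Set.eq_empty_or_nonempty S with hS | hS
    · right; exact ⟨by rw [← h, hS, Nat.sInf_empty], hS⟩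
    · left
      refine ⟨h ▸ Nat.sInf_mem hS, fun m hm hmem => ?_⟩
      exact absurd (Nat.sInf_le hmem) (by omega)
  · rintro (⟨hn, hmin⟩ | ⟨rfl, rfl⟩)
    · refine le_antisymm (Nat.sInf_le hn) ?_
      by_contra hlt
      push_neg at hlt
      exact hmin _ hlt (Nat.sInf_mem ⟨n, hn⟩)
    · exact Nat.sInf_empty

lemma sInf_level_eq (W : ℕ → Set X) (n : ℕ) :
    {x | sInf {m | x ∈ W m} = n} =
      (W n ∩ ⋂ (m : ℕ) (_ : m < n), (W m)ᶜ) ∪ ({x : X | n = 0} ∩ ⋂ m, (W m)ᶜ) := by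
  ext x
  simp only [mem_setOf_eq, mem_union, mem_inter_iff, mem_iInter, mem_compl_iff]
  rw [nat_sInf_eq_iff, Set.eq_empty_iff_forall_notMem]
  simp only [mem_setOf_eq]

lemma nullMeasurableSet_sInf_level (η : Measure X) (W : ℕ → Set X)
    (hW : ∀ m, NullMeasurableSet (W m) η) (n : ℕ) :
    NullMeasurableSet {x | sInf {m | x ∈ W m} = n} η := by
  rw [sInf_level_eq]
  refine NullMeasurableSet.union ?_ ?_
  · exact (hW n).inter
      (NullMeasurableSet.iInter fun m => NullMeasurableSet.iInter fun _ => (hW m).compl)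
  · refine NullMeasurableSet.inter ?_ (NullMeasurableSet.iInter fun m => (hW m).compl)
    by_cases h : n = 0
    · have : {x : X | n = 0} = univ := by simp [h]
      rw [this]; exact MeasurableSet.univ.nullMeasurableSet
    · have : {x : X | n = 0} = ∅ := by simp [h]
      rw [this]; exact MeasurableSet.empty.nullMeasurableSet

lemma measurableSet_sInf_level (W : ℕ → Set X) (hW : ∀ m, MeasurableSet (W m)) (n : ℕ) :
    MeasurableSet {x | sInf {m | x ∈ W m} = n} := by
  rw [sInf_level_eq]
  refine MeasurableSet.union ?_ ?_
  · exact (hW n).inter (MeasurableSet.iInter fun m => MeasurableSet.iInter fun _ => (hW m).compl)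
  · refine MeasurableSet.inter ?_ (MeasurableSet.iInter fun m => (hW m).compl)
    by_cases h : n = 0
    · have : {x : X | n = 0} = univ := by simp [h]
      rw [this]; exact MeasurableSet.univ
    · have : {x : X | n = 0} = ∅ := by simp [h]
      rw [this]; exact MeasurableSet.empty

variable (p : (ℕ → ℕ) → X)

noncomputable def prefL (x : X) : ℕ → List ℕ
  | 0 => []
  | k + 1 =>
    prefL x k ++ [sInf {n | ∃ s : ℕ → ℕ, p s = x ∧
      (∀ i < k, s i = (prefL x k).getD i 0) ∧ s k = n}]

lemma prefL_length (x : X) : ∀ k, (prefL p x k).length = k := by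
  intro k
  induction k with
  | zero => rfl
  | succ k ih => simp [prefL, ih]

lemma prefL_stable (x : X) : ∀ k j, j ≤ k → ∀ i < j,
    (prefL p x k).getD i 0 = (prefL p x j).getD i 0 := by
  intro k
  induction k with
  | zero => intro j hj i hi; omega
  | succ k ih =>
    intro j hj i hi
    rcases Nat.lt_succ_iff_lt_or_eq.mp (Nat.lt_succ_of_le hj) with h | h
    · have h1 : (prefL p x (k + 1)).getD i 0 = (prefL p x k).getD i 0 := by
        show (prefL p x k ++ [_]).getD i 0 = _
        rw [List.getD_append _ _ _ _ (by rw [prefL_length]; omega)]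
      rw [h1, ih j (by omega) i hi]
    · subst h; rfl

lemma prefL_getD_last (x : X) (k : ℕ) :
    (prefL p x (k + 1)).getD k 0 = sInf {n | ∃ s : ℕ → ℕ, p s = x ∧
      (∀ i < k, s i = (prefL p x k).getD i 0) ∧ s k = n} := by
  have h0 : ∀ (l : List ℕ) (b : ℕ), (l ++ [b]).getD l.length 0 = b := fun l b => by
    simp [List.getD_append_right, List.getD]
  have h1 := h0 (prefL p x k) (sInf {n | ∃ s : ℕ → ℕ, p s = x ∧
      (∀ i < k, s i = (prefL p x k).getD i 0) ∧ s k = n})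
  rw [prefL_length p x k] at h1
  exact h1

noncomputable def sigmaSel (x : X) (k : ℕ) : ℕ := (prefL p x (k + 1)).getD k 0

lemma prefL_getD_sigma (x : X) (k : ℕ) : ∀ i < k, (prefL p x k).getD i 0 = sigmaSel p x i := by
  intro i hi
  rw [prefL_stable p x k (i + 1) (by omega) i (by omega)]
  rfl

lemma sigma_exists (hp : Function.Surjective p) (x : X) :
    ∀ k, ∃ s : ℕ → ℕ, p s = x ∧ ∀ i < k, s i = (prefL p x k).getD i 0 := by
  intro k
  induction k with
  | zero =>
    obtain ⟨s, hs⟩ := hp x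
    exact ⟨s, hs, fun i hi => by omega⟩
  | succ k ih =>
    obtain ⟨s₀, hs₀, hpre₀⟩ := ih
    have hne : (s₀ k) ∈ {n | ∃ s : ℕ → ℕ, p s = x ∧
        (∀ i < k, s i = (prefL p x k).getD i 0) ∧ s k = n} := ⟨s₀, hs₀, hpre₀, rfl⟩
    have hmem := Nat.sInf_mem (Set.nonempty_of_mem hne)
    simp only [Set.mem_setOf_eq] at hmem
    obtain ⟨s, hs, hpre, hsk⟩ := hmem
    refine ⟨s, hs, fun i hi => ?_⟩
    rcases Nat.lt_succ_iff_lt_or_eq.mp hi with h | h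
    · rw [prefL_stable p x (k + 1) k (Nat.le_succ k) i h]
      exact hpre i h
    · subst h
      rw [prefL_getD_last]
      exact hsk

lemma sigma_spec (hp : Function.Surjective p) (hpc : Continuous p) (x : X) :
    p (sigmaSel p x) = x := by
  have hseq : ∀ k, ∃ s : ℕ → ℕ, p s = x ∧ ∀ i < k, s i = sigmaSel p x i := by
    intro k
    obtain ⟨s, hs, hpre⟩ := sigma_exists p hp x k
    exact ⟨s, hs, fun i hi => by rw [hpre i hi, prefL_getD_sigma p x k i hi]⟩
  choose s hs hpre using hseq
  have hconv : Filter.Tendsto s Filter.atTop (nhds (sigmaSel p x)) := by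
    rw [tendsto_pi_nhds]
    intro i
    refine Filter.Tendsto.congr' ?_ tendsto_const_nhds
    filter_upwards [Filter.eventually_ge_atTop (i + 1)] with k hk
    exact (hpre k i (by omega)).symm
  have h1 : Filter.Tendsto (fun k => p (s k)) Filter.atTop (nhds (p (sigmaSel p x))) :=
    (hpc.tendsto _).comp hconv
  have h2 : Filter.Tendsto (fun k => p (s k)) Filter.atTop (nhds x) := by
    simp only [hs]
    exact tendsto_const_nhds
  exact tendsto_nhds_unique h1 h2

lemma nullMeasurableSet_prefL (η : Measure X) [IsFiniteMeasure η]
    (hpc : Continuous p) : ∀ (k : ℕ) (l : List ℕ), NullMeasurableSet {x | prefL p x k = l} η := by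
  intro k
  induction k with
  | zero =>
    intro l
    rcases l with _ | ⟨a, l⟩
    · have : {x : X | prefL p x 0 = []} = univ := by
        ext x; simp [prefL]
      rw [this]; exact MeasurableSet.univ.nullMeasurableSet
    · have : {x : X | prefL p x 0 = a :: l} = ∅ := by
        ext x; simp [prefL]
      rw [this]; exact MeasurableSet.empty.nullMeasurableSet
  | succ k ih =>
    intro l
    rcases List.eq_nil_or_concat l with rfl | ⟨L, a, rfl⟩
    · have : {x : X | prefL p x (k + 1) = []} = ∅ := by
        ext x
        simp only [mem_setOf_eq, mem_empty_iff_false, iff_false]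
        intro h
        have := congrArg List.length h
        rw [prefL_length] at this
        simp at this
      rw [this]; exact MeasurableSet.empty.nullMeasurableSet
    · simp only [List.concat_eq_append]
      have hsplit : {x : X | prefL p x (k + 1) = L ++ [a]} =
          {x | prefL p x k = L} ∩ {x | sInf {n | x ∈ Dset p L n} = a} := by
        ext x
        simp only [mem_setOf_eq, mem_inter_iff]
        have hunf : prefL p x (k + 1) = prefL p x k ++ [sInf {n | ∃ s : ℕ → ℕ, p s = x ∧
            (∀ i < k, s i = (prefL p x k).getD i 0) ∧ s k = n}] := rfl
        constructor
        · intro hx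
          rw [hunf] at hx
          obtain ⟨h1, h2⟩ := List.append_inj' hx rfl
          have h2' : sInf {n | ∃ s : ℕ → ℕ, p s = x ∧
              (∀ i < k, s i = (prefL p x k).getD i 0) ∧ s k = n} = a := by
            simpa using h2
          have hL : L.length = k := by rw [← h1, prefL_length]
          rw [h1] at h2'
          refine ⟨h1, ?_⟩
          have hset : {n | x ∈ Dset p L n} = {n | ∃ s : ℕ → ℕ, p s = x ∧
              (∀ i < k, s i = L.getD i 0) ∧ s k = n} := by
            ext n; simp only [Dset, mem_setOf_eq, hL]
          rw [hset]; exact h2'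
        · rintro ⟨h1, h2⟩
          have hL : L.length = k := by rw [← h1, prefL_length]
          rw [hunf, h1]
          have hset : {n | ∃ s : ℕ → ℕ, p s = x ∧
              (∀ i < k, s i = L.getD i 0) ∧ s k = n} = {n | x ∈ Dset p L n} := by
            ext n; simp only [Dset, mem_setOf_eq, hL]
          rw [hset, h2]
      rw [hsplit]
      exact (ih L).inter (nullMeasurableSet_sInf_level η _
        (fun n => nullMeasurableSet_Dset η hpc L n) a)

lemma nullMeasurableSet_sigma_level (η : Measure X) [IsFiniteMeasure η]
    (hpc : Continuous p) (k n : ℕ) :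
    NullMeasurableSet {x | sigmaSel p x k = n} η := by
  classical
  have hset : {x | sigmaSel p x k = n} =
      ⋃ l : List ℕ, if l.getD k 0 = n then {x | prefL p x (k + 1) = l} else ∅ := by
    ext x
    simp only [mem_setOf_eq, mem_iUnion]
    constructor
    · intro h
      refine ⟨prefL p x (k + 1), ?_⟩
      rw [if_pos (show (prefL p x (k + 1)).getD k 0 = n from h)]
      exact rfl
    · rintro ⟨l, hl⟩
      by_cases hcond : l.getD k 0 = n
      · rw [if_pos hcond] at hl
        have hl' : prefL p x (k + 1) = l := hl
        show (prefL p x (k + 1)).getD k 0 = n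
        rw [hl']; exact hcond
      · rw [if_neg hcond] at hl
        exact absurd hl (notMem_empty x)
  rw [hset]
  refine NullMeasurableSet.iUnion fun l => ?_
  by_cases hcond : l.getD k 0 = n
  · rw [if_pos hcond]; exact nullMeasurableSet_prefL p η hpc (k + 1) l
  · rw [if_neg hcond]; exact MeasurableSet.empty.nullMeasurableSet

theorem exists_measurable_ae_zero
    {X Y : Type*} [MeasurableSpace X] [TopologicalSpace X] [PolishSpace X] [BorelSpace X]
    [MeasurableSpace Y] [TopologicalSpace Y] [PolishSpace Y] [BorelSpace Y]
    (η : Measure X) [IsFiniteMeasure η]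
    (c : X → Y → ℝ≥0∞) (hc : Measurable (Function.uncurry c))
    (hc0 : ∀ x : X, ∃ y : Y, c x y = 0) :
    ∃ g : X → Y, Measurable g ∧ ∀ᵐ x ∂η, c x (g x) = 0 := by
  classical
  rcases isEmpty_or_nonempty X with hX | hX
  · exact ⟨fun x => isEmptyElim x, measurable_of_empty _,
      Filter.Eventually.of_forall fun x => isEmptyElim x⟩
  set G : Set (X × Y) := Function.uncurry c ⁻¹' {0} with hGdef
  have hGmeas : MeasurableSet G := hc (measurableSet_singleton 0)
  have hGanalytic : MeasureTheory.AnalyticSet G := hGmeas.analyticSet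
  rw [MeasureTheory.AnalyticSet] at hGanalytic
  rcases hGanalytic with hGe | ⟨F, hFc, hFr⟩
  · obtain ⟨x⟩ := hX
    obtain ⟨y, hy⟩ := hc0 x
    have : (x, y) ∈ G := by
      simp only [hGdef, Set.mem_preimage, Function.uncurry_apply_pair, Set.mem_singleton_iff]
      exact hy
    rw [hGe] at this
    exact absurd this (notMem_empty _)
  · set p : (ℕ → ℕ) → X := fun s => (F s).1 with hpdef
    have hpc : Continuous p := continuous_fst.comp hFc
    have hpsurj : Function.Surjective p := by
      intro x
      obtain ⟨y, hy⟩ := hc0 x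
      have hmem : (x, y) ∈ Set.range F := by
        rw [hFr]
        simp only [hGdef, Set.mem_preimage, Function.uncurry_apply_pair, Set.mem_singleton_iff]
        exact hy
      obtain ⟨s, hs⟩ := hmem
      exact ⟨s, by simp [hpdef, hs]⟩
    set A : ℕ → ℕ → Set X := fun k n => {x | sigmaSel p x k = n} with hAdef
    have hA : ∀ k n, NullMeasurableSet (A k n) η := fun k n =>
      nullMeasurableSet_sigma_level p η hpc k n
    set B : ℕ → ℕ → Set X := fun k n => toMeasurable η (A k n) with hBdef
    have hBmeas : ∀ k n, MeasurableSet (B k n) := fun k n => measurableSet_toMeasurable η _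
    have hae : ∀ᵐ x ∂η, ∀ k n : ℕ, (x ∈ A k n ↔ x ∈ B k n) := by
      rw [MeasureTheory.ae_all_iff]
      intro k
      rw [MeasureTheory.ae_all_iff]
      intro n
      have h1 : toMeasurable η (A k n) =ᵐ[η] A k n := (hA k n).toMeasurable_ae_eq
      exact (Filter.eventuallyEq_set.mp h1).mono fun x hx => hx.symm
    set g0 : X → (ℕ → ℕ) := fun x k => sInf {n | x ∈ B k n} with hg0def
    have hg0meas : Measurable g0 := by
      apply measurable_pi_lambda
      intro k
      apply measurable_to_countable'
      intro n
      have hpre : (fun x => g0 x k) ⁻¹' {n} = {x | sInf {m | x ∈ B k m} = n} := by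
        ext x; simp [hg0def]
      rw [hpre]
      exact measurableSet_sInf_level _ (fun m => hBmeas k m) n
    refine ⟨fun x => (F (g0 x)).2, measurable_snd.comp (hFc.measurable.comp hg0meas), ?_⟩
    filter_upwards [hae] with x hx
    have hg0x : g0 x = sigmaSel p x := by
      funext k
      show sInf {n | x ∈ B k n} = sigmaSel p x k
      have hsets : {n | x ∈ B k n} = {n | x ∈ A k n} := by
        ext n
        exact ⟨fun h => (hx k n).mpr h, fun h => (hx k n).mp h⟩
      rw [hsets]
      have hsingle : {n | x ∈ A k n} = {sigmaSel p x k} := by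
        ext n
        simp [hAdef, eq_comm]
      rw [hsingle, csInf_singleton]
    have hpx : p (sigmaSel p x) = x := sigma_spec p hpsurj hpc x
    have h1 : F (g0 x) = (x, (F (g0 x)).2) := by
      rw [hg0x]
      exact Prod.ext hpx rfl
    have h2 : F (g0 x) ∈ G := by rw [← hFr]; exact Set.mem_range_self _
    have h3 : Function.uncurry c (F (g0 x)) = 0 := h2
    rw [h1] at h3
    exact h3


lemma measure_le_sub_add {Z : Type*} [MeasurableSpace Z] (μ ν : Measure Z)
    [IsFiniteMeasure μ] [IsFiniteMeasure ν] : μ ≤ μ - ν + ν := by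
  obtain ⟨s, hs, hss, hsc⟩ := MeasureTheory.hahn_decomposition (μ := μ) (ν := ν)
  rw [Measure.le_iff]
  intro t ht
  have hrle : ν.restrict s ≤ μ.restrict s := by
    rw [Measure.le_iff]
    intro u hu
    rw [Measure.restrict_apply hu, Measure.restrict_apply hu]
    exact hss _ (hu.inter hs) inter_subset_right
  have h2 : (μ - ν) (t ∩ s) = μ (t ∩ s) - ν (t ∩ s) := by
    have hr := Measure.restrict_sub_eq_restrict_sub_restrict (μ := μ) (ν := ν) hs
    have h2' : (μ - ν).restrict s t = (μ.restrict s - ν.restrict s) t := by rw [hr]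
    rw [Measure.restrict_apply ht] at h2'
    rw [h2', Measure.sub_apply ht hrle, Measure.restrict_apply ht, Measure.restrict_apply ht]
  have h3 : ν (t ∩ s) ≤ μ (t ∩ s) := hss _ (ht.inter hs) inter_subset_right
  have h4 : μ (t ∩ s) ≤ (μ - ν) (t ∩ s) + ν (t ∩ s) := by
    rw [h2, tsub_add_cancel_of_le h3]
  have h5 : μ (t \ s) ≤ ν (t \ s) := hsc _ (ht.diff hs) (Set.diff_subset_compl t s)
  calc μ t = μ (t ∩ s) + μ (t \ s) := (measure_inter_add_diff t hs).symm
    _ ≤ ((μ - ν) (t ∩ s) + ν (t ∩ s)) + ν (t \ s) := add_le_add h4 h5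
    _ ≤ ((μ - ν) t + ν (t ∩ s)) + ν (t \ s) := by
        gcongr
        exact inter_subset_left
    _ = (μ - ν) t + (ν (t ∩ s) + ν (t \ s)) := by ring
    _ = (μ - ν) t + ν t := by rw [measure_inter_add_diff t hs]
    _ = ((μ - ν) + ν) t := (Measure.add_apply _ _ _).symm

lemma otInfCost_le_part {X Y : Type*} [MeasurableSpace X] [MeasurableSpace Y]
    (μ₁ μ₂ : Measure X) (ν₁ ν₂ : Measure Y)
    [IsFiniteMeasure μ₁] [IsFiniteMeasure μ₂] [IsFiniteMeasure ν₁] [IsFiniteMeasure ν₂]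
    (hbal₂ : μ₂ Set.univ = ν₂ Set.univ)
    (κ : Kernel X Y) (hκM : IsMarkovKernel κ)
    (h₁ : ∀ B : Set Y, MeasurableSet B → ν₁ B ≤ ∫⁻ x, κ x B ∂μ₁)
    (h₂ : ∀ B : Set Y, MeasurableSet B → ν₂ B ≤ ∫⁻ x, κ x B ∂μ₂)
    {P : Set Y} (hP : MeasurableSet P)
    (hPpos : ν₂.restrict P ≤ ν₁.restrict P)
    (hPneg : ν₁.restrict Pᶜ ≤ ν₂.restrict Pᶜ)
    (η : Measure X) (c : X → Y → ℝ≥0∞) (hc : Measurable (Function.uncurry c))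
    {g : X → Y} (hg : Measurable g) (hg0 : ∀ᵐ x ∂η, c x (g x) = 0) :
    otInfCost (μ₁ - μ₂) (ν₁ - ν₂) c η ≤ ∫⁻ x, ∫⁻ y in P, c x y ∂(κ x) ∂η := by
  classical
  set θfun : X → Measure Y := fun x => (κ x).restrict P + (κ x Pᶜ) • Measure.dirac (g x)
    with hθdef
  have hθapp : ∀ (x : X) (B : Set Y), MeasurableSet B →
      θfun x B = κ x (B ∩ P) + κ x Pᶜ * Set.indicator B 1 (g x) := by
    intro x B hB
    rw [hθdef]
    simp only [Measure.add_apply, Measure.restrict_apply hB, Measure.smul_apply, smul_eq_mul,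
      Measure.dirac_apply' _ hB]
  have hθmeas : Measurable θfun := by
    apply Measure.measurable_of_measurable_coe
    intro B hB
    have heq : (fun x => θfun x B) =
        fun x => κ x (B ∩ P) + κ x Pᶜ * Set.indicator B 1 (g x) :=
      funext fun x => hθapp x B hB
    rw [heq]
    exact (Kernel.measurable_coe κ (hB.inter hP)).add
      ((Kernel.measurable_coe κ hP.compl).mul ((measurable_one.indicator hB).comp hg))
  set θ : Kernel X Y := ⟨θfun, hθmeas⟩ with hθK
  have hθapp' : ∀ x : X, θ x = θfun x := fun x => rfl
  have hθMarkov : IsMarkovKernel θ := by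
    constructor
    intro x
    haveI := hκM.isProbabilityMeasure x
    constructor
    rw [hθapp' x, hθapp x Set.univ MeasurableSet.univ]
    simp only [Set.univ_inter, Set.indicator_univ, Pi.one_apply, mul_one]
    rw [measure_add_measure_compl hP]
    exact measure_univ
  have hfeas : ∀ B : Set Y, MeasurableSet B → (ν₁ - ν₂) B ≤ ∫⁻ x, θ x B ∂(μ₁ - μ₂) := by
    intro B hB
    set S := B ∩ P with hSdef
    have hS : MeasurableSet S := hB.inter hP
    have hc2 : ∫⁻ x, κ x S ∂μ₂ ≤ ν₂ S := by
      have hκuniv : ∀ x, κ x S + κ x Sᶜ = 1 := by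
        intro x
        haveI := hκM.isProbabilityMeasure x
        rw [measure_add_measure_compl hS, measure_univ]
      have hsum : ∫⁻ x, κ x S ∂μ₂ + ∫⁻ x, κ x Sᶜ ∂μ₂ = ν₂ Set.univ := by
        rw [← MeasureTheory.lintegral_add_left (Kernel.measurable_coe κ hS)]
        simp_rw [hκuniv]
        rw [MeasureTheory.lintegral_one, hbal₂]
      have hsum2 : ν₂ S + ν₂ Sᶜ = ν₂ Set.univ := measure_add_measure_compl hS
      have hle2 : ∫⁻ x, κ x S ∂μ₂ + ν₂ Sᶜ ≤ ν₂ S + ν₂ Sᶜ := by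
        rw [hsum2, ← hsum]
        exact add_le_add_right (h₂ Sᶜ hS.compl) _
      exact ENNReal.le_of_add_le_add_right (measure_ne_top ν₂ Sᶜ) hle2
    have hd : ∫⁻ x, κ x S ∂μ₁ ≤ ∫⁻ x, κ x S ∂(μ₁ - μ₂) + ∫⁻ x, κ x S ∂μ₂ := by
      rw [← MeasureTheory.lintegral_add_measure]
      exact lintegral_mono' (measure_le_sub_add μ₁ μ₂) le_rfl
    have hsub : (ν₁ - ν₂) B ≤ ν₁ S - ν₂ S := by
      have hρle : ν₁ - ν₂ ≤ ν₁.restrict P - ν₂.restrict P := by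
        apply Measure.sub_le_of_le_add
        rw [Measure.le_iff]
        intro t ht
        have e2 : ν₁ (t ∩ P) = (ν₁.restrict P - ν₂.restrict P) t + ν₂ (t ∩ P) := by
          rw [Measure.sub_apply ht hPpos, Measure.restrict_apply ht, Measure.restrict_apply ht,
            tsub_add_cancel_of_le ?hle]
          case hle =>
            have hx := Measure.le_iff'.mp hPpos t
            rwa [Measure.restrict_apply ht, Measure.restrict_apply ht] at hx
        have e3 : ν₁ (t \ P) ≤ ν₂ (t \ P) := by
          have hx := Measure.le_iff'.mp hPneg t
          rw [Measure.restrict_apply ht, Measure.restrict_apply ht] at hx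
          simpa [Set.diff_eq] using hx
        calc ν₁ t = ν₁ (t ∩ P) + ν₁ (t \ P) := (measure_inter_add_diff t hP).symm
          _ ≤ ((ν₁.restrict P - ν₂.restrict P) t + ν₂ (t ∩ P)) + ν₂ (t \ P) :=
              add_le_add (le_of_eq e2) e3
          _ = (ν₁.restrict P - ν₂.restrict P) t + ν₂ t := by
              rw [add_assoc, measure_inter_add_diff t hP]
          _ = ((ν₁.restrict P - ν₂.restrict P) + ν₂) t := (Measure.add_apply _ _ _).symm
      have hx := Measure.le_iff'.mp hρle B
      rwa [Measure.sub_apply hB hPpos, Measure.restrict_apply hB, Measure.restrict_apply hB] at hx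
    have hfinal : ν₁ S ≤ ∫⁻ x, κ x S ∂(μ₁ - μ₂) + ν₂ S :=
      (h₁ S hS).trans (hd.trans (add_le_add_right hc2 _))
    have hmain : (ν₁ - ν₂) B ≤ ∫⁻ x, κ x S ∂(μ₁ - μ₂) :=
      hsub.trans (tsub_le_iff_right.mpr hfinal)
    refine hmain.trans (lintegral_mono fun x => ?_)
    rw [hθapp' x, hθapp x B hB]
    exact le_self_add
  have hcost : kernelCost c η θ ≤ ∫⁻ x, ∫⁻ y in P, c x y ∂(κ x) ∂η := by
    rw [kernelCost]
    apply le_of_eq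
    apply lintegral_congr_ae
    filter_upwards [hg0] with x hx
    rw [hθapp' x, hθdef]
    simp only []
    rw [MeasureTheory.lintegral_add_measure, MeasureTheory.lintegral_smul_measure,
      MeasureTheory.lintegral_dirac' _ hc.of_uncurry_left, hx, smul_zero, add_zero]
  refine le_trans (sInf_le ?_) hcost
  exact ⟨θ, hθMarkov, hfeas, rfl⟩

end SOTAux

/-- lower bound for the simultaneous optimal transport cost via the
one-dimensional transport problems between the positive parts `(μᵢ−μⱼ)₊` and
`(νᵢ−νⱼ)₊`; and if `(μᵢ−μⱼ)₊(X) < (νᵢ−νⱼ)₊(Y)` for some `i, j`, both sides are `+∞`. -/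
theorem sot_lower_bound_positive_parts
    {X Y : Type*} [MeasurableSpace X] [TopologicalSpace X] [PolishSpace X] [BorelSpace X]
    [MeasurableSpace Y] [TopologicalSpace Y] [PolishSpace Y] [BorelSpace Y]
    {d : ℕ} (μ : Fin d → Measure X) (ν : Fin d → Measure Y)
    (hμfin : ∀ j, IsFiniteMeasure (μ j)) (hνfin : ∀ j, IsFiniteMeasure (ν j))
    (hνpos : ∀ j, 0 < ν j Set.univ) (hbal : ∀ j, μ j Set.univ = ν j Set.univ)
    (η : Measure X) [IsProbabilityMeasure η] (hη : η ≪ avgMeasure μ)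
    (c : X → Y → ℝ≥0∞) (hc : Measurable (Function.uncurry c))
    (hc0 : ∀ x : X, ∃ y : Y, c x y = 0) :
    (∀ i j : Fin d,
        otInfCost (μ i - μ j) (ν i - ν j) c η + otInfCost (μ j - μ i) (ν j - ν i) c η
          ≤ sotInfCost μ ν c η) ∧
      (∀ i j : Fin d, (μ i - μ j) Set.univ < (ν i - ν j) Set.univ →
        sotInfCost μ ν c η = ⊤ ∧
          otInfCost (μ i - μ j) (ν i - ν j) c η + otInfCost (μ j - μ i) (ν j - ν i) c η = ⊤) := by
  classical
  haveI : ∀ j, IsFiniteMeasure (μ j) := hμfin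
  haveI : ∀ j, IsFiniteMeasure (ν j) := hνfin
  obtain ⟨g, hg, hg0⟩ := SOTAux.exists_measurable_ae_zero η c hc hc0
  have main : ∀ i j : Fin d,
      otInfCost (μ i - μ j) (ν i - ν j) c η + otInfCost (μ j - μ i) (ν j - ν i) c η
        ≤ sotInfCost μ ν c η := by
    intro i j
    haveI := hμfin i; haveI := hμfin j; haveI := hνfin i; haveI := hνfin j
    refine le_sInf ?_
    rintro r ⟨κ, hκM, hκc, rfl⟩
    obtain ⟨P, hP, hPs, hPsc⟩ := MeasureTheory.hahn_decomposition (μ := ν i) (ν := ν j)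
    have hPpos : (ν j).restrict P ≤ (ν i).restrict P := by
      rw [Measure.le_iff]
      intro u hu
      rw [Measure.restrict_apply hu, Measure.restrict_apply hu]
      exact hPs _ (hu.inter hP) Set.inter_subset_right
    have hPneg : (ν i).restrict Pᶜ ≤ (ν j).restrict Pᶜ := by
      rw [Measure.le_iff]
      intro u hu
      rw [Measure.restrict_apply hu, Measure.restrict_apply hu]
      exact hPsc _ (hu.inter hP.compl) Set.inter_subset_right
    have h1 := SOTAux.otInfCost_le_part (μ i) (μ j) (ν i) (ν j) (hbal j) κ hκM
      (hκc i) (hκc j) hP hPpos hPneg η c hc hg hg0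
    have h2 := SOTAux.otInfCost_le_part (μ j) (μ i) (ν j) (ν i) (hbal i) κ hκM
      (hκc j) (hκc i) hP.compl hPneg (by rw [compl_compl]; exact hPpos) η c hc hg hg0
    refine (add_le_add h1 h2).trans (le_of_eq ?_)
    rw [← MeasureTheory.lintegral_add_left]
    · rw [kernelCost]
      apply lintegral_congr
      intro x
      exact MeasureTheory.lintegral_add_compl _ hP
    · exact hc.setLIntegral_kernel_prod_right hP
  refine ⟨main, fun i j hlt => ?_⟩
  haveI := hμfin i; haveI := hμfin j; haveI := hνfin i; haveI := hνfin j
  have hot : otInfCost (μ i - μ j) (ν i - ν j) c η = ⊤ := by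
    rw [otInfCost]
    convert (sInf_empty : sInf (∅ : Set ℝ≥0∞) = ⊤)
    · rfl
    rw [Set.eq_empty_iff_forall_notMem]
    rintro r ⟨κ, hκM, hκc, rfl⟩
    have h1 := hκc Set.univ MeasurableSet.univ
    have h2 : ∫⁻ x, κ x Set.univ ∂(μ i - μ j) = (μ i - μ j) Set.univ := by
      have : ∀ x, κ x Set.univ = 1 := fun x => by
        haveI := hκM.isProbabilityMeasure x
        exact measure_univ
      simp_rw [this]
      rw [MeasureTheory.lintegral_one]
    rw [h2] at h1
    exact absurd (lt_of_le_of_lt h1 hlt) (lt_irrefl _)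
  constructor
  · have h := main i j
    rw [hot, top_add] at h
    exact top_le_iff.mp h
  · rw [hot, top_add]

end
end

section
/- Let X, Y be Polish spaces, let μ = (μ₁,…,μ_d) and ν = (ν₁,…,ν_d) be d-tuples of finite nonzero Borel measures on X and Y, and let η be a Borel probability measure on X mutually absolutely continuous with μ̄. Then Π_η(μ,ν) equals the set of Borel probability measures π on X×Y whose first marginal is η and which satisfy, for every j and every Borel set B ⊆ Y, ∫_{X×Y} 1_B(y) (dμⱼ/dη)(x) π(dx,dy) ≥ νⱼ(B). -/
open MeasureTheory ProbabilityTheory ENNReal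

noncomputable section

/-- The set `Π_η(μ,ν) = {η ⊗ κ : κ ∈ K(μ,ν)}` of simultaneous transport plans. -/
def PiSet {X Y : Type*} [MeasurableSpace X] [MeasurableSpace Y] {d : ℕ}
    (η : Measure X) (μ : Fin d → Measure X) (ν : Fin d → Measure Y) :
    Set (Measure (X × Y)) :=
  {π | ∃ κ : Kernel X Y, IsMarkovKernel κ ∧
    (∀ j, ∀ B : Set Y, MeasurableSet B → ν j B ≤ ∫⁻ x, κ x B ∂(μ j)) ∧
    π = η.compProd κ}

lemma setLIntegral_compProd_fst {X Y : Type*} [MeasurableSpace X] [MeasurableSpace Y]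
    (η : Measure X) [SFinite η] (κ : Kernel X Y) [IsSFiniteKernel κ]
    (f : X → ℝ≥0∞) (hf : Measurable f) (B : Set Y) (hB : MeasurableSet B) :
    ∫⁻ p in Prod.snd ⁻¹' B, f p.1 ∂(η.compProd κ) = ∫⁻ x, f x * κ x B ∂η := by
  rw [← Set.univ_prod,
    Measure.setLIntegral_compProd (f := fun p => f p.1) (hf.comp measurable_fst)
      MeasurableSet.univ hB]
  simp [setLIntegral_const, mul_comm]

lemma mu_ac_eta {X : Type*} [MeasurableSpace X] {d : ℕ} (μ : Fin d → Measure X)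
    (hμfin : ∀ j, IsFiniteMeasure (μ j)) (η : Measure X) (hη₂ : avgMeasure μ ≪ η) (j : Fin d) :
    μ j ≪ η := by
  intro s hs
  have h1 : avgMeasure μ s = 0 := hη₂ hs
  have hc : (∑ j, μ j Set.univ) ≠ ∞ := by
    haveI := hμfin
    exact (ENNReal.sum_lt_top.mpr fun j _ => measure_lt_top _ _).ne
  rw [avgMeasure, Measure.smul_apply, smul_eq_mul, mul_eq_zero] at h1
  have h2 : (∑ j, μ j) s = 0 := by
    rcases h1 with h | h
    · exact absurd h (ENNReal.inv_ne_zero.mpr hc)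
    · exact h
  rw [Measure.finset_sum_apply, Finset.sum_eq_zero_iff] at h2
  exact h2 j (Finset.mem_univ j)

lemma kernel_lintegral_rnDeriv {X Y : Type*} [MeasurableSpace X] [MeasurableSpace Y]
    (μ η : Measure X) [IsFiniteMeasure μ] [SigmaFinite η] (hac : μ ≪ η)
    (κ : Kernel X Y) (B : Set Y) (hB : MeasurableSet B) :
    ∫⁻ x, κ x B ∂μ = ∫⁻ x, μ.rnDeriv η x * κ x B ∂η := by
  conv_lhs => rw [← Measure.withDensity_rnDeriv_eq μ η hac]
  rw [lintegral_withDensity_eq_lintegral_mul _ (Measure.measurable_rnDeriv μ η)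
    (Kernel.measurable_coe κ hB)]
  rfl

/-- the Kantorovich reformulation of `Π_η(μ,ν)`: it consists exactly of the
probability measures on `X × Y` with first marginal `η` satisfying
`∫ 1_B(y) (dμⱼ/dη)(x) dπ ≥ νⱼ(B)` for all `j` and Borel `B`. -/
theorem PiSet_eq_kantorovich
    {X Y : Type*} [MeasurableSpace X] [TopologicalSpace X] [PolishSpace X] [BorelSpace X]
    [MeasurableSpace Y] [TopologicalSpace Y] [PolishSpace Y] [BorelSpace Y]
    {d : ℕ} (μ : Fin d → Measure X) (ν : Fin d → Measure Y)
    (hμfin : ∀ j, IsFiniteMeasure (μ j)) (hνfin : ∀ j, IsFiniteMeasure (ν j))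
    (hμpos : ∀ j, 0 < μ j Set.univ) (hνpos : ∀ j, 0 < ν j Set.univ)
    (η : Measure X) [IsProbabilityMeasure η]
    (hη₁ : η ≪ avgMeasure μ) (hη₂ : avgMeasure μ ≪ η) :
    PiSet η μ ν =
      {π : Measure (X × Y) | IsProbabilityMeasure π ∧ π.map Prod.fst = η ∧
        ∀ j, ∀ B : Set Y, MeasurableSet B →
          ν j B ≤ ∫⁻ p in Prod.snd ⁻¹' B, (μ j).rnDeriv η p.1 ∂π} := by
  ext π
  simp only [PiSet, Set.mem_setOf_eq]
  constructor
  · rintro ⟨κ, hκM, hκ, rfl⟩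
    haveI := hκM
    refine ⟨inferInstance, ?_, ?_⟩
    · have h := Measure.fst_compProd η κ
      rwa [Measure.fst] at h
    · intro j B hB
      haveI := hμfin j
      rw [setLIntegral_compProd_fst η κ _ (Measure.measurable_rnDeriv _ _) B hB]
      calc ν j B ≤ ∫⁻ x, κ x B ∂(μ j) := hκ j B hB
        _ = _ := kernel_lintegral_rnDeriv (μ j) η (mu_ac_eta μ hμfin η hη₂ j) κ B hB
  · rintro ⟨hprob, hfst, hineq⟩
    haveI := hprob
    haveI hY : Nonempty Y := by
      by_contra hne
      haveI : IsEmpty Y := not_nonempty_iff.mp hne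
      rcases Nat.eq_zero_or_pos d with hd | hd
      · subst hd
        have h0 : avgMeasure μ Set.univ = 0 := by
          simp [avgMeasure]
        have h1 := hη₁ h0
        simp [measure_univ] at h1
      · have h := hνpos ⟨0, hd⟩
        simp [Set.univ_eq_empty_iff.mpr ‹IsEmpty Y›] at h
    have hfst' : π.fst = η := by rw [Measure.fst]; exact hfst
    have h2 : π = η.compProd π.condKernel := by
      rw [← hfst']; exact (Measure.disintegrate π π.condKernel).symm
    refine ⟨π.condKernel, inferInstance, ?_, h2⟩
    intro j B hB
    haveI := hμfin j
    have h1 := hineq j B hB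
    rw [h2, setLIntegral_compProd_fst η _ _ (Measure.measurable_rnDeriv _ _) B hB] at h1
    rwa [kernel_lintegral_rnDeriv (μ j) η (mu_ac_eta μ hμfin η hη₂ j) _ B hB]

end
end

section
/- Let X, Y be compact Polish spaces, let μ = (μ₁,…,μ_d) be a d-tuple of finite nonzero Borel measures on X, let η be a Borel probability measure on X mutually absolutely continuous with μ̄ such that each density dμⱼ/dη admits a continuous version, and let c : X×Y → [0,∞) be continuous. Let (νⁿ)_{n∈ℕ} be a sequence of d-tuples of finite Borel measures on Y converging weakly (componentwise, i.e. ∫ f dνⁿⱼ → ∫ f dνⱼ for every bounded continuous f and every j) to a d-tuple ν, with νⁿⱼ ≤ νⱼ for every n and j. Then lim_{n→∞} inf_{π ∈ Π_η(μ,νⁿ)} ∫_{X×Y} c dπ = inf_{π ∈ Π_η(μ,ν)} ∫_{X×Y} c dπ, where the infimum over an empty set is +∞. -/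
open MeasureTheory ProbabilityTheory ENNReal Filter
open scoped BoundedContinuousFunction NNReal

noncomputable section

set_option linter.unusedSectionVars false
set_option maxHeartbeats 1000000

open Filter TopologicalSpace Set
open scoped Topology


open MeasureTheory Filter TopologicalSpace Set
open scoped NNReal ENNReal

noncomputable section

namespace SOTAux

variable {Z : Type*} [MetricSpace Z] [CompactSpace Z]

/-- Data of a positive linear functional on `C(Z, ℝ≥0)`. -/
structure PosLin (Z : Type*) [TopologicalSpace Z] where
  Lam : C(Z, ℝ≥0) → ℝ≥0∞
  mono : ∀ f g : C(Z, ℝ≥0), (∀ x, f x ≤ g x) → Lam f ≤ Lam g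
  add : ∀ f g : C(Z, ℝ≥0), Lam (f + g) = Lam f + Lam g
  smul : ∀ (a : ℝ≥0) (f : C(Z, ℝ≥0)), Lam (a • f) = a * Lam f
  one : Lam 1 = 1

namespace PosLin

variable (D : PosLin Z)

lemma exists_bound (f : C(Z, ℝ≥0)) : ∃ M : ℝ≥0, ∀ x, f x ≤ M := by
  obtain ⟨M, hM⟩ := (isCompact_range f.continuous).bddAbove
  exact ⟨M, fun x => hM ⟨x, rfl⟩⟩

lemma lam_zero : D.Lam 0 = 0 := by
  have := D.smul 0 0
  simpa using this

lemma lam_le_of_le {f g : C(Z, ℝ≥0)} (h : ∀ x, f x ≤ g x) : D.Lam f ≤ D.Lam g := D.mono f g h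

lemma lam_le_const (f : C(Z, ℝ≥0)) {M : ℝ≥0} (h : ∀ x, f x ≤ M) : D.Lam f ≤ M := by
  have h1 : ∀ x, f x ≤ (M • (1 : C(Z, ℝ≥0))) x := by
    intro x; simpa using h x
  calc D.Lam f ≤ D.Lam (M • 1) := D.mono _ _ h1
  _ = M * D.Lam 1 := D.smul _ _
  _ = M := by rw [D.one, mul_one]

lemma lam_ne_top (f : C(Z, ℝ≥0)) : D.Lam f ≠ ∞ := by
  obtain ⟨M, hM⟩ := exists_bound f
  exact ((D.lam_le_const f hM).trans_lt ENNReal.coe_lt_top).ne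

/-- The value of the Riesz content on a set. -/
def lamK (K : Set Z) : ℝ≥0∞ :=
  sInf {r | ∃ f : C(Z, ℝ≥0), (∀ x ∈ K, 1 ≤ f x) ∧ r = D.Lam f}

lemma lamK_le {K : Set Z} {f : C(Z, ℝ≥0)} (h : ∀ x ∈ K, 1 ≤ f x) : D.lamK K ≤ D.Lam f :=
  sInf_le ⟨f, h, rfl⟩

lemma lamK_le_one (K : Set Z) : D.lamK K ≤ 1 := by
  have := D.lamK_le (K := K) (f := 1) (fun x _ => le_refl _)
  rwa [D.one] at this

lemma lamK_ne_top (K : Set Z) : D.lamK K ≠ ∞ :=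
  ((D.lamK_le_one K).trans_lt (by norm_num)).ne

lemma lamK_mono {K K' : Set Z} (h : K ⊆ K') : D.lamK K ≤ D.lamK K' := by
  apply sInf_le_sInf
  rintro r ⟨f, hf, rfl⟩
  exact ⟨f, fun x hx => hf x (h hx), rfl⟩

lemma Lam_le_mul_lamK {K : Set Z} {g : C(Z, ℝ≥0)} {ε : ℝ≥0}
    (h0 : ∀ x ∉ K, g x = 0) (hle : ∀ x, g x ≤ ε) :
    D.Lam g ≤ ε * D.lamK K := by
  rcases eq_or_ne ε 0 with rfl | hε
  · have : g = 0 := by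
      ext x; simpa using hle x
    simp [this, D.lam_zero]
  · have key : ∀ r ∈ {r | ∃ f : C(Z, ℝ≥0), (∀ x ∈ K, 1 ≤ f x) ∧ r = D.Lam f},
        D.Lam g / (ε : ℝ≥0∞) ≤ r := by
      rintro r ⟨f, hf, rfl⟩
      apply ENNReal.div_le_of_le_mul
      rw [mul_comm]
      have hpt : ∀ x, g x ≤ (ε • f) x := by
        intro x
        by_cases hx : x ∈ K
        · calc g x ≤ ε := hle x
          _ = ε * 1 := (mul_one _).symm
          _ ≤ ε * f x := by exact mul_le_mul_right (hf x hx) ε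
          _ = (ε • f) x := rfl
        · simp [h0 x hx]
      calc D.Lam g ≤ D.Lam (ε • f) := D.mono _ _ hpt
      _ = ε * D.Lam f := D.smul _ _
    have h1 : D.Lam g / (ε : ℝ≥0∞) ≤ D.lamK K := le_sInf key
    calc D.Lam g = D.Lam g / (ε : ℝ≥0∞) * ε := by
          rw [ENNReal.div_mul_cancel (by exact_mod_cast hε) ENNReal.coe_ne_top]
    _ ≤ D.lamK K * ε := mul_le_mul_left h1 _
    _ = ε * D.lamK K := mul_comm _ _

lemma lamK_union_le (K1 K2 : Set Z) : D.lamK (K1 ∪ K2) ≤ D.lamK K1 + D.lamK K2 := by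
  apply ENNReal.le_of_forall_pos_le_add
  intro ε hε _
  have hhalf : ((ε : ℝ≥0∞) / 2) ≠ 0 := by
    simp [ENNReal.div_eq_zero_iff, hε.ne']
  have h1 : sInf {r | ∃ f : C(Z, ℝ≥0), (∀ x ∈ K1, 1 ≤ f x) ∧ r = D.Lam f}
      < D.lamK K1 + (ε : ℝ≥0∞) / 2 := ENNReal.lt_add_right (D.lamK_ne_top K1) hhalf
  have h2 : sInf {r | ∃ f : C(Z, ℝ≥0), (∀ x ∈ K2, 1 ≤ f x) ∧ r = D.Lam f}
      < D.lamK K2 + (ε : ℝ≥0∞) / 2 := ENNReal.lt_add_right (D.lamK_ne_top K2) hhalf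
  obtain ⟨r1, ⟨f1, hf1, rfl⟩, hr1⟩ := sInf_lt_iff.mp h1
  obtain ⟨r2, ⟨f2, hf2, rfl⟩, hr2⟩ := sInf_lt_iff.mp h2
  have hone : ∀ x ∈ K1 ∪ K2, 1 ≤ (f1 + f2) x := by
    rintro x (hx | hx)
    · calc (1 : ℝ≥0) ≤ f1 x := hf1 x hx
      _ ≤ f1 x + f2 x := le_self_add
      _ = (f1 + f2) x := rfl
    · calc (1 : ℝ≥0) ≤ f2 x := hf2 x hx
      _ ≤ f1 x + f2 x := le_add_self
      _ = (f1 + f2) x := rfl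
  calc D.lamK (K1 ∪ K2) ≤ D.Lam (f1 + f2) := D.lamK_le hone
  _ = D.Lam f1 + D.Lam f2 := D.add _ _
  _ ≤ (D.lamK K1 + (ε : ℝ≥0∞) / 2) + (D.lamK K2 + (ε : ℝ≥0∞) / 2) :=
      add_le_add hr1.le hr2.le
  _ = D.lamK K1 + D.lamK K2 + ((ε : ℝ≥0∞) / 2 + (ε : ℝ≥0∞) / 2) := by ring
  _ = D.lamK K1 + D.lamK K2 + ε := by rw [ENNReal.add_halves]

lemma add_lamK_le_union {K1 K2 : Set Z} (hK1 : IsCompact K1) (hK2 : IsClosed K2)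
    (hd : Disjoint K1 K2) : D.lamK K1 + D.lamK K2 ≤ D.lamK (K1 ∪ K2) := by
  apply le_sInf
  rintro r ⟨f, hf, rfl⟩
  obtain ⟨u, hu1, hu2, hu3⟩ := exists_continuous_zero_one_of_isCompact hK1 hK2 hd
  set v : C(Z, ℝ≥0) := ⟨fun z => Real.toNNReal (u z),
    continuous_real_toNNReal.comp u.continuous⟩ with hv
  have hvle : ∀ z, v z ≤ 1 := by
    intro z
    simp only [hv, ContinuousMap.coe_mk]
    exact Real.toNNReal_le_one.mpr (hu3 z).2
  set w : C(Z, ℝ≥0) := ⟨fun z => 1 - v z, by fun_prop⟩ with hw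
  have hsum : f = f * w + f * v := by
    ext z
    simp only [ContinuousMap.add_apply, ContinuousMap.mul_apply, hw, ContinuousMap.coe_mk]
    rw [← mul_add, tsub_add_cancel_of_le (hvle z), mul_one]
  have hw1 : ∀ x ∈ K1, 1 ≤ (f * w) x := by
    intro x hx
    have : v x = 0 := by
      simp only [hv, ContinuousMap.coe_mk]
      rw [hu1 hx]; simp
    show 1 ≤ f x * (1 - v x)
    rw [this]; simpa using hf x (Or.inl hx)
  have hv1 : ∀ x ∈ K2, 1 ≤ (f * v) x := by
    intro x hx
    have : v x = 1 := by
      simp only [hv, ContinuousMap.coe_mk]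
      rw [hu2 hx]; simp
    show 1 ≤ f x * v x
    rw [this, mul_one]; exact hf x (Or.inr hx)
  calc D.lamK K1 + D.lamK K2 ≤ D.Lam (f * w) + D.Lam (f * v) :=
        add_le_add (D.lamK_le hw1) (D.lamK_le hv1)
  _ = D.Lam (f * w + f * v) := (D.add _ _).symm
  _ = D.Lam f := by rw [← hsum]

/-- The Riesz content associated to a positive linear functional. -/
def content : Content Z where
  toFun K := (D.lamK K).toNNReal
  mono' K1 K2 h := ENNReal.toNNReal_mono (D.lamK_ne_top _) (D.lamK_mono h)
  sup_disjoint' K1 K2 hd h1 h2 := by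
    have : D.lamK (↑(K1 ⊔ K2)) = D.lamK K1 + D.lamK K2 := by
      have hco : (↑(K1 ⊔ K2) : Set Z) = ↑K1 ∪ ↑K2 := rfl
      rw [hco]
      exact le_antisymm (D.lamK_union_le _ _)
        (D.add_lamK_le_union K1.isCompact h2 hd)
    simp only [this]
    rw [ENNReal.toNNReal_add (D.lamK_ne_top _) (D.lamK_ne_top _)]
  sup_le' K1 K2 := by
    have h := D.lamK_union_le (K1 : Set Z) (K2 : Set Z)
    have hco : (↑(K1 ⊔ K2) : Set Z) = ↑K1 ∪ ↑K2 := rfl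
    rw [← hco] at h
    have := ENNReal.toNNReal_mono
      (by simp [ENNReal.add_ne_top, D.lamK_ne_top]) h
    refine this.trans ?_
    rw [ENNReal.toNNReal_add (D.lamK_ne_top _) (D.lamK_ne_top _)]

lemma content_coe (K : Compacts Z) : (D.content.toFun K : ℝ≥0∞) = D.lamK K :=
  ENNReal.coe_toNNReal (D.lamK_ne_top _)

end PosLin

end SOTAux

namespace SOTAux

/-! ### Slice functions -/

section Slice

variable {Z : Type*} [TopologicalSpace Z]

/-- The `i`-th slice of `f` at scale `ε`. -/
def slice (f : C(Z, ℝ≥0)) (ε : ℝ≥0) (i : ℕ) : C(Z, ℝ≥0) :=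
  ⟨fun z => min (f z) (((i : ℝ≥0) + 1) * ε) - min (f z) ((i : ℝ≥0) * ε), by fun_prop⟩

lemma slice_apply (f : C(Z, ℝ≥0)) (ε : ℝ≥0) (i : ℕ) (z : Z) :
    slice f ε i z = min (f z) (((i : ℝ≥0) + 1) * ε) - min (f z) ((i : ℝ≥0) * ε) := rfl

lemma nnreal_step_le (a ε : ℝ≥0) (i : ℕ) :
    min a (((i : ℝ≥0) + 1) * ε) - min a ((i : ℝ≥0) * ε) ≤ ε := by
  rcases le_total a ((i : ℝ≥0) * ε) with h | h
  · rw [min_eq_left h, min_eq_left (h.trans (by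
      refine mul_le_mul_left ?_ ε; exact le_add_of_nonneg_right zero_le_one))]
    simp
  · rw [min_eq_right h]
    refine (tsub_le_tsub_right (min_le_right _ _) _).trans ?_
    rw [add_mul, one_mul, add_tsub_cancel_left]

lemma slice_le (f : C(Z, ℝ≥0)) (ε : ℝ≥0) (i : ℕ) (z : Z) : slice f ε i z ≤ ε :=
  nnreal_step_le _ _ _

lemma slice_eq_zero {f : C(Z, ℝ≥0)} {ε : ℝ≥0} {i : ℕ} {z : Z}
    (h : f z ≤ (i : ℝ≥0) * ε) : slice f ε i z = 0 := by
  rw [slice_apply, min_eq_left h, min_eq_left (h.trans (by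
    refine mul_le_mul_left ?_ ε; exact le_add_of_nonneg_right zero_le_one))]
  simp

lemma slice_eq_full {f : C(Z, ℝ≥0)} {ε : ℝ≥0} {i : ℕ} {z : Z}
    (h : ((i : ℝ≥0) + 1) * ε ≤ f z) : slice f ε i z = ε := by
  have h' : (i : ℝ≥0) * ε ≤ f z :=
    (mul_le_mul_left (le_add_of_nonneg_right zero_le_one) ε).trans h
  rw [slice_apply, min_eq_right h, min_eq_right h', add_mul, one_mul, add_tsub_cancel_left]

lemma slice_sum (f : C(Z, ℝ≥0)) (ε : ℝ≥0) (N : ℕ) (z : Z) :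
    ∑ i ∈ Finset.range N, slice f ε i z = min (f z) ((N : ℝ≥0) * ε) := by
  induction N with
  | zero => simp
  | succ N ih =>
    rw [Finset.sum_range_succ, ih, slice_apply]
    have hmono : min (f z) ((N : ℝ≥0) * ε) ≤ min (f z) (((N : ℝ≥0) + 1) * ε) := by
      refine min_le_min le_rfl (mul_le_mul_left (le_add_of_nonneg_right zero_le_one) ε)
    rw [add_tsub_cancel_of_le hmono]
    push_cast
    ring_nf

end Slice

namespace PosLin

variable {Z : Type*} [MetricSpace Z] [CompactSpace Z] (D : PosLin Z)

lemma Lam_sum {ι : Type*} (s : Finset ι) (h : ι → C(Z, ℝ≥0)) :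
    D.Lam (∑ i ∈ s, h i) = ∑ i ∈ s, D.Lam (h i) := by
  classical
  induction s using Finset.induction_on with
  | empty => simpa using D.lam_zero
  | insert _ _ hnot ih =>
    rw [Finset.sum_insert hnot, Finset.sum_insert hnot, D.add, ih]

variable [MeasurableSpace Z] [BorelSpace Z]

/-- The measure constructed from a positive linear functional. -/
def measure : Measure Z := D.content.measure

lemma measure_open {U : Set Z} (hU : IsOpen U) :
    D.measure U = D.content.innerContent ⟨U, hU⟩ := by
  rw [PosLin.measure, Content.measure_apply _ hU.measurableSet]
  exact D.content.outerMeasure_opens ⟨U, hU⟩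

lemma lamK_le_measure_open {K U : Set Z} (hK : IsCompact K) (hU : IsOpen U) (hKU : K ⊆ U) :
    D.lamK K ≤ D.measure U := by
  rw [D.measure_open hU]
  calc D.lamK K = (D.content.toFun ⟨K, hK⟩ : ℝ≥0∞) := (D.content_coe ⟨K, hK⟩).symm
  _ ≤ _ := D.content.le_innerContent ⟨K, hK⟩ ⟨U, hU⟩ hKU

lemma measure_open_le_lamK {U K : Set Z} (hU : IsOpen U) (hK : IsCompact K) (hUK : U ⊆ K) :
    D.measure U ≤ D.lamK K := by
  rw [D.measure_open hU]
  calc D.content.innerContent ⟨U, hU⟩ ≤ (D.content.toFun ⟨K, hK⟩ : ℝ≥0∞) :=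
        D.content.innerContent_le ⟨U, hU⟩ ⟨K, hK⟩ hUK
  _ = D.lamK K := D.content_coe ⟨K, hK⟩

lemma measure_univ_le_one : D.measure Set.univ ≤ 1 :=
  (D.measure_open_le_lamK isOpen_univ isCompact_univ subset_rfl).trans (D.lamK_le_one _)

lemma isFiniteMeasure : IsFiniteMeasure D.measure :=
  ⟨D.measure_univ_le_one.trans_lt (by norm_num)⟩

end PosLin

section Layer

variable {Z : Type*} [MetricSpace Z] [MeasurableSpace Z] [BorelSpace Z]

lemma layer_sum_le (m : Measure Z) (f : C(Z, ℝ≥0)) {ε : ℝ≥0} (hε : 0 < ε) (K : ℕ) :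
    ∑ i ∈ Finset.range K, (ε : ℝ≥0∞) * m {z | ((i : ℝ≥0) + 1) * ε ≤ f z} ≤
      ∫⁻ z, (f z : ℝ≥0∞) ∂m := by
  classical
  have hCmeas : ∀ i : ℕ, MeasurableSet {z | ((i : ℝ≥0) + 1) * ε ≤ f z} :=
    fun i => (isClosed_le continuous_const f.continuous).measurableSet
  have h1 : ∀ i : ℕ, (ε : ℝ≥0∞) * m {z | ((i : ℝ≥0) + 1) * ε ≤ f z}
      = ∫⁻ z, Set.indicator {z | ((i : ℝ≥0) + 1) * ε ≤ f z} (fun _ => (ε : ℝ≥0∞)) z ∂m := by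
    intro i
    rw [lintegral_indicator_const (hCmeas i)]
  simp_rw [h1]
  rw [← lintegral_finset_sum _ (fun i _ => (measurable_const.indicator (hCmeas i)))]
  refine lintegral_mono fun z => ?_
  -- pointwise bound
  have key : ∑ i ∈ Finset.range K,
      Set.indicator {z | ((i : ℝ≥0) + 1) * ε ≤ f z} (fun _ => (ε : ℝ≥0∞)) z ≤ (f z : ℝ≥0∞) := by
    have heq : ∀ i : ℕ, Set.indicator {z | ((i : ℝ≥0) + 1) * ε ≤ f z}
        (fun _ => (ε : ℝ≥0∞)) z = if ((i : ℝ≥0) + 1) * ε ≤ f z then (ε : ℝ≥0∞) else 0 := by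
      intro i
      rw [Set.indicator_apply]
      simp only [Set.mem_setOf_eq]
    simp_rw [heq]
    rw [Finset.sum_ite, Finset.sum_const_zero, add_zero, Finset.sum_const]
    set S : Finset ℕ := (Finset.range K).filter (fun i : ℕ => ((i : ℝ≥0) + 1) * ε ≤ f z) with hS
    have hcard : S.card ≤ ⌊f z / ε⌋₊ := by
      have hsub : S ⊆ Finset.range ⌊f z / ε⌋₊ := by
        intro i hi
        rw [hS, Finset.mem_filter] at hi
        rw [Finset.mem_range]
        have : ((i : ℝ≥0) + 1) ≤ f z / ε := by
          rw [le_div_iff₀ hε]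
          exact hi.2
        have : ((i + 1 : ℕ) : ℝ≥0) ≤ f z / ε := by push_cast; exact this
        exact Nat.lt_of_lt_of_le (Nat.lt_succ_self i) (Nat.le_floor this)
      exact (Finset.card_le_card hsub).trans (by simp)
    have hfloor : (⌊f z / ε⌋₊ : ℝ≥0) * ε ≤ f z := by
      calc (⌊f z / ε⌋₊ : ℝ≥0) * ε ≤ (f z / ε) * ε :=
        mul_le_mul_left (Nat.floor_le zero_le) ε
      _ = f z := div_mul_cancel₀ _ hε.ne'
    calc S.card • (ε : ℝ≥0∞) = ((S.card : ℝ≥0) * ε : ℝ≥0) := by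
          rw [nsmul_eq_mul]; push_cast; ring
    _ ≤ ((⌊f z / ε⌋₊ : ℝ≥0) * ε : ℝ≥0) := by
          refine ENNReal.coe_le_coe.mpr (mul_le_mul_left ?_ ε)
          exact_mod_cast hcard
    _ ≤ (f z : ℝ≥0∞) := ENNReal.coe_le_coe.mpr hfloor
  exact key

end Layer

end SOTAux

namespace SOTAux

namespace PosLin

variable {Z : Type*} [MetricSpace Z] [CompactSpace Z] [MeasurableSpace Z] [BorelSpace Z]
variable (D : PosLin Z)

lemma measurable_coe (f : C(Z, ℝ≥0)) : Measurable fun z => (f z : ℝ≥0∞) :=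
  measurable_coe_nnreal_ennreal.comp f.continuous.measurable

lemma cast_mul_eps (i : ℕ) (ε : ℝ≥0) : ((i + 1 : ℕ) : ℝ≥0) * ε = ((i : ℝ≥0) + 1) * ε := by
  push_cast; ring

theorem Lam_le_lintegral_add (f : C(Z, ℝ≥0)) {ε : ℝ≥0} (hε : 0 < ε) :
    D.Lam f ≤ ∫⁻ z, (f z : ℝ≥0∞) ∂D.measure + ((ε : ℝ≥0∞) + ε) := by
  obtain ⟨M, hM⟩ := exists_bound f
  set K0 : ℕ := ⌈(M / ε : ℝ≥0)⌉₊ with hK0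
  set N : ℕ := K0 + 2 with hN
  have hNf : ∀ z, f z ≤ (N : ℝ≥0) * ε := by
    intro z
    calc f z ≤ M := hM z
    _ = M / ε * ε := (div_mul_cancel₀ _ hε.ne').symm
    _ ≤ (K0 : ℝ≥0) * ε := mul_le_mul_left (Nat.le_ceil _) ε
    _ ≤ (N : ℝ≥0) * ε := by
        refine mul_le_mul_left ?_ ε
        exact_mod_cast Nat.le_add_right K0 2
  have hfsum : f = ∑ i ∈ Finset.range N, slice f ε i := by
    ext z
    rw [ContinuousMap.coe_sum, Finset.sum_apply, slice_sum, min_eq_left (hNf z)]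
  set a : ℕ → ℝ≥0∞ := fun i => D.Lam (slice f ε i) with ha
  set g : ℕ → ℝ≥0∞ := fun i => D.measure {z | ((i : ℕ) : ℝ≥0) * ε ≤ f z} with hg
  have h2 : ∀ i : ℕ, a i ≤ (ε : ℝ≥0∞) * D.measure {z | ((i : ℕ) : ℝ≥0) * ε < f z + ε} := by
    intro i
    have hW : IsOpen {z | ((i : ℕ) : ℝ≥0) * ε < f z + ε} :=
      isOpen_lt continuous_const (by fun_prop)
    have hC : IsCompact {z | ((i : ℕ) : ℝ≥0) * ε ≤ f z} :=
      (isClosed_le continuous_const f.continuous).isCompact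
    have hsub : {z | ((i : ℕ) : ℝ≥0) * ε ≤ f z} ⊆ {z | ((i : ℕ) : ℝ≥0) * ε < f z + ε} :=
      fun z hz => lt_of_le_of_lt hz (lt_add_of_pos_right _ hε)
    refine (D.Lam_le_mul_lamK (K := {z | ((i : ℕ) : ℝ≥0) * ε ≤ f z}) ?_ (slice_le f ε i)).trans ?_
    · intro x hx
      exact slice_eq_zero (not_le.mp hx).le
    · exact mul_le_mul_right (D.lamK_le_measure_open hC hW hsub) _
  have h3 : ∀ i : ℕ, D.measure {z | ((i : ℕ) : ℝ≥0) * ε < f z + ε} ≤ g (i - 1) := by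
    intro i
    refine measure_mono fun z hz => ?_
    simp only [Set.mem_setOf_eq] at hz ⊢
    cases i with
    | zero => simp
    | succ j =>
      have hz' : ((j : ℝ≥0) + 1) * ε < f z + ε := by
        rw [cast_mul_eps] at hz; exact hz
      rw [add_mul, one_mul] at hz'
      simpa using (lt_of_add_lt_add_right hz').le
  have hstep : ∀ i : ℕ, a i ≤ (ε : ℝ≥0∞) * g (i - 1) :=
    fun i => (h2 i).trans (mul_le_mul_right (h3 i) _)
  have hg0 : (ε : ℝ≥0∞) * g 0 ≤ (ε : ℝ≥0∞) := by
    calc (ε : ℝ≥0∞) * g 0 ≤ (ε : ℝ≥0∞) * D.measure Set.univ :=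
          mul_le_mul_right (measure_mono (Set.subset_univ _)) _
    _ ≤ (ε : ℝ≥0∞) * 1 := mul_le_mul_right D.measure_univ_le_one _
    _ = ε := mul_one _
  have hsum1 : D.Lam f = ∑ i ∈ Finset.range N, a i := by
    calc D.Lam f = D.Lam (∑ i ∈ Finset.range N, slice f ε i) := by rw [← hfsum]
    _ = ∑ i ∈ Finset.range N, a i := D.Lam_sum _ _
  have hsplit : ∑ i ∈ Finset.range N, a i
      = (∑ i ∈ Finset.range K0, a (i + 2)) + a 1 + a 0 := by
    rw [hN, Finset.sum_range_succ' a (K0 + 1), Finset.sum_range_succ' (fun i => a (i + 1)) K0]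
  have hlayer : ∑ i ∈ Finset.range K0, a (i + 2) ≤ ∫⁻ z, (f z : ℝ≥0∞) ∂D.measure := by
    have h4 : ∀ i : ℕ, a (i + 2) ≤ (ε : ℝ≥0∞) * D.measure {z | ((i : ℝ≥0) + 1) * ε ≤ f z} := by
      intro i
      have h5 := hstep (i + 2)
      have h6 : (i + 2) - 1 = i + 1 := rfl
      rw [h6] at h5
      have h7 : {z | ((i + 1 : ℕ) : ℝ≥0) * ε ≤ f z} = {z | ((i : ℝ≥0) + 1) * ε ≤ f z} := by
        ext z; simp [cast_mul_eps]
      rw [hg] at h5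
      simpa [h7] using h5
    calc ∑ i ∈ Finset.range K0, a (i + 2)
        ≤ ∑ i ∈ Finset.range K0, (ε : ℝ≥0∞) * D.measure {z | ((i : ℝ≥0) + 1) * ε ≤ f z} :=
          Finset.sum_le_sum fun i _ => h4 i
    _ ≤ _ := layer_sum_le D.measure f hε K0
  calc D.Lam f = (∑ i ∈ Finset.range K0, a (i + 2)) + a 1 + a 0 := by rw [hsum1, hsplit]
  _ ≤ (∫⁻ z, (f z : ℝ≥0∞) ∂D.measure) + (ε : ℝ≥0∞) + (ε : ℝ≥0∞) := by
      refine add_le_add (add_le_add hlayer ?_) ?_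
      · exact (hstep 1).trans hg0
      · exact (hstep 0).trans hg0
  _ = (∫⁻ z, (f z : ℝ≥0∞) ∂D.measure) + ((ε : ℝ≥0∞) + ε) := by ring

theorem lintegral_le_Lam_add (f : C(Z, ℝ≥0)) {ε : ℝ≥0} (hε : 0 < ε) :
    ∫⁻ z, (f z : ℝ≥0∞) ∂D.measure ≤ D.Lam f + ((ε : ℝ≥0∞) + ε) := by
  obtain ⟨M, hM⟩ := exists_bound f
  set K0 : ℕ := ⌈(M / ε : ℝ≥0)⌉₊ with hK0
  set N : ℕ := K0 + 2 with hN
  have hNf : ∀ z, f z ≤ (N : ℝ≥0) * ε := by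
    intro z
    calc f z ≤ M := hM z
    _ = M / ε * ε := (div_mul_cancel₀ _ hε.ne').symm
    _ ≤ (K0 : ℝ≥0) * ε := mul_le_mul_left (Nat.le_ceil _) ε
    _ ≤ (N : ℝ≥0) * ε := by
        refine mul_le_mul_left ?_ ε
        exact_mod_cast Nat.le_add_right K0 2
  set Cs : ℕ → Set Z := fun i => {z | ((i : ℕ) : ℝ≥0) * ε ≤ f z} with hCs
  have hCclosed : ∀ i, IsClosed (Cs i) := fun i => isClosed_le continuous_const f.continuous
  set a : ℕ → ℝ≥0∞ := fun i => ∫⁻ z, (slice f ε i z : ℝ≥0∞) ∂D.measure with ha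
  have hfsum : ∫⁻ z, (f z : ℝ≥0∞) ∂D.measure = ∑ i ∈ Finset.range N, a i := by
    have hpt : ∀ z, (f z : ℝ≥0∞) = ∑ i ∈ Finset.range N, (slice f ε i z : ℝ≥0∞) := by
      intro z
      rw [← ENNReal.coe_finset_sum, slice_sum, min_eq_left (hNf z)]
    rw [lintegral_congr hpt, lintegral_finset_sum _ fun i _ => measurable_coe (slice f ε i)]
  have hai : ∀ i : ℕ, a i ≤ (ε : ℝ≥0∞) * D.measure (Cs i) := by
    intro i
    have hpt : ∀ z, (slice f ε i z : ℝ≥0∞) ≤ Set.indicator (Cs i) (fun _ => (ε : ℝ≥0∞)) z := by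
      intro z
      by_cases hz : z ∈ Cs i
      · rw [Set.indicator_of_mem hz]
        exact ENNReal.coe_le_coe.mpr (slice_le f ε i z)
      · rw [Set.indicator_of_notMem hz]
        rw [hCs] at hz
        simp only [Set.mem_setOf_eq, not_le] at hz
        rw [slice_eq_zero hz.le]
        simp
    calc a i ≤ ∫⁻ z, Set.indicator (Cs i) (fun _ => (ε : ℝ≥0∞)) z ∂D.measure :=
          lintegral_mono hpt
    _ = (ε : ℝ≥0∞) * D.measure (Cs i) := lintegral_indicator_const (hCclosed i).measurableSet _
  have hb : ∀ i : ℕ, D.measure (Cs (i + 1)) ≤ D.lamK (Cs i) := by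
    intro i
    have hV : IsOpen {z | ((i : ℕ) : ℝ≥0) * ε < f z} := isOpen_lt continuous_const f.continuous
    have hsub1 : Cs (i + 1) ⊆ {z | ((i : ℕ) : ℝ≥0) * ε < f z} := by
      intro z hz
      rw [hCs] at hz
      simp only [Set.mem_setOf_eq] at hz ⊢
      calc ((i : ℕ) : ℝ≥0) * ε < ((i : ℕ) : ℝ≥0) * ε + ε := lt_add_of_pos_right _ hε
      _ = ((i : ℝ≥0) + 1) * ε := by rw [add_mul, one_mul]
      _ = ((i + 1 : ℕ) : ℝ≥0) * ε := (cast_mul_eps i ε).symm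
      _ ≤ f z := hz
    have hsub2 : {z | ((i : ℕ) : ℝ≥0) * ε < f z} ⊆ Cs i := by
      intro z hz
      simp only [hCs, Set.mem_setOf_eq] at hz ⊢
      exact le_of_lt hz
    calc D.measure (Cs (i + 1)) ≤ D.measure {z | ((i : ℕ) : ℝ≥0) * ε < f z} :=
          measure_mono hsub1
    _ ≤ D.lamK (Cs i) := D.measure_open_le_lamK hV ((hCclosed i).isCompact) hsub2
  have hc : ∀ i : ℕ, D.lamK (Cs (i + 1)) ≤ (ε : ℝ≥0∞)⁻¹ * D.Lam (slice f ε i) := by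
    intro i
    have h1le : ∀ z ∈ Cs (i + 1), 1 ≤ (ε⁻¹ • slice f ε i) z := by
      intro z hz
      rw [hCs] at hz
      simp only [Set.mem_setOf_eq] at hz
      rw [cast_mul_eps] at hz
      have : slice f ε i z = ε := slice_eq_full hz
      show (1 : ℝ≥0) ≤ ε⁻¹ • slice f ε i z
      rw [this, smul_eq_mul, inv_mul_cancel₀ hε.ne']
    calc D.lamK (Cs (i + 1)) ≤ D.Lam (ε⁻¹ • slice f ε i) := D.lamK_le h1le
    _ = ((ε⁻¹ : ℝ≥0) : ℝ≥0∞) * D.Lam (slice f ε i) := D.smul _ _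
    _ = (ε : ℝ≥0∞)⁻¹ * D.Lam (slice f ε i) := by rw [ENNReal.coe_inv hε.ne']
  have key : ∀ i : ℕ, a (i + 2) ≤ D.Lam (slice f ε i) := by
    intro i
    calc a (i + 2) ≤ (ε : ℝ≥0∞) * D.measure (Cs (i + 2)) := hai _
    _ ≤ (ε : ℝ≥0∞) * D.lamK (Cs (i + 1)) := mul_le_mul_right (hb (i + 1)) _
    _ ≤ (ε : ℝ≥0∞) * ((ε : ℝ≥0∞)⁻¹ * D.Lam (slice f ε i)) := mul_le_mul_right (hc i) _
    _ = ((ε : ℝ≥0∞) * (ε : ℝ≥0∞)⁻¹) * D.Lam (slice f ε i) := (mul_assoc _ _ _).symm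
    _ = D.Lam (slice f ε i) := by
        rw [ENNReal.mul_inv_cancel (by exact_mod_cast hε.ne') ENNReal.coe_ne_top, one_mul]
  have ha01 : ∀ i : ℕ, a i ≤ (ε : ℝ≥0∞) := by
    intro i
    calc a i ≤ (ε : ℝ≥0∞) * D.measure (Cs i) := hai i
    _ ≤ (ε : ℝ≥0∞) * D.measure Set.univ := mul_le_mul_right (measure_mono (Set.subset_univ _)) _
    _ ≤ (ε : ℝ≥0∞) * 1 := mul_le_mul_right D.measure_univ_le_one _
    _ = ε := mul_one _
  have hsplit : ∑ i ∈ Finset.range N, a i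
      = (∑ i ∈ Finset.range K0, a (i + 2)) + a 1 + a 0 := by
    rw [hN, Finset.sum_range_succ' a (K0 + 1), Finset.sum_range_succ' (fun i => a (i + 1)) K0]
  have hfinal : ∑ i ∈ Finset.range K0, D.Lam (slice f ε i) ≤ D.Lam f := by
    rw [← D.Lam_sum]
    refine D.mono _ _ fun z => ?_
    rw [ContinuousMap.coe_sum, Finset.sum_apply, slice_sum]
    exact min_le_left _ _
  calc ∫⁻ z, (f z : ℝ≥0∞) ∂D.measure
      = (∑ i ∈ Finset.range K0, a (i + 2)) + a 1 + a 0 := by rw [hfsum, hsplit]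
  _ ≤ D.Lam f + (ε : ℝ≥0∞) + (ε : ℝ≥0∞) := by
      refine add_le_add (add_le_add ?_ (ha01 1)) (ha01 0)
      exact (Finset.sum_le_sum fun i _ => key i).trans hfinal
  _ = D.Lam f + ((ε : ℝ≥0∞) + ε) := by ring

theorem lintegral_eq (f : C(Z, ℝ≥0)) : ∫⁻ z, (f z : ℝ≥0∞) ∂D.measure = D.Lam f := by
  apply le_antisymm
  · apply ENNReal.le_of_forall_pos_le_add
    intro δ hδ _
    have h := D.lintegral_le_Lam_add f (half_pos hδ)
    rwa [← ENNReal.coe_add, add_halves] at h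
  · apply ENNReal.le_of_forall_pos_le_add
    intro δ hδ _
    have h := D.Lam_le_lintegral_add f (half_pos hδ)
    rwa [← ENNReal.coe_add, add_halves] at h

theorem isProbabilityMeasure : IsProbabilityMeasure D.measure := by
  constructor
  have h := D.lintegral_eq 1
  rw [D.one] at h
  simp only [ContinuousMap.one_apply, ENNReal.coe_one, lintegral_one] at h
  exact h

end PosLin

end SOTAux

namespace SOTAux

open scoped Topology

theorem exists_limit_measure {Z : Type*} [MetricSpace Z] [CompactSpace Z]
    [MeasurableSpace Z] [BorelSpace Z] (𝒰 : Ultrafilter ℕ) (π : ℕ → Measure Z)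
    (hπ : ∀ n, IsProbabilityMeasure (π n)) :
    ∃ P : Measure Z, IsProbabilityMeasure P ∧
      ∀ f : C(Z, ℝ≥0), Tendsto (fun n => ∫⁻ z, (f z : ℝ≥0∞) ∂π n) (𝒰 : Filter ℕ)
        (𝓝 (∫⁻ z, (f z : ℝ≥0∞) ∂P)) := by
  have hex : ∀ f : C(Z, ℝ≥0), ∃ a : ℝ≥0∞,
      Tendsto (fun n => ∫⁻ z, (f z : ℝ≥0∞) ∂π n) (𝒰 : Filter ℕ) (𝓝 a) := by
    intro f
    obtain ⟨a, -, ha⟩ := (isCompact_univ (X := ℝ≥0∞)).ultrafilter_le_nhds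
      (𝒰.map (fun n => ∫⁻ z, (f z : ℝ≥0∞) ∂π n))
      (le_principal_iff.mpr Filter.univ_mem)
    exact ⟨a, ha⟩
  choose Lam hLam using hex
  have hD : ∃ D : PosLin Z, D.Lam = Lam := by
    refine ⟨⟨Lam, ?_, ?_, ?_, ?_⟩, rfl⟩
    · intro f g h
      exact le_of_tendsto_of_tendsto' (hLam f) (hLam g)
        (fun n => lintegral_mono fun z => ENNReal.coe_le_coe.mpr (h z))
    · intro f g
      have heq : ∀ n, ∫⁻ z, (((f + g) z : ℝ≥0) : ℝ≥0∞) ∂π n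
          = ∫⁻ z, (f z : ℝ≥0∞) ∂π n + ∫⁻ z, (g z : ℝ≥0∞) ∂π n := by
        intro n
        rw [← lintegral_add_left (PosLin.measurable_coe f)]
        refine lintegral_congr fun z => ?_
        simp [ENNReal.coe_add]
      have h1 : Tendsto (fun n => ∫⁻ z, (((f + g) z : ℝ≥0) : ℝ≥0∞) ∂π n) (𝒰 : Filter ℕ)
          (𝓝 (Lam f + Lam g)) := by
        simp_rw [heq]
        exact Tendsto.add (hLam f) (hLam g)
      exact tendsto_nhds_unique (hLam (f + g)) h1
    · intro a f
      have heq : ∀ n, ∫⁻ z, (((a • f) z : ℝ≥0) : ℝ≥0∞) ∂π n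
          = (a : ℝ≥0∞) * ∫⁻ z, (f z : ℝ≥0∞) ∂π n := by
        intro n
        rw [← lintegral_const_mul _ (PosLin.measurable_coe f)]
        refine lintegral_congr fun z => ?_
        show (((a • f) z : ℝ≥0) : ℝ≥0∞) = (a : ℝ≥0∞) * (f z : ℝ≥0∞)
        rw [ContinuousMap.smul_apply, smul_eq_mul, ENNReal.coe_mul]
      have h1 : Tendsto (fun n => ∫⁻ z, (((a • f) z : ℝ≥0) : ℝ≥0∞) ∂π n) (𝒰 : Filter ℕ)
          (𝓝 ((a : ℝ≥0∞) * Lam f)) := by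
        simp_rw [heq]
        exact ENNReal.Tendsto.const_mul (hLam f) (Or.inr ENNReal.coe_ne_top)
      exact tendsto_nhds_unique (hLam (a • f)) h1
    · have heq : ∀ n, ∫⁻ z, (((1 : C(Z, ℝ≥0)) z : ℝ≥0) : ℝ≥0∞) ∂π n = 1 := by
        intro n
        haveI := hπ n
        simp
      have h1 : Tendsto (fun n => ∫⁻ z, (((1 : C(Z, ℝ≥0)) z : ℝ≥0) : ℝ≥0∞) ∂π n)
          (𝒰 : Filter ℕ) (𝓝 1) := by
        simp_rw [heq]
        exact tendsto_const_nhds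
      exact tendsto_nhds_unique (hLam 1) h1
  obtain ⟨D, hDL⟩ := hD
  refine ⟨D.measure, D.isProbabilityMeasure, fun f => ?_⟩
  rw [D.lintegral_eq f, hDL]
  exact hLam f

end SOTAux



namespace SOTAux

lemma cm_exists_bound {Z : Type*} [TopologicalSpace Z] [CompactSpace Z] (f : C(Z, ℝ≥0)) :
    ∃ M : ℝ≥0, ∀ x, f x ≤ M := by
  obtain ⟨M, hM⟩ := (isCompact_range f.continuous).bddAbove
  exact ⟨M, fun x => hM ⟨x, rfl⟩⟩

lemma cm_measurable_coe {Z : Type*} [TopologicalSpace Z] [MeasurableSpace Z] [BorelSpace Z]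
    (f : C(Z, ℝ≥0)) : Measurable fun z => (f z : ℝ≥0∞) :=
  measurable_coe_nnreal_ennreal.comp f.continuous.measurable

/-- If `∫⁻ f dα ≤ ∫⁻ f dβ` for all continuous test functions then `α ≤ β`,
for Borel measures on a metric space with `β` outer regular. -/
lemma measure_le_of_forall_lintegral_le {Y : Type*} [MetricSpace Y] [MeasurableSpace Y]
    [BorelSpace Y] (α β : Measure Y) [β.OuterRegular]
    (h : ∀ f : C(Y, ℝ≥0), ∫⁻ y, (f y : ℝ≥0∞) ∂α ≤ ∫⁻ y, (f y : ℝ≥0∞) ∂β) : α ≤ β := by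
  have hopen : ∀ U : Set Y, IsOpen U → α U ≤ β U := by
    intro U hU
    by_cases hUc : Uᶜ = ∅
    · have hUuniv : U = Set.univ := by
        rw [← compl_empty_iff, hUc]
      have h1 := h 1
      simp only [ContinuousMap.one_apply, ENNReal.coe_one, lintegral_one] at h1
      rw [hUuniv]; exact h1
    · have hUcne : Uᶜ.Nonempty := Set.nonempty_iff_ne_empty.mpr hUc
      set fm : ℕ → C(Y, ℝ≥0) := fun m =>
        ⟨fun y => Real.toNNReal (min ((m : ℝ) * Metric.infDist y Uᶜ) 1),
          continuous_real_toNNReal.comp (Continuous.min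
            (continuous_const.mul (Metric.continuous_infDist_pt Uᶜ)) continuous_const)⟩ with hfm
      have hfm_le_one : ∀ m y, fm m y ≤ 1 := by
        intro m y
        simp only [hfm, ContinuousMap.coe_mk]
        exact Real.toNNReal_le_one.mpr (min_le_right _ _)
      have hfm_zero : ∀ m y, y ∉ U → fm m y = 0 := by
        intro m y hy
        simp only [hfm, ContinuousMap.coe_mk]
        rw [Metric.infDist_zero_of_mem (by simpa using hy)]
        simp
      have hfm_mono : ∀ y, Monotone fun m : ℕ => ((fm m y : ℝ≥0) : ℝ≥0∞) := by
        intro y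
        intro m m' hmm'
        simp only [hfm, ContinuousMap.coe_mk, ENNReal.coe_le_coe]
        refine Real.toNNReal_mono (min_le_min ?_ le_rfl)
        exact mul_le_mul_of_nonneg_right (by exact_mod_cast hmm') Metric.infDist_nonneg
      have hfm_sup : ∀ y, ⨆ m : ℕ, ((fm m y : ℝ≥0) : ℝ≥0∞) = Set.indicator U (fun _ => 1) y := by
        intro y
        by_cases hy : y ∈ U
        · rw [Set.indicator_of_mem hy]
          have hd : 0 < Metric.infDist y Uᶜ := by
            rw [← hU.isClosed_compl.notMem_iff_infDist_pos hUcne]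
            simpa using hy
          obtain ⟨m, hm⟩ := exists_nat_gt (1 / Metric.infDist y Uᶜ)
          have hfm1 : fm m y = 1 := by
            simp only [hfm, ContinuousMap.coe_mk]
            have : (1 : ℝ) ≤ (m : ℝ) * Metric.infDist y Uᶜ := by
              rw [div_lt_iff₀ hd] at hm
              linarith
            rw [min_eq_right this]
            simp
          apply le_antisymm
          · refine iSup_le fun k => ?_
            exact_mod_cast ENNReal.coe_le_coe.mpr (hfm_le_one k y)
          · refine le_trans ?_ (le_iSup _ m)
            rw [hfm1]
            exact_mod_cast le_rfl
        · rw [Set.indicator_of_notMem hy]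
          refine le_antisymm (iSup_le fun m => ?_) zero_le
          rw [hfm_zero m y hy]
          simp
      have hαU : α U = ⨆ m : ℕ, ∫⁻ y, ((fm m y : ℝ≥0) : ℝ≥0∞) ∂α := by
        rw [← lintegral_iSup (fun m => cm_measurable_coe (fm m)) (fun m m' hmm' y => hfm_mono y hmm')]
        rw [lintegral_congr hfm_sup, lintegral_indicator hU.measurableSet, setLIntegral_const,
          one_mul]
      have hbU : ∀ m, ∫⁻ y, ((fm m y : ℝ≥0) : ℝ≥0∞) ∂β ≤ β U := by
        intro m
        have hpt : ∀ y, ((fm m y : ℝ≥0) : ℝ≥0∞) ≤ Set.indicator U (fun _ => 1) y := by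
          intro y
          by_cases hy : y ∈ U
          · rw [Set.indicator_of_mem hy]
            exact_mod_cast ENNReal.coe_le_coe.mpr (hfm_le_one m y)
          · rw [Set.indicator_of_notMem hy, hfm_zero m y hy]
            simp
        calc ∫⁻ y, ((fm m y : ℝ≥0) : ℝ≥0∞) ∂β
            ≤ ∫⁻ y, Set.indicator U (fun _ => 1) y ∂β := lintegral_mono hpt
        _ = β U := by rw [lintegral_indicator hU.measurableSet, setLIntegral_const, one_mul]
      rw [hαU]
      exact iSup_le fun m => (h (fm m)).trans (hbU m)
  apply Measure.le_intro
  intro s hs _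
  rw [Set.measure_eq_iInf_isOpen s β]
  refine le_iInf fun U => le_iInf fun hsU => le_iInf fun hUopen => ?_
  exact (measure_mono hsU).trans (hopen U hUopen)

section Marginals

variable {X Y : Type*} [MeasurableSpace X] [MeasurableSpace Y]

lemma lintegral_map_snd_withDensity (Q : Measure (X × Y)) {g : X → ℝ≥0∞} (hg : Measurable g)
    {f : Y → ℝ≥0∞} (hf : Measurable f) :
    ∫⁻ y, f y ∂(Measure.map Prod.snd (Q.withDensity (fun p => g p.1)))
      = ∫⁻ p, g p.1 * f p.2 ∂Q := by
  rw [lintegral_map hf measurable_snd,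
    lintegral_withDensity_eq_lintegral_mul _
      (show Measurable fun p : X × Y => g p.1 from hg.comp measurable_fst)
      (show Measurable fun p : X × Y => f p.2 from hf.comp measurable_snd)]
  rfl

lemma map_snd_withDensity_compProd_apply (η : Measure X) [SFinite η] (κ : Kernel X Y)
    [IsSFiniteKernel κ] {g : X → ℝ≥0∞} (hg : Measurable g) {B : Set Y} (hB : MeasurableSet B) :
    (Measure.map Prod.snd ((η.compProd κ).withDensity (fun p => g p.1))) B
      = ∫⁻ x, g x * κ x B ∂η := by
  rw [Measure.map_apply measurable_snd hB, withDensity_apply _ (measurable_snd hB),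
    ← lintegral_indicator (measurable_snd hB),
    Measure.lintegral_compProd
      (show Measurable fun p : X × Y => Set.indicator (Prod.snd ⁻¹' B) (fun p : X × Y => g p.1) p
        from ((hg.comp measurable_fst).indicator (measurable_snd hB)))]
  refine lintegral_congr fun x => ?_
  have hpt : ∀ y, Set.indicator (Prod.snd ⁻¹' B) (fun p : X × Y => g p.1) (x, y)
      = Set.indicator B (fun _ => g x) y := by
    intro y
    by_cases hy : y ∈ B
    · rw [Set.indicator_of_mem hy, Set.indicator_of_mem (by simpa using hy)]
    · rw [Set.indicator_of_notMem hy, Set.indicator_of_notMem (by simpa using hy)]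
  rw [lintegral_congr hpt, lintegral_indicator_const hB]

end Marginals

/-- Conversion of weak convergence (Bochner integrals of a nonneg continuous function)
to convergence of lower integrals, on a compact space. -/
lemma tendsto_lintegral_of_weak {Y : Type*} [MetricSpace Y] [CompactSpace Y]
    [MeasurableSpace Y] [BorelSpace Y] (mseq : ℕ → Measure Y) (m : Measure Y)
    [IsFiniteMeasure m] (hfin : ∀ n, IsFiniteMeasure (mseq n)) (f : C(Y, ℝ≥0))
    (hconv : Tendsto (fun n => ∫ y, ((f y : ℝ)) ∂mseq n) atTop (𝓝 (∫ y, ((f y : ℝ)) ∂m))) :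
    Tendsto (fun n => ∫⁻ y, (f y : ℝ≥0∞) ∂mseq n) atTop (𝓝 (∫⁻ y, (f y : ℝ≥0∞) ∂m)) := by
  obtain ⟨M, hM⟩ := cm_exists_bound f
  have hfin' : ∀ q : Measure Y, IsFiniteMeasure q → ∫⁻ y, (f y : ℝ≥0∞) ∂q ≠ ⊤ := by
    intro q hq
    have hle : ∫⁻ y, (f y : ℝ≥0∞) ∂q ≤ (M : ℝ≥0∞) * q Set.univ := by
      calc ∫⁻ y, (f y : ℝ≥0∞) ∂q ≤ ∫⁻ _, (M : ℝ≥0∞) ∂q :=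
            lintegral_mono fun y => ENNReal.coe_le_coe.mpr (hM y)
      _ = (M : ℝ≥0∞) * q Set.univ := lintegral_const _
    exact (hle.trans_lt (ENNReal.mul_lt_top ENNReal.coe_lt_top hq.measure_univ_lt_top)).ne
  have hint : ∀ (q : Measure Y), IsFiniteMeasure q →
      ∫ y, ((f y : ℝ)) ∂q = (∫⁻ y, (f y : ℝ≥0∞) ∂q).toReal := by
    intro q hq
    rw [integral_eq_lintegral_of_nonneg_ae (Eventually.of_forall fun y => (f y).coe_nonneg)
      (Continuous.aestronglyMeasurable (by fun_prop))]
    congr 1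
    exact lintegral_congr fun y => ENNReal.ofReal_coe_nnreal
  have h2 : Tendsto (fun n => (∫⁻ y, (f y : ℝ≥0∞) ∂mseq n).toReal) atTop
      (𝓝 ((∫⁻ y, (f y : ℝ≥0∞) ∂m).toReal)) := by
    have e1 : (fun n => (∫⁻ y, (f y : ℝ≥0∞) ∂mseq n).toReal)
        = fun n => ∫ y, ((f y : ℝ)) ∂mseq n := by
      funext n; rw [hint _ (hfin n)]
    rw [e1, ← hint _ ‹_›]
    exact hconv
  exact (ENNReal.tendsto_toReal_iff (fun n => hfin' _ (hfin n)) (hfin' _ ‹_›)).mp h2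

end SOTAux
end

/-- Infimum of `∫ c dπ` over the simultaneous transport plans `π ∈ Π_η(μ,ν)`
(`+∞` if no transport plan exists). -/
def sotPlanInfCost {X Y : Type*} [MeasurableSpace X] [MeasurableSpace Y] {d : ℕ}
    (μ : Fin d → Measure X) (ν : Fin d → Measure Y)
    (c : X × Y → ℝ≥0∞) (η : Measure X) : ℝ≥0∞ :=
  sInf {r | ∃ κ : Kernel X Y, IsMarkovKernel κ ∧
    (∀ j, ∀ B : Set Y, MeasurableSet B → ν j B ≤ ∫⁻ x, κ x B ∂(μ j)) ∧
    r = ∫⁻ p, c p ∂(η.compProd κ)}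

/-- on compact spaces, with continuous densities `dμⱼ/dη` and continuous cost,
if `νⁿ ≤ ν` converges weakly to `ν`, then the infimum transport cost from `μ` to `νⁿ`
converges to the infimum transport cost from `μ` to `ν`. -/
theorem sot_cost_continuity
    {X Y : Type*} [MeasurableSpace X] [TopologicalSpace X] [PolishSpace X] [BorelSpace X]
    [CompactSpace X]
    [MeasurableSpace Y] [TopologicalSpace Y] [PolishSpace Y] [BorelSpace Y]
    [CompactSpace Y]
    {d : ℕ} (μ : Fin d → Measure X)
    (hμfin : ∀ j, IsFiniteMeasure (μ j)) (hμpos : ∀ j, 0 < μ j Set.univ)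
    (η : Measure X) [IsProbabilityMeasure η]
    (hη₁ : η ≪ avgMeasure μ) (hη₂ : avgMeasure μ ≪ η)
    (hdens : ∀ j, ∃ g : X → ℝ≥0∞, Continuous g ∧ (μ j).rnDeriv η =ᵐ[η] g)
    (c : X × Y → ℝ≥0) (hc : Continuous c)
    (ν : Fin d → Measure Y) (hνfin : ∀ j, IsFiniteMeasure (ν j))
    (νseq : ℕ → Fin d → Measure Y) (hνseqfin : ∀ n j, IsFiniteMeasure (νseq n j))
    (hle : ∀ n j, νseq n j ≤ ν j)
    (hweak : ∀ j, ∀ f : Y →ᵇ ℝ,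
      Tendsto (fun n => ∫ y, f y ∂(νseq n j)) atTop (nhds (∫ y, f y ∂(ν j)))) :
    Tendsto (fun n => sotPlanInfCost μ (νseq n) (fun p => (c p : ℝ≥0∞)) η) atTop
      (nhds (sotPlanInfCost μ ν (fun p => (c p : ℝ≥0∞)) η)) := by
  classical
  have hXne : Nonempty X := by
    by_contra h
    have huniv : (Set.univ : Set X) = ∅ := Set.univ_eq_empty_iff.mpr (not_nonempty_iff.mp h)
    have h1 : η Set.univ = 1 := measure_univ
    rw [huniv, measure_empty] at h1
    exact zero_ne_one h1
  by_cases hYne : Nonempty Y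
  swap
  · -- Y empty : no Markov kernels at all, both sides are `⊤`
    have hnoker : ∀ (ν' : Fin d → Measure Y),
        sotPlanInfCost μ ν' (fun p => (c p : ℝ≥0∞)) η = ⊤ := by
      intro ν'
      rw [sotPlanInfCost]
      refine (congrArg sInf (?_ : _ = (∅ : Set ℝ≥0∞))).trans sInf_empty
      rw [Set.eq_empty_iff_forall_notMem]
      rintro r ⟨κ, hκ, -, -⟩
      obtain ⟨x₀⟩ := hXne
      have h1 : (κ x₀) Set.univ = 1 := measure_univ
      have huniv : (Set.univ : Set Y) = ∅ := Set.univ_eq_empty_iff.mpr (not_nonempty_iff.mp hYne)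
      rw [huniv, measure_empty] at h1
      exact zero_ne_one h1
    simp only [hnoker]
    exact tendsto_const_nhds
  -- main case
  letI := upgradeIsCompletelyMetrizable X
  letI := upgradeIsCompletelyMetrizable Y
  set c' : X × Y → ℝ≥0∞ := fun p => (c p : ℝ≥0∞) with hc'
  -- absolute continuity of each μ j w.r.t. η
  have hμac : ∀ j, μ j ≪ η := by
    intro j
    refine Measure.AbsolutelyContinuous.trans (Measure.AbsolutelyContinuous.mk ?_) hη₂
    intro s hs h0
    rw [avgMeasure, Measure.smul_apply, smul_eq_mul] at h0
    have hTtop : (∑ i, μ i Set.univ) ≠ ⊤ := by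
      refine (ENNReal.sum_lt_top.mpr fun i _ => ?_).ne
      haveI := hμfin i
      exact measure_lt_top _ _
    rcases mul_eq_zero.mp h0 with h1 | h2
    · exact absurd (ENNReal.inv_eq_zero.mp h1) hTtop
    · have hsum : (∑ i, μ i) s = ∑ i, μ i s := by
        rw [Measure.coe_finset_sum, Finset.sum_apply]
      rw [hsum] at h2
      exact (Finset.sum_eq_zero_iff.mp h2) j (Finset.mem_univ j)
  have hgj : ∀ j, ∃ g : X → ℝ≥0∞, Continuous g ∧ μ j = η.withDensity g := by
    intro j
    obtain ⟨g, hgc, hgae⟩ := hdens j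
    refine ⟨g, hgc, ?_⟩
    haveI := hμfin j
    have h1 : η.withDensity ((μ j).rnDeriv η) = μ j :=
      Measure.withDensity_rnDeriv_eq (μ j) η (hμac j)
    rw [← h1]
    exact withDensity_congr_ae hgae
  choose g hgcont hgwd using hgj
  have hgmeas : ∀ j, Measurable (g j) := fun j => (hgcont j).measurable
  have hgint : ∀ j, ∫⁻ x, g j x ∂η ≠ ⊤ := by
    intro j
    haveI := hμfin j
    have h1 : ∫⁻ x, g j x ∂η = μ j Set.univ := by
      rw [hgwd j, withDensity_apply _ MeasurableSet.univ, setLIntegral_univ]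
    rw [h1]
    exact measure_ne_top _ _
  -- upper bound : F (νseq n) ≤ F ν
  have hFle : ∀ n, sotPlanInfCost μ (νseq n) c' η ≤ sotPlanInfCost μ ν c' η := by
    intro n
    apply sInf_le_sInf
    rintro r ⟨κ, hκ, hfeas, rfl⟩
    exact ⟨κ, hκ, fun j B hB => le_trans (Measure.le_iff.mp (hle n j) B hB) (hfeas j B hB), rfl⟩
  have hlimsup : limsup (fun n => sotPlanInfCost μ (νseq n) c' η) atTop
      ≤ sotPlanInfCost μ ν c' η :=
    limsup_le_of_le (by isBoundedDefault) (Filter.Eventually.of_forall hFle)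
  set L := liminf (fun n => sotPlanInfCost μ (νseq n) c' η) atTop with hLdef
  have hliminf : sotPlanInfCost μ ν c' η ≤ L := by
    rcases eq_top_or_lt_top L with hL | hL
    · rw [hL]; exact le_top
    have hfreq : ∀ k : ℕ, ∃ᶠ m in atTop,
        sotPlanInfCost μ (νseq m) c' η < L + ((k : ℝ≥0∞) + 1)⁻¹ := by
      intro k
      exact frequently_lt_of_liminf_lt (by isBoundedDefault)
        (ENNReal.lt_add_right hL.ne (by simp [ENNReal.inv_eq_zero]))
    obtain ⟨φ, hφmono, hφ⟩ := Filter.extraction_forall_of_frequently hfreq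
    have hker : ∀ k, ∃ κ : Kernel X Y, IsMarkovKernel κ ∧
        (∀ j, ∀ B : Set Y, MeasurableSet B → νseq (φ k) j B ≤ ∫⁻ x, κ x B ∂μ j) ∧
        ∫⁻ p, c' p ∂(η.compProd κ) < L + ((k : ℝ≥0∞) + 1)⁻¹ := by
      intro k
      obtain ⟨r, ⟨κ, hκ, hfeas, rfl⟩, hrlt⟩ := sInf_lt_iff.mp (hφ k)
      exact ⟨κ, hκ, hfeas, hrlt⟩
    choose κ hκM hκfeas hκcost using hker
    haveI : ∀ k, IsMarkovKernel (κ k) := hκM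
    set P : ℕ → Measure (X × Y) := fun k => η.compProd (κ k) with hP
    have hPprob : ∀ k, IsProbabilityMeasure (P k) := fun k => inferInstance
    set 𝒰 : Ultrafilter ℕ := Ultrafilter.of atTop with h𝒰
    have h𝒰le : (𝒰 : Filter ℕ) ≤ atTop := Ultrafilter.of_le _
    obtain ⟨Pinf, hPinfprob, hPinf⟩ := SOTAux.exists_limit_measure 𝒰 P hPprob
    haveI := hPinfprob
    -- first marginal of the limit is η
    have hfst : Pinf.fst = η := by
      have key : ∀ f : C(X, ℝ≥0),
          ∫⁻ x, (f x : ℝ≥0∞) ∂Pinf.fst = ∫⁻ x, (f x : ℝ≥0∞) ∂η := by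
        intro f
        set fc : C(X × Y, ℝ≥0) := f.comp ⟨Prod.fst, continuous_fst⟩ with hfc
        have hconst : ∀ k, ∫⁻ p, (fc p : ℝ≥0∞) ∂P k = ∫⁻ x, (f x : ℝ≥0∞) ∂η := by
          intro k
          rw [hP, Measure.lintegral_compProd (SOTAux.cm_measurable_coe fc)]
          refine lintegral_congr fun x => ?_
          have h6 : ∫⁻ y, ((fc (x, y) : ℝ≥0) : ℝ≥0∞) ∂(κ k x)
              = ∫⁻ _, ((f x : ℝ≥0) : ℝ≥0∞) ∂(κ k x) := rfl
          rw [h6, lintegral_const]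
          have : (κ k x) Set.univ = 1 := measure_univ
          rw [this, mul_one]
        have h1 := hPinf fc
        have h2 : Tendsto (fun k => ∫⁻ p, (fc p : ℝ≥0∞) ∂P k) (𝒰 : Filter ℕ)
            (nhds (∫⁻ x, (f x : ℝ≥0∞) ∂η)) := by
          have he : (fun k => ∫⁻ p, (fc p : ℝ≥0∞) ∂P k)
              = fun _ => ∫⁻ x, (f x : ℝ≥0∞) ∂η := funext hconst
          rw [he]
          exact tendsto_const_nhds
        have h3 : ∫⁻ p, (fc p : ℝ≥0∞) ∂Pinf = ∫⁻ x, (f x : ℝ≥0∞) ∂η :=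
          tendsto_nhds_unique h1 h2
        rw [Measure.fst, lintegral_map (SOTAux.cm_measurable_coe f) measurable_fst]
        exact h3
      refine le_antisymm ?_ ?_
      · exact SOTAux.measure_le_of_forall_lintegral_le _ _ (fun f => (key f).le)
      · exact SOTAux.measure_le_of_forall_lintegral_le _ _ (fun f => (key f).ge)
    haveI : Nonempty Y := hYne
    set kinf : Kernel X Y := Pinf.condKernel with hkinf
    have hdis : η.compProd kinf = Pinf := by
      rw [← hfst]
      exact Measure.disintegrate Pinf Pinf.condKernel
    haveI : IsMarkovKernel kinf := by rw [hkinf]; infer_instance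
    -- cost of the limit plan
    have hcostinf : ∫⁻ p, c' p ∂Pinf ≤ L := by
      set cC : C(X × Y, ℝ≥0) := ⟨c, hc⟩ with hcC
      have h1 := hPinf cC
      have hu : Tendsto (fun k : ℕ => L + ((k : ℝ≥0∞) + 1)⁻¹) atTop (nhds L) := by
        have h0 : Tendsto (fun k : ℕ => ((k : ℝ≥0∞) + 1)⁻¹) atTop (nhds 0) := by
          refine tendsto_of_tendsto_of_tendsto_of_le_of_le tendsto_const_nhds
            ENNReal.tendsto_inv_nat_nhds_zero (fun k => zero_le) (fun k => ?_)
          exact ENNReal.inv_le_inv' le_self_add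
        have := Tendsto.add (tendsto_const_nhds (x := L) (f := atTop)) h0
        simpa using this
      exact le_of_tendsto_of_tendsto' h1 (hu.mono_left h𝒰le) (fun k => (hκcost k).le)
    -- feasibility of the limit kernel
    have hfeasinf : ∀ j, ∀ B : Set Y, MeasurableSet B → ν j B ≤ ∫⁻ x, kinf x B ∂μ j := by
      intro j B hB
      haveI := hνfin j
      set T : Measure Y := Measure.map Prod.snd (Pinf.withDensity (fun p => g j p.1)) with hT
      have hTapp : ∀ B' : Set Y, MeasurableSet B' → T B' = ∫⁻ x, kinf x B' ∂μ j := by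
        intro B' hB'
        rw [hT, ← hdis, SOTAux.map_snd_withDensity_compProd_apply η kinf (hgmeas j) hB', hgwd j,
          lintegral_withDensity_eq_lintegral_mul _ (hgmeas j) (Kernel.measurable_coe _ hB')]
        rfl
      rw [← hTapp B hB]
      haveI hTfin : IsFiniteMeasure T := by
        constructor
        rw [hTapp Set.univ MeasurableSet.univ]
        have h1 : ∀ x, kinf x Set.univ = 1 := fun x => measure_univ
        simp only [h1, lintegral_one]
        haveI := hμfin j
        exact measure_lt_top _ _
      refine Measure.le_iff.mp ?_ B hB
      apply SOTAux.measure_le_of_forall_lintegral_le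
      intro f
      -- reduce RHS to an integral against Pinf
      have hTval : ∫⁻ y, (f y : ℝ≥0∞) ∂T = ∫⁻ p, g j p.1 * (f p.2 : ℝ≥0∞) ∂Pinf := by
        rw [hT]
        exact SOTAux.lintegral_map_snd_withDensity _ (hgmeas j) (SOTAux.cm_measurable_coe f)
      rw [hTval]
      -- prelimit feasibility in integral form
      have hTk : ∀ k, ∫⁻ y, (f y : ℝ≥0∞) ∂(νseq (φ k) j)
          ≤ ∫⁻ p, g j p.1 * (f p.2 : ℝ≥0∞) ∂P k := by
        intro k
        have hle' : νseq (φ k) j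
            ≤ Measure.map Prod.snd ((P k).withDensity (fun p => g j p.1)) := by
          apply Measure.le_intro
          intro s hs _
          rw [hP, SOTAux.map_snd_withDensity_compProd_apply η (κ k) (hgmeas j) hs]
          have h2 := hκfeas k j s hs
          rwa [hgwd j,
            lintegral_withDensity_eq_lintegral_mul _ (hgmeas j) (Kernel.measurable_coe _ hs)]
            at h2
        calc ∫⁻ y, (f y : ℝ≥0∞) ∂(νseq (φ k) j)
            ≤ ∫⁻ y, (f y : ℝ≥0∞)
                ∂(Measure.map Prod.snd ((P k).withDensity (fun p => g j p.1))) :=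
              lintegral_mono' hle' le_rfl
        _ = ∫⁻ p, g j p.1 * (f p.2 : ℝ≥0∞) ∂P k :=
              SOTAux.lintegral_map_snd_withDensity _ (hgmeas j) (SOTAux.cm_measurable_coe f)
      -- weak convergence of the left-hand side
      have hA : Tendsto (fun k => ∫⁻ y, (f y : ℝ≥0∞) ∂(νseq (φ k) j)) (𝒰 : Filter ℕ)
          (nhds (∫⁻ y, (f y : ℝ≥0∞) ∂ν j)) := by
        have h0 : Tendsto (fun n => ∫⁻ y, (f y : ℝ≥0∞) ∂(νseq n j)) atTop
            (nhds (∫⁻ y, (f y : ℝ≥0∞) ∂ν j)) := by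
          refine SOTAux.tendsto_lintegral_of_weak _ _ (fun n => hνseqfin n j) f ?_
          exact hweak j (BoundedContinuousFunction.mkOfCompact
            ⟨fun y => ((f y : ℝ)), by fun_prop⟩)
        exact (h0.comp hφmono.tendsto_atTop).mono_left h𝒰le
      obtain ⟨Mf, hMf⟩ := SOTAux.cm_exists_bound f
      -- truncation estimate, uniform in k
      have hM : ∀ M : ℕ, ∫⁻ y, (f y : ℝ≥0∞) ∂ν j
          ≤ (∫⁻ p, g j p.1 * (f p.2 : ℝ≥0∞) ∂Pinf)
            + (Mf : ℝ≥0∞) * ∫⁻ x, (g j x - min (g j x) (M : ℝ≥0∞)) ∂η := by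
        intro M
        have hminne : ∀ x, min (g j x) (M : ℝ≥0∞) ≠ ⊤ :=
          fun x => ((min_le_right _ _).trans_lt (ENNReal.natCast_lt_top M)).ne
        set hMfun : C(X × Y, ℝ≥0) := ⟨fun p => (min (g j p.1) (M : ℝ≥0∞)).toNNReal * f p.2, by
          refine Continuous.mul ?_ (by fun_prop)
          refine ENNReal.continuousOn_toNNReal.comp_continuous ?_ ?_
          · exact Continuous.min ((hgcont j).comp continuous_fst) continuous_const
          · intro p
            simp only [Set.mem_setOf_eq]
            exact hminne p.1⟩ with hMfdef
        have hcoe : ∀ p : X × Y,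
            ((hMfun p : ℝ≥0) : ℝ≥0∞) = min (g j p.1) (M : ℝ≥0∞) * (f p.2 : ℝ≥0∞) := by
          intro p
          rw [hMfdef]
          simp only [ContinuousMap.coe_mk]
          rw [ENNReal.coe_mul, ENNReal.coe_toNNReal (hminne p.1)]
        set eM : ℝ≥0∞ := ∫⁻ x, (g j x - min (g j x) (M : ℝ≥0∞)) ∂η with heM
        have hconvM := hPinf hMfun
        have hk : ∀ k, ∫⁻ y, (f y : ℝ≥0∞) ∂(νseq (φ k) j)
            ≤ (∫⁻ p, (hMfun p : ℝ≥0∞) ∂P k) + (Mf : ℝ≥0∞) * eM := by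
          intro k
          refine (hTk k).trans ?_
          have hpt : ∀ p : X × Y, g j p.1 * (f p.2 : ℝ≥0∞)
              ≤ (hMfun p : ℝ≥0∞) + (g j p.1 - min (g j p.1) (M : ℝ≥0∞)) * (Mf : ℝ≥0∞) := by
            intro p
            rw [hcoe p]
            calc g j p.1 * (f p.2 : ℝ≥0∞)
                ≤ (min (g j p.1) (M : ℝ≥0∞) + (g j p.1 - min (g j p.1) (M : ℝ≥0∞)))
                    * (f p.2 : ℝ≥0∞) := mul_le_mul_left le_add_tsub _
            _ = min (g j p.1) (M : ℝ≥0∞) * (f p.2 : ℝ≥0∞)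
                  + (g j p.1 - min (g j p.1) (M : ℝ≥0∞)) * (f p.2 : ℝ≥0∞) := add_mul _ _ _
            _ ≤ min (g j p.1) (M : ℝ≥0∞) * (f p.2 : ℝ≥0∞)
                  + (g j p.1 - min (g j p.1) (M : ℝ≥0∞)) * (Mf : ℝ≥0∞) := by
                refine add_le_add_right (mul_le_mul_right ?_ _) _
                exact_mod_cast ENNReal.coe_le_coe.mpr (hMf p.2)
          have hqmeas : Measurable fun x : X => g j x - min (g j x) (M : ℝ≥0∞) :=
            (hgmeas j).sub ((hgmeas j).min measurable_const)
          calc ∫⁻ p, g j p.1 * (f p.2 : ℝ≥0∞) ∂P k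
              ≤ ∫⁻ p, ((hMfun p : ℝ≥0∞)
                  + (g j p.1 - min (g j p.1) (M : ℝ≥0∞)) * (Mf : ℝ≥0∞)) ∂P k :=
                lintegral_mono hpt
          _ = (∫⁻ p, (hMfun p : ℝ≥0∞) ∂P k)
                + ∫⁻ p, (g j p.1 - min (g j p.1) (M : ℝ≥0∞)) * (Mf : ℝ≥0∞) ∂P k :=
              lintegral_add_left (SOTAux.cm_measurable_coe hMfun) _
          _ = (∫⁻ p, (hMfun p : ℝ≥0∞) ∂P k) + (Mf : ℝ≥0∞) * eM := by
              congr 1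
              rw [hP, Measure.lintegral_compProd
                (show Measurable fun p : X × Y =>
                    (g j p.1 - min (g j p.1) (M : ℝ≥0∞)) * (Mf : ℝ≥0∞) from
                  (hqmeas.comp measurable_fst).mul_const _)]
              have hin : ∀ x : X, ∫⁻ _ : Y, (g j x - min (g j x) (M : ℝ≥0∞)) * (Mf : ℝ≥0∞)
                  ∂(κ k x) = (g j x - min (g j x) (M : ℝ≥0∞)) * (Mf : ℝ≥0∞) := by
                intro x
                rw [lintegral_const]
                have : (κ k x) Set.univ = 1 := measure_univ
                rw [this, mul_one]
              rw [lintegral_congr hin, lintegral_mul_const _ hqmeas, heM, mul_comm]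
        have hlimrhs : Tendsto (fun k => (∫⁻ p, (hMfun p : ℝ≥0∞) ∂P k) + (Mf : ℝ≥0∞) * eM)
            (𝒰 : Filter ℕ) (nhds ((∫⁻ p, (hMfun p : ℝ≥0∞) ∂Pinf) + (Mf : ℝ≥0∞) * eM)) :=
          Tendsto.add hconvM tendsto_const_nhds
        have h5 : ∫⁻ y, (f y : ℝ≥0∞) ∂ν j
            ≤ (∫⁻ p, (hMfun p : ℝ≥0∞) ∂Pinf) + (Mf : ℝ≥0∞) * eM :=
          le_of_tendsto_of_tendsto' hA hlimrhs hk
        refine h5.trans (add_le_add_left (lintegral_mono fun p => ?_) _)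
        rw [hcoe p]
        exact mul_le_mul_left (min_le_left _ _) _
      -- error term tends to zero
      have hE : Tendsto (fun M : ℕ => ∫⁻ x, (g j x - min (g j x) (M : ℝ≥0∞)) ∂η) atTop
          (nhds 0) := by
        have h0 : (0 : ℝ≥0∞) = ∫⁻ _ : X, 0 ∂η := lintegral_zero.symm
        rw [h0]
        refine tendsto_lintegral_of_dominated_convergence (g j)
          (fun M => (hgmeas j).sub ((hgmeas j).min measurable_const))
          (fun M => Filter.Eventually.of_forall fun x => tsub_le_self) (hgint j) ?_
        filter_upwards [ae_lt_top (hgmeas j) (hgint j)] with x hx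
        obtain ⟨m, hm⟩ := ENNReal.exists_nat_gt hx.ne
        refine tendsto_atTop_of_eventually_const (i₀ := m) fun i hi => ?_
        have : min (g j x) (i : ℝ≥0∞) = g j x := by
          refine min_eq_left (hm.le.trans ?_)
          exact_mod_cast Nat.cast_le.mpr hi
        rw [this, tsub_self]
      have hlim : Tendsto (fun M : ℕ => (∫⁻ p, g j p.1 * (f p.2 : ℝ≥0∞) ∂Pinf)
          + (Mf : ℝ≥0∞) * ∫⁻ x, (g j x - min (g j x) (M : ℝ≥0∞)) ∂η) atTop
          (nhds (∫⁻ p, g j p.1 * (f p.2 : ℝ≥0∞) ∂Pinf)) := by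
        have h1 := ENNReal.Tendsto.const_mul hE (Or.inr (ENNReal.coe_ne_top (r := Mf)))
        rw [mul_zero] at h1
        have h2 := Tendsto.add
          (tendsto_const_nhds (x := ∫⁻ p, g j p.1 * (f p.2 : ℝ≥0∞) ∂Pinf) (f := atTop)) h1
        simpa using h2
      exact ge_of_tendsto hlim (Filter.Eventually.of_forall hM)
    -- conclusion
    calc sotPlanInfCost μ ν c' η ≤ ∫⁻ p, c' p ∂(η.compProd kinf) :=
          sInf_le ⟨kinf, inferInstance, hfeasinf, rfl⟩
    _ = ∫⁻ p, c' p ∂Pinf := by rw [hdis]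
    _ ≤ L := hcostinf
  exact tendsto_of_le_liminf_of_limsup_le hliminf hlimsup

end
end

section
/- Let μ = (μ₁,…,μ_d) be a jointly atomless d-tuple of Borel probability measures on a Polish space X, let B ⊆ X be a Borel set, and suppose (after reordering) that μⱼ(B) > 0 exactly for j = 1,…,m with m ≤ d. Then the m-tuple μ_B := (μ₁|_B / μ₁(B), …, μ_m|_B / μ_m(B)) of Borel probability measures on B is jointly atomless. -/
open MeasureTheory ProbabilityTheory ENNReal
open Set Filter

noncomputable section

/-- Vector of Radon–Nikodym derivatives of the tuple with respect to the normalized average. -/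
def densityVec {X : Type*} [MeasurableSpace X] {d : ℕ} (μ : Fin d → Measure X) (x : X) :
    Fin d → ℝ :=
  fun j => ((μ j).rnDeriv (avgMeasure μ) x).toReal

/-- `μ` is jointly atomless: there is a Borel function `ξ` whose law under the normalized
average `μ̄` is atomless and which is independent of the density vector under `μ̄`. -/
def JointlyAtomless {X : Type*} [MeasurableSpace X] {d : ℕ} (μ : Fin d → Measure X) : Prop :=
  ∃ ξ : X → ℝ, Measurable ξ ∧ (∀ r : ℝ, (avgMeasure μ).map ξ {r} = 0) ∧
    IndepFun ξ (densityVec μ) (avgMeasure μ)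

lemma level_set_meas (κ : Measure ℝ) [IsProbabilityMeasure κ]
    (hκ : ∀ r : ℝ, κ {r} = 0) (v : ℝ≥0∞) :
    κ {r | κ (Iic r) ≤ v} = min v 1 := by
  rcases le_or_gt 1 v with hv | hv
  · have h1 : {r : ℝ | κ (Iic r) ≤ v} = univ :=
      eq_univ_of_forall fun r => le_trans (le_trans (measure_mono (subset_univ _))
        measure_univ.le) hv
    rw [h1, measure_univ, min_eq_right hv]
  · rw [min_eq_left hv.le]
    set E := {r : ℝ | κ (Iic r) ≤ v} with hE
    have hlower : ∀ ⦃a b : ℝ⦄, a ≤ b → b ∈ E → a ∈ E := fun a b hab hb =>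
      le_trans (measure_mono (Iic_subset_Iic.mpr hab)) hb
    by_cases hne : E.Nonempty
    · -- bounded above
      have h1 : Tendsto (fun x : ℝ => κ (Iic x)) atTop (nhds 1) := by
        have := tendsto_measure_Iic_atTop (μ := κ)
        rwa [measure_univ] at this
      have h2 : ∀ᶠ x : ℝ in atTop, v < κ (Iic x) := h1.eventually (eventually_gt_nhds hv)
      obtain ⟨N, hN⟩ := eventually_atTop.mp h2
      have hbdd : BddAbove E := by
        refine ⟨N, fun r hr => ?_⟩
        by_contra hcon
        exact absurd hr (not_le.mpr (hN r (le_of_not_ge hcon)))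
      set s := sSup E with hs
      have hub : ∀ r ∈ E, r ≤ s := fun r hr => le_csSup hbdd hr
      have hIio : κ (Iio s) ≤ v := by
        have hun : Iio s = ⋃ n : ℕ, Iic (s - ((n:ℝ) + 1)⁻¹) := by
          ext x
          simp only [mem_Iio, mem_iUnion, mem_Iic]
          constructor
          · intro hx
            obtain ⟨n, hn⟩ := exists_nat_one_div_lt (sub_pos.mpr hx)
            exact ⟨n, by rw [one_div] at hn; linarith⟩
          · rintro ⟨n, hn⟩
            have : (0:ℝ) < ((n:ℝ) + 1)⁻¹ := by positivity
            linarith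
        rw [hun, Monotone.measure_iUnion]
        · refine iSup_le fun n => ?_
          have hlt : s - ((n:ℝ) + 1)⁻¹ < s := by
            have : (0:ℝ) < ((n:ℝ) + 1)⁻¹ := by positivity
            linarith
          obtain ⟨b, hbE, hlb⟩ := exists_lt_of_lt_csSup hne hlt
          exact hlower hlb.le hbE
        · intro a b hab
          refine Iic_subset_Iic.mpr (by
            have hc : (a:ℝ) ≤ (b:ℝ) := Nat.cast_le.mpr hab
            have : ((b:ℝ) + 1)⁻¹ ≤ ((a:ℝ) + 1)⁻¹ := inv_anti₀ (by positivity) (by linarith)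
            linarith)
      have hsE : s ∈ E := by
        have : κ (Iic s) ≤ κ (Iio s) + κ {s} := by
          rw [← measure_union (by simp) (measurableSet_singleton s)]
          exact measure_mono (fun x hx => by
            rcases lt_or_eq_of_le (mem_Iic.mp hx) with h | h
            · exact Or.inl h
            · exact Or.inr (by simp [h]))
        rw [hκ s, add_zero] at this
        exact le_trans this hIio
      have hEeq : E = Iic s := by
        refine subset_antisymm (fun r hr => hub r hr) (fun r hr => hlower hr hsE)
      have hge : v ≤ κ (Iic s) := by
        have key : ∀ n : ℕ, v < κ (Iic (s + ((n:ℝ) + 1)⁻¹)) := by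
          intro n
          by_contra hcon
          have hmem : s + ((n:ℝ) + 1)⁻¹ ∈ E := not_lt.mp hcon
          have := hub _ hmem
          have hpos : (0:ℝ) < ((n:ℝ) + 1)⁻¹ := by positivity
          linarith
        have hint : Iic s = ⋂ n : ℕ, Iic (s + ((n:ℝ) + 1)⁻¹) := by
          ext x
          simp only [mem_Iic, mem_iInter]
          constructor
          · intro hx n
            have : (0:ℝ) < ((n:ℝ) + 1)⁻¹ := by positivity
            linarith
          · intro hx
            by_contra hcon
            obtain ⟨n, hn⟩ := exists_nat_one_div_lt (sub_pos.mpr (not_le.mp hcon))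
            rw [one_div] at hn
            have := hx n
            linarith
        rw [hint, Antitone.measure_iInter]
        · exact le_iInf fun n => (key n).le
        · intro a b hab
          refine Iic_subset_Iic.mpr (by
            have hc : (a:ℝ) ≤ (b:ℝ) := Nat.cast_le.mpr hab
            have : ((b:ℝ) + 1)⁻¹ ≤ ((a:ℝ) + 1)⁻¹ := inv_anti₀ (by positivity) (by linarith)
            linarith)
        · exact fun n => measurableSet_Iic.nullMeasurableSet
        · exact ⟨0, measure_ne_top κ _⟩
      rw [hEeq]
      exact le_antisymm hsE hge
    · -- E empty : then v = 0
      rw [not_nonempty_iff_eq_empty] at hne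
      rw [hne, measure_empty]
      by_contra hv0
      have hvpos : 0 < v := pos_iff_ne_zero.mpr fun h => hv0 h.symm
      have hint : (⋂ n : ℕ, Iic (-(n:ℝ))) = (∅ : Set ℝ) := by
        ext x
        simp only [mem_iInter, mem_Iic, mem_empty_iff_false, iff_false, not_forall]
        obtain ⟨n, hn⟩ := exists_nat_gt (-x)
        exact ⟨n, by push_neg; linarith⟩
      have h0 : (⨅ n : ℕ, κ (Iic (-(n:ℝ)))) = 0 := by
        rw [← Antitone.measure_iInter]
        · rw [hint, measure_empty]
        · intro a b hab
          exact Iic_subset_Iic.mpr (by simp; exact_mod_cast hab)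
        · exact fun n => measurableSet_Iic.nullMeasurableSet
        · exact ⟨0, measure_ne_top κ _⟩
      have : ∃ n : ℕ, κ (Iic (-(n:ℝ))) < v := by
        by_contra hcon
        push_neg at hcon
        exact absurd (le_iInf hcon) (by rw [h0]; exact not_le.mpr hvpos)
      obtain ⟨n, hn⟩ := this
      have : (-(n:ℝ)) ∈ E := hn.le
      rw [hne] at this
      exact this

lemma level_set_meas_real (κ : Measure ℝ) [IsProbabilityMeasure κ]
    (hκ : ∀ r : ℝ, κ {r} = 0) (u : ℝ) :
    κ {r | (κ (Iic r)).toReal ≤ u} = ENNReal.ofReal (min u 1) := by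
  rcases lt_or_ge u 0 with hu | hu
  · have h1 : {r : ℝ | (κ (Iic r)).toReal ≤ u} = ∅ := by
      ext r
      simp only [mem_setOf_eq, mem_empty_iff_false, iff_false, not_le]
      exact lt_of_lt_of_le hu ENNReal.toReal_nonneg
    rw [h1, measure_empty, eq_comm, ENNReal.ofReal_eq_zero]
    exact le_trans (min_le_left _ _) hu.le
  · have hset : {r : ℝ | (κ (Iic r)).toReal ≤ u} = {r : ℝ | κ (Iic r) ≤ ENNReal.ofReal u} := by
      ext r
      exact (ENNReal.le_ofReal_iff_toReal_le (measure_ne_top κ _) hu).symm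
    rw [hset, level_set_meas κ hκ]
    rcases le_total u 1 with h1 | h1
    · rw [min_eq_left (by rwa [ENNReal.ofReal_le_one]), min_eq_left h1]
    · rw [min_eq_right (by rwa [ENNReal.one_le_ofReal]), min_eq_right h1, ENNReal.ofReal_one]

lemma comap_withDensity_eq {α β : Type*} [MeasurableSpace α] [MeasurableSpace β]
    {e : α → β} (he : MeasurableEmbedding e) (μ : Measure β) {f : β → ℝ≥0∞}
    (hf : Measurable f) :
    Measure.comap e (μ.withDensity f) = (Measure.comap e μ).withDensity fun x => f (e x) := by
  ext s hs
  rw [he.comap_apply, withDensity_apply _ (he.measurableSet_image' hs),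
    withDensity_apply _ hs]
  have h1 : ∀ x, s.indicator (fun x => f (e x)) x = (e '' s).indicator f (e x) := by
    intro x
    by_cases hx : x ∈ s
    · rw [indicator_of_mem hx, indicator_of_mem (mem_image_of_mem e hx)]
    · rw [indicator_of_notMem hx, indicator_of_notMem]
      intro hcon
      obtain ⟨y, hy, hye⟩ := hcon
      exact hx (he.injective hye ▸ hy)
  symm
  calc ∫⁻ x in s, f (e x) ∂(Measure.comap e μ)
      = ∫⁻ x, s.indicator (fun x => f (e x)) x ∂(Measure.comap e μ) := by
        rw [lintegral_indicator hs]
    _ = ∫⁻ x, (e '' s).indicator f (e x) ∂(Measure.comap e μ) := by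
        simp_rw [h1]
    _ = ∫⁻ y, (e '' s).indicator f y ∂((Measure.comap e μ).map e) := by
        rw [he.lintegral_map]
    _ = ∫⁻ y, (e '' s).indicator f y ∂(μ.restrict (range e)) := by
        rw [he.map_comap]
    _ = ∫⁻ y in e '' s, f y ∂(μ.restrict (range e)) := by
        rw [lintegral_indicator (he.measurableSet_image' hs)]
    _ = ∫⁻ y in e '' s, f y ∂μ := by
        rw [Measure.restrict_restrict (he.measurableSet_image' hs),
          inter_eq_self_of_subset_left (image_subset_range e s)]

lemma exists_indep_of_ac {α : Type*} [MeasurableSpace α] [StandardBorelSpace α]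
    (ρ : Measure (α × ℝ)) [IsProbabilityMeasure ρ]
    (ν₁ : Measure α) (ν₂ : Measure ℝ) [SFinite ν₁] [SFinite ν₂] [NullSingletonClass ν₂]
    (hac : ρ ≪ ν₁.prod ν₂) :
    ∃ f : α × ℝ → ℝ, Measurable f ∧ (∀ r : ℝ, ρ.map f {r} = 0) ∧
      IndepFun f Prod.fst ρ := by
  set κ := ρ.condKernel with hκ_def
  -- measurability of the joint conditional CDF
  have hφ : Measurable fun p : α × ℝ => κ p.1 (Iic p.2) := by
    have ht : MeasurableSet {q : (α × ℝ) × ℝ | q.2 ≤ q.1.2} :=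
      measurableSet_le measurable_snd measurable_fst.snd
    have := Kernel.measurable_kernel_prodMk_left
      (κ := κ.comap Prod.fst measurable_fst) ht
    simp [Kernel.comap_apply] at this; exact this
  have hψ : Measurable fun p : α × ℝ => κ p.1 {p.2} := by
    have ht : MeasurableSet {q : (α × ℝ) × ℝ | q.2 = q.1.2} :=
      measurableSet_eq_fun measurable_snd measurable_fst.snd
    have := Kernel.measurable_kernel_prodMk_left
      (κ := κ.comap Prod.fst measurable_fst) ht
    simpa [Kernel.comap_apply] using this
  set F : α × ℝ → ℝ := fun p => (κ p.1 (Iic p.2)).toReal with hF_def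
  have hFm : Measurable F := hφ.ennreal_toReal
  -- a.e. atomlessness of the conditional kernel
  have hS : MeasurableSet {p : α × ℝ | 0 < κ p.1 {p.2}} :=
    measurableSet_lt measurable_const hψ
  have hprod0 : (ν₁.prod ν₂) {p : α × ℝ | 0 < κ p.1 {p.2}} = 0 := by
    rw [Measure.prod_apply hS]
    have hz : ∀ a : α, ν₂ {r : ℝ | 0 < κ a {r}} = 0 := by
      intro a
      have hc : Set.Countable {r : ℝ | 0 < κ a {r}} := by
        have := Measure.countable_meas_pos_of_disjoint_iUnion (μ := κ a)
          (As := fun r : ℝ => {r}) (fun r => measurableSet_singleton r)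
          (fun i j hij => by simp [Function.onFun, hij])
        simpa using this
      exact hc.measure_zero ν₂
    simp [hz]
  have hρ0 : ρ {p : α × ℝ | 0 < κ p.1 {p.2}} = 0 := hac hprod0
  have hdis : ρ.fst ⊗ₘ κ = ρ := ρ.disintegrate ρ.condKernel
  rw [← hdis, Measure.compProd_apply hS] at hρ0
  have hae : ∀ᵐ a ∂ρ.fst, ∀ r : ℝ, κ a {r} = 0 := by
    have h0 : ∀ᵐ a ∂ρ.fst,
        κ a (Prod.mk a ⁻¹' {p : α × ℝ | 0 < κ p.1 {p.2}}) = 0 := by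
      have hmeas := Kernel.measurable_kernel_prodMk_left (κ := κ) hS
      exact (lintegral_eq_zero_iff hmeas).mp hρ0
    filter_upwards [h0] with a ha r
    by_contra hr
    have h1 : 0 < κ a {r} := pos_iff_ne_zero.mpr hr
    have h2 : κ a {r} ≤ κ a (Prod.mk a ⁻¹' {p : α × ℝ | 0 < κ p.1 {p.2}}) := by
      refine measure_mono fun y hy => ?_
      rcases hy with rfl
      exact h1
    rw [ha] at h2
    exact hr (le_antisymm h2 zero_le)
  -- main computation
  have hmain : ∀ (u : ℝ) {A : Set α}, MeasurableSet A →
      ρ {p : α × ℝ | p.1 ∈ A ∧ F p ≤ u} = ENNReal.ofReal (min u 1) * ρ.fst A := by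
    intro u A hA
    have hs : MeasurableSet {p : α × ℝ | p.1 ∈ A ∧ F p ≤ u} :=
      (measurable_fst hA).inter (hFm measurableSet_Iic)
    conv_lhs => rw [← hdis]
    rw [Measure.compProd_apply hs]
    have h1 : ∀ a, κ a (Prod.mk a ⁻¹' {p : α × ℝ | p.1 ∈ A ∧ F p ≤ u})
        = A.indicator (fun a => κ a {r : ℝ | F (a, r) ≤ u}) a := by
      intro a
      by_cases haA : a ∈ A
      · rw [indicator_of_mem haA]
        congr 1
        ext r
        simp [haA]
      · rw [indicator_of_notMem haA]
        convert measure_empty (μ := κ a)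
        ext r
        simp [haA]
    simp_rw [h1]
    rw [lintegral_indicator hA]
    have h2 : ∀ᵐ a ∂ρ.fst, (fun a => κ a {r : ℝ | F (a, r) ≤ u}) a
        = ENNReal.ofReal (min u 1) := by
      filter_upwards [hae] with a ha
      exact level_set_meas_real (κ a) ha u
    rw [lintegral_congr_ae (ae_restrict_of_ae h2), setLIntegral_const]
  have hL : ∀ u : ℝ, ρ {p : α × ℝ | F p ≤ u} = ENNReal.ofReal (min u 1) := by
    intro u
    have := hmain u MeasurableSet.univ
    rw [Measure.fst_univ, measure_univ, mul_one] at this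
    simpa using this
  -- singletons have measure zero
  have hmap : ∀ r : ℝ, ρ.map F {r} = 0 := by
    intro r
    rw [Measure.map_apply hFm (measurableSet_singleton r)]
    have key : ∀ n : ℕ, ρ (F ⁻¹' {r}) ≤
        ENNReal.ofReal (min r 1) - ENNReal.ofReal (min (r - ((n:ℝ) + 1)⁻¹) 1) := by
      intro n
      have hpos : (0:ℝ) < ((n:ℝ) + 1)⁻¹ := by positivity
      have hsub : F ⁻¹' {r} ⊆
          {p : α × ℝ | F p ≤ r} \ {p : α × ℝ | F p ≤ r - ((n:ℝ) + 1)⁻¹} := by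
        intro p hp
        rcases hp with hp
        have hFp : F p = r := hp
        constructor
        · exact le_of_eq hFp
        · intro hcon
          rw [mem_setOf_eq, hFp] at hcon
          linarith
      refine le_trans (measure_mono hsub) ?_
      have hrr : r - ((n:ℝ) + 1)⁻¹ ≤ r := by linarith
      have hss : {p : α × ℝ | F p ≤ r - ((n:ℝ) + 1)⁻¹} ⊆ {p : α × ℝ | F p ≤ r} :=
        fun p hp => le_trans hp hrr
      have hns : NullMeasurableSet {p : α × ℝ | F p ≤ r - ((n:ℝ) + 1)⁻¹} ρ :=
        (hFm measurableSet_Iic).nullMeasurableSet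
      rw [measure_diff hss hns (measure_ne_top ρ _)]
      rw [hL r, hL (r - ((n:ℝ) + 1)⁻¹)]
    have hten :
        Tendsto (fun n : ℕ => ENNReal.ofReal (min r 1)
          - ENNReal.ofReal (min (r - ((n:ℝ) + 1)⁻¹) 1)) atTop (nhds 0) := by
      have h1 : Tendsto (fun n : ℕ => r - ((n:ℝ) + 1)⁻¹) atTop (nhds r) := by
        have h2 : Tendsto (fun n : ℕ => ((n:ℝ) + 1)⁻¹) atTop (nhds 0) := by
          exact tendsto_one_div_add_atTop_nhds_zero_nat.congr fun n => one_div _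
        simpa using tendsto_const_nhds.sub h2
      have h3 : Continuous fun x : ℝ =>
          ENNReal.ofReal (min r 1) - ENNReal.ofReal (min x 1) :=
        (ENNReal.continuous_sub_left (by simp)).comp
          (ENNReal.continuous_ofReal.comp ((continuous_id.min continuous_const)))
      have h4 := (h3.tendsto r).comp h1
      rw [tsub_self] at h4; exact h4
    have := ge_of_tendsto hten (Eventually.of_forall key)
    exact le_antisymm this zero_le
  -- independence
  have hall : ∀ {A : Set α}, MeasurableSet A → ∀ {s : Set ℝ}, MeasurableSet s →
      ρ (F ⁻¹' s ∩ Prod.fst ⁻¹' A) = ρ (F ⁻¹' s) * ρ (Prod.fst ⁻¹' A) := by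
    intro A hA
    have hext : (ρ.restrict (Prod.fst ⁻¹' A)).map F = (ρ.fst A) • ρ.map F := by
      refine ext_of_generate_finite (Set.range Iic)
        (BorelSpace.measurable_eq.trans (borel_eq_generateFrom_Iic ℝ)) ?_ ?_ ?_
      · rintro _ ⟨u, rfl⟩ _ ⟨v, rfl⟩ _
        exact ⟨min u v, by rw [Iic_inter_Iic]⟩
      · rintro _ ⟨u, rfl⟩
        rw [Measure.map_apply hFm measurableSet_Iic,
          Measure.restrict_apply (hFm measurableSet_Iic), Measure.smul_apply,
          Measure.map_apply hFm measurableSet_Iic, smul_eq_mul]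
        have e1 : F ⁻¹' Iic u ∩ Prod.fst ⁻¹' A = {p : α × ℝ | p.1 ∈ A ∧ F p ≤ u} := by
          ext p
          simp [and_comm]
        have e2 : F ⁻¹' Iic u = {p : α × ℝ | F p ≤ u} := rfl
        rw [e1, e2, hmain u hA, hL u, mul_comm]
      · rw [Measure.map_apply hFm MeasurableSet.univ, preimage_univ,
          Measure.restrict_apply MeasurableSet.univ, univ_inter, Measure.smul_apply,
          Measure.map_apply hFm MeasurableSet.univ, preimage_univ, measure_univ,
          smul_eq_mul, mul_one, Measure.fst_apply hA]
    intro s hs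
    have h1 := congrArg (fun ν : Measure ℝ => ν s) hext
    rw [Measure.map_apply hFm hs, Measure.restrict_apply (hFm hs), Measure.smul_apply,
      Measure.map_apply hFm hs, smul_eq_mul, Measure.fst_apply hA] at h1
    rw [h1, mul_comm]
  have hind : IndepFun F Prod.fst ρ := by
    rw [indepFun_iff_measure_inter_preimage_eq_mul]
    intro s t hs ht
    exact hall ht hs
  exact ⟨F, hFm, hmap, hind⟩

/-- the normalized restriction to a Borel set `B` (keeping the components of
positive mass on `B`) of a jointly atomless tuple of probability measures is again
jointly atomless, as a tuple of probability measures on `B`. -/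
theorem jointlyAtomless_restrict
    {X : Type*} [MeasurableSpace X] [TopologicalSpace X] [PolishSpace X] [BorelSpace X]
    {d : ℕ} (μ : Fin d → Measure X) (hμ : ∀ j, IsProbabilityMeasure (μ j))
    (hja : JointlyAtomless μ)
    (B : Set X) (hB : MeasurableSet B)
    (m : ℕ) (hm : m ≤ d) (horder : ∀ j : Fin d, 0 < μ j B ↔ (j : ℕ) < m) :
    JointlyAtomless (fun j : Fin m =>
      (μ (Fin.castLE hm j) B)⁻¹ •
        Measure.comap (Subtype.val : B → X) (μ (Fin.castLE hm j))) := by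
  rcases Nat.eq_zero_or_pos m with hm0 | hmpos
  · subst hm0
    have havg : avgMeasure (fun j : Fin 0 =>
        (μ (Fin.castLE hm j) B)⁻¹ •
          Measure.comap (Subtype.val : B → X) (μ (Fin.castLE hm j))) = 0 := by
      simp [avgMeasure]
    refine ⟨fun _ => 0, measurable_const, ?_, ?_⟩
    · intro r
      rw [havg, Measure.map_zero]
      rfl
    · rw [indepFun_iff_measure_inter_preimage_eq_mul]
      intro s t _ _
      rw [havg]
      simp
  -- main case
  obtain ⟨ξ, hξm, hξatom, hξind⟩ := hja
  have hd : (0:ℕ) < d := lt_of_lt_of_le hmpos hm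
  set e : B → X := Subtype.val with he_def
  have he : MeasurableEmbedding e := MeasurableEmbedding.subtype_coe hB
  set P := avgMeasure μ with hP_def
  have hPapp : ∀ s : Set X, P s = (d : ℝ≥0∞)⁻¹ * ∑ j, μ j s := by
    intro s
    rw [hP_def]
    simp only [avgMeasure, Measure.smul_apply, Measure.finset_sum_apply, smul_eq_mul,
      measure_univ, Finset.sum_const, Finset.card_univ, Fintype.card_fin, nsmul_eq_mul,
      mul_one]
  haveI hPprob : IsProbabilityMeasure P := by
    constructor
    rw [hPapp]
    simp only [measure_univ, Finset.sum_const, Finset.card_univ, Fintype.card_fin,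
      nsmul_eq_mul, mul_one]
    exact ENNReal.inv_mul_cancel (Nat.cast_ne_zero.mpr hd.ne') (ENNReal.natCast_ne_top d)
  set ν : Fin m → Measure B := fun j : Fin m =>
    (μ (Fin.castLE hm j) B)⁻¹ •
      Measure.comap (Subtype.val : B → X) (μ (Fin.castLE hm j)) with hν
  set Q := avgMeasure ν with hQ_def
  have hμB_pos : ∀ j : Fin m, 0 < μ (Fin.castLE hm j) B := fun j =>
    (horder _).mpr (by simpa using j.isLt)
  have hμB_ne_top : ∀ j : Fin m, μ (Fin.castLE hm j) B ≠ ∞ := fun j => measure_ne_top _ _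
  have hcomap_univ : ∀ j : Fin m,
      Measure.comap e (μ (Fin.castLE hm j)) Set.univ = μ (Fin.castLE hm j) B := by
    intro j
    rw [he.comap_apply, Set.image_univ, Subtype.range_coe]
  have hν_univ : ∀ j : Fin m, ν j Set.univ = 1 := by
    intro j
    simp only [hν, Measure.smul_apply, smul_eq_mul]
    rw [hcomap_univ j]
    exact ENNReal.inv_mul_cancel (hμB_pos j).ne' (hμB_ne_top j)
  have hQs : Q = ((m : ℝ≥0∞))⁻¹ • ∑ j, ν j := by
    rw [hQ_def]
    simp only [avgMeasure, hν_univ, Finset.sum_const, Finset.card_univ, Fintype.card_fin,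
      nsmul_eq_mul, mul_one]
  have hQapp : ∀ s : Set B, Q s = (m : ℝ≥0∞)⁻¹ * ∑ j, ν j s := by
    intro s
    rw [hQs]
    simp only [Measure.smul_apply, Measure.finset_sum_apply, smul_eq_mul]
  haveI hQprob : IsProbabilityMeasure Q := by
    constructor
    rw [hQapp]
    simp only [hν_univ, Finset.sum_const, Finset.card_univ, Fintype.card_fin,
      nsmul_eq_mul, mul_one]
    exact ENNReal.inv_mul_cancel (Nat.cast_ne_zero.mpr hmpos.ne') (ENNReal.natCast_ne_top m)
  have hPac : ∀ k : Fin d, μ k ≪ P := by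
    intro k
    refine Measure.AbsolutelyContinuous.mk fun s hs h0 => ?_
    rw [hPapp] at h0
    have h1 : (∑ j, μ j s) = 0 := by
      rcases mul_eq_zero.mp h0 with h | h
      · exact absurd h (ENNReal.inv_ne_zero.mpr (ENNReal.natCast_ne_top d))
      · exact h
    exact (Finset.sum_eq_zero_iff.mp h1) k (Finset.mem_univ k)
  have hmapQ : Measure.map e Q ≪ P := by
    refine Measure.AbsolutelyContinuous.mk fun s hs h0 => ?_
    rw [Measure.map_apply he.measurable hs, hQapp]
    have hterm : ∀ j : Fin m, ν j (e ⁻¹' s) = 0 := by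
      intro j
      simp only [hν, Measure.smul_apply, smul_eq_mul]
      rw [he.comap_apply]
      have h1 : μ (Fin.castLE hm j) s = 0 := (hPac _) h0
      rw [measure_mono_null (Set.image_preimage_subset e s) h1, mul_zero]
    simp [hterm]
  -- densities
  have hfm : ∀ k : Fin d, Measurable ((μ k).rnDeriv P) := fun k =>
    Measure.measurable_rnDeriv _ _
  have hwd : ∀ k : Fin d, P.withDensity ((μ k).rnDeriv P) = μ k := fun k =>
    Measure.withDensity_rnDeriv_eq _ _ (hPac k)
  haveI hbfin : IsFiniteMeasure (Measure.comap e P) := by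
    constructor
    rw [he.comap_apply, Set.image_univ, Subtype.range_coe]
    exact measure_lt_top P B
  set base := Measure.comap e P with hbase_def
  set W : B → ℝ≥0∞ := fun x => (m:ℝ≥0∞)⁻¹ *
    ∑ j : Fin m, (μ (Fin.castLE hm j) B)⁻¹ * (μ (Fin.castLE hm j)).rnDeriv P (e x)
    with hW_def
  have hWm : Measurable W := by
    apply Measurable.const_mul
    exact Finset.measurable_sum _ fun j _ =>
      ((hfm (Fin.castLE hm j)).comp he.measurable).const_mul _
  have hrm : ∀ j : Fin m, Measurable fun x : ↑B => (μ (Fin.castLE hm j)).rnDeriv P (e x) :=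
    fun j => (hfm (Fin.castLE hm j)).comp he.measurable
  have hgm : ∀ j : Fin m, Measurable fun x : ↑B =>
      (μ (Fin.castLE hm j) B)⁻¹ * (μ (Fin.castLE hm j)).rnDeriv P (e x) :=
    fun j => (hrm j).const_mul _
  have hsm : Measurable fun x : ↑B =>
      ∑ j : Fin m, (μ (Fin.castLE hm j) B)⁻¹ * (μ (Fin.castLE hm j)).rnDeriv P (e x) :=
    Finset.measurable_sum _ fun j _ => hgm j
  have hνwd : ∀ j : Fin m, ν j = base.withDensity
      (fun x => (μ (Fin.castLE hm j) B)⁻¹ * (μ (Fin.castLE hm j)).rnDeriv P (e x)) := by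
    intro j
    have hcw : Measure.comap e (μ (Fin.castLE hm j)) = base.withDensity
        (fun x => (μ (Fin.castLE hm j)).rnDeriv P (e x)) := by
      conv_lhs => rw [← hwd (Fin.castLE hm j)]
      rw [comap_withDensity_eq he _ (hfm (Fin.castLE hm j)), hbase_def]
    simp only [hν]
    rw [hcw, ← withDensity_smul _ (hrm j)]
    rfl
  have hsum : (∑ j, ν j) = base.withDensity (fun x =>
      ∑ j : Fin m, (μ (Fin.castLE hm j) B)⁻¹ * (μ (Fin.castLE hm j)).rnDeriv P (e x)) := by
    ext s hs
    rw [Measure.finset_sum_apply, withDensity_apply _ hs]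
    rw [lintegral_finset_sum _ fun j _ => hgm j]
    refine Finset.sum_congr rfl fun j _ => ?_
    rw [hνwd j, withDensity_apply _ hs]
  have hQwd : Q = base.withDensity W := by
    rw [hQs, hsum, ← withDensity_smul _ hsm]
    rfl
  set h : Fin m → B → ℝ≥0∞ := fun j x =>
    ((μ (Fin.castLE hm j) B)⁻¹ * (μ (Fin.castLE hm j)).rnDeriv P (e x)) / W x with hh_def
  have hhm : ∀ j, Measurable (h j) := fun j =>
    (((hfm (Fin.castLE hm j)).comp he.measurable).const_mul _).div hWm
  have hWae : ∀ᵐ x ∂base, W x ≠ ∞ := by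
    have hint : ∫⁻ x, W x ∂base ≠ ∞ := by
      have h1 : (base.withDensity W) Set.univ = 1 := by
        rw [← hQwd]
        exact measure_univ
      rw [withDensity_apply _ MeasurableSet.univ, Measure.restrict_univ] at h1
      rw [h1]
      exact one_ne_top
    filter_upwards [ae_lt_top hWm hint] with x hx
    exact hx.ne
  have hνQ : ∀ j, ν j = Q.withDensity (h j) := by
    intro j
    rw [hQwd, ← withDensity_mul _ hWm (hhm j), hνwd j]
    apply withDensity_congr_ae
    filter_upwards [hWae] with x hx
    show (μ (Fin.castLE hm j) B)⁻¹ * (μ (Fin.castLE hm j)).rnDeriv P (e x) = (W * h j) x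
    by_cases h0 : W x = 0
    · have hle : (m:ℝ≥0∞)⁻¹ *
          ((μ (Fin.castLE hm j) B)⁻¹ * (μ (Fin.castLE hm j)).rnDeriv P (e x)) ≤ W x := by
        rw [hW_def]
        exact mul_le_mul_right (Finset.single_le_sum
          (f := fun k : Fin m => (μ (Fin.castLE hm k) B)⁻¹ * (μ (Fin.castLE hm k)).rnDeriv P (e x))
          (fun _ _ => zero_le) (Finset.mem_univ j)) _
      rw [h0, nonpos_iff_eq_zero] at hle
      have h00 : (μ (Fin.castLE hm j) B)⁻¹ * (μ (Fin.castLE hm j)).rnDeriv P (e x) = 0 := by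
        rcases mul_eq_zero.mp hle with hc | hc
        · exact absurd hc (ENNReal.inv_ne_zero.mpr (ENNReal.natCast_ne_top m))
        · exact hc
      simp [h00, hh_def, h0]
    · exact (ENNReal.mul_div_cancel h0 hx).symm
  have hrnd : ∀ j, (ν j).rnDeriv Q =ᵐ[Q] h j := by
    intro j
    have := Measure.rnDeriv_withDensity Q (hhm j)
    rwa [← hνQ j] at this
  -- a.e. finiteness of the upstairs densities along e
  have hfin : ∀ᵐ x ∂Q, ∀ k : Fin d, (μ k).rnDeriv P (e x) ≠ ∞ := by
    rw [ae_all_iff]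
    intro k
    have hNk : MeasurableSet {y : X | (μ k).rnDeriv P y = ∞} :=
      (hfm k) (measurableSet_singleton ∞)
    have h0 : P {y : X | (μ k).rnDeriv P y = ∞} = 0 := by
      have h1 := Measure.rnDeriv_lt_top (μ k) P
      rw [ae_iff] at h1
      convert h1 using 2
      ext y
      simp [lt_top_iff_ne_top]
    have h2 : Q (e ⁻¹' {y : X | (μ k).rnDeriv P y = ∞}) = 0 := by
      rw [← Measure.map_apply he.measurable hNk]
      exact hmapQ h0
    rw [ae_iff]
    convert h2 using 2
    ext x
    simp
  -- the Borel function F transforming density vectors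
  set Fm : (Fin d → ℝ) → Fin m → ℝ := fun v j =>
    (((μ (Fin.castLE hm j) B)⁻¹ * ENNReal.ofReal (v (Fin.castLE hm j))) /
      ((m:ℝ≥0∞)⁻¹ * ∑ k : Fin m,
        (μ (Fin.castLE hm k) B)⁻¹ * ENNReal.ofReal (v (Fin.castLE hm k)))).toReal
    with hFm_def
  have hFmm : Measurable Fm := by
    refine measurable_pi_lambda _ fun j => Measurable.ennreal_toReal ?_
    refine Measurable.div ?_ ?_
    · exact (ENNReal.measurable_ofReal.comp (measurable_pi_apply _)).const_mul _
    · refine Measurable.const_mul ?_ _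
      exact Finset.measurable_sum _ fun k _ =>
        (ENNReal.measurable_ofReal.comp (measurable_pi_apply _)).const_mul _
  have hdveq : densityVec ν =ᵐ[Q] fun x => Fm (densityVec μ (e x)) := by
    have h1 : ∀ᵐ x ∂Q, ∀ j : Fin m, (ν j).rnDeriv Q x = h j x := by
      rw [ae_all_iff]
      exact fun j => hrnd j
    filter_upwards [h1, hfin] with x hx1 hx2
    funext j
    have e1 : ∀ k : Fin m,
        ENNReal.ofReal (densityVec μ (e x) (Fin.castLE hm k))
          = (μ (Fin.castLE hm k)).rnDeriv P (e x) := by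
      intro k
      rw [densityVec, ← hP_def]
      exact ENNReal.ofReal_toReal (hx2 _)
    show ((ν j).rnDeriv (avgMeasure ν) x).toReal = _
    rw [← hQ_def, hx1 j, hFm_def, hh_def, hW_def]
    simp only [e1]
  -- apply the abstract lemma
  have hTm : Measurable (densityVec μ) := by
    refine measurable_pi_lambda _ fun k => ?_
    exact (Measure.measurable_rnDeriv _ _).ennreal_toReal
  haveI : IsProbabilityMeasure (P.map (densityVec μ)) :=
    Measure.isProbabilityMeasure_map hTm.aemeasurable
  haveI : IsProbabilityMeasure (P.map ξ) := Measure.isProbabilityMeasure_map hξm.aemeasurable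
  haveI : NullSingletonClass (P.map ξ) := ⟨hξatom⟩
  have hpairm : Measurable fun y : X => (densityVec μ y, ξ y) := hTm.prodMk hξm
  have hpairem : Measurable fun x : ↑B => (densityVec μ (e x), ξ (e x)) :=
    hpairm.comp he.measurable
  have hprod : P.map (fun y : X => (densityVec μ y, ξ y))
      = (P.map (densityVec μ)).prod (P.map ξ) :=
    (indepFun_iff_map_prod_eq_prod_map_map hTm.aemeasurable hξm.aemeasurable).mp hξind.symm
  set ρ' : Measure ((Fin d → ℝ) × ℝ) :=
    Q.map (fun x : ↑B => (densityVec μ (e x), ξ (e x))) with hρ'_def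
  haveI : IsProbabilityMeasure ρ' := Measure.isProbabilityMeasure_map hpairem.aemeasurable
  have hρ'ac : ρ' ≪ (P.map (densityVec μ)).prod (P.map ξ) := by
    rw [← hprod, hρ'_def]
    have hmm : Q.map (fun x : ↑B => (densityVec μ (e x), ξ (e x)))
        = (Q.map e).map (fun y : X => (densityVec μ y, ξ y)) := by
      rw [Measure.map_map hpairm he.measurable]
      rfl
    rw [hmm]
    exact Measure.AbsolutelyContinuous.map hmapQ hpairm
  obtain ⟨f, hfm2, hfatom, hfind⟩ :=
    exists_indep_of_ac ρ' (P.map (densityVec μ)) (P.map ξ) hρ'ac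
  refine ⟨fun x => f (densityVec μ (e x), ξ (e x)), hfm2.comp hpairem, ?_, ?_⟩
  · intro r
    have hmm2 : (avgMeasure ν).map (fun x : ↑B => f (densityVec μ (e x), ξ (e x)))
        = ρ'.map f := by
      rw [hρ'_def, Measure.map_map hfm2 hpairem, ← hQ_def]
      rfl
    rw [hmm2]
    exact hfatom r
  · -- independence
    have hstepa : IndepFun (fun x : ↑B => f (densityVec μ (e x), ξ (e x)))
        (fun x : ↑B => densityVec μ (e x)) Q := by
      rw [indepFun_iff_measure_inter_preimage_eq_mul]
      intro s t hs ht
      have h1 := hfind.measure_inter_preimage_eq_mul s t hs ht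
      have hset : (fun x : ↑B => f (densityVec μ (e x), ξ (e x))) ⁻¹' s ∩
          (fun x : ↑B => densityVec μ (e x)) ⁻¹' t
          = (fun x : ↑B => (densityVec μ (e x), ξ (e x))) ⁻¹' (f ⁻¹' s ∩ Prod.fst ⁻¹' t) :=
        rfl
      rw [hset, ← Measure.map_apply hpairem ((hfm2 hs).inter (measurable_fst ht)),
        ← hρ'_def, h1, hρ'_def, Measure.map_apply hpairem (hfm2 hs),
        Measure.map_apply hpairem (measurable_fst ht)]
      rfl
    have hstepb := hstepa.comp measurable_id hFmm
    have hfinal := hstepb.congr (Filter.EventuallyEq.rfl) hdveq.symm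
    rw [← hQ_def]
    exact hfinal

end
end
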